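/- arXiv:0809.2335 — 11 statements merged into one kernel-verified Lean document; each statement's English description precedes it below -/
import Mathlib

section
/- Let p ≥ 1 and let m be a Borel probability measure on the product space pℕ of sequences with values in {0,...,p−1}. For i < j set A_{i,j} = {x ∈ pℕ : x_i > x_j}. Then inf over pairs (i,j) with i < j of m(A_{i,j}) is at most (1/2)(1 − 1/p). -/
open MeasureTheory Finset Filter
open scoped ENNReal NNReal

set_option linter.unusedSectionVars false
set_option maxHeartbeats 1000000


open Finset

lemma card_sym {N : ℕ} (r : Fin N → Fin N → Prop) [DecidableRel r]
    (hsym : ∀ a b, r a b → r b a) (hrefl : ∀ a, r a a) :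
    (univ.filter fun q : Fin N × Fin N => r q.1 q.2).card
      = N + 2 * (univ.filter fun q : Fin N × Fin N => q.1 < q.2 ∧ r q.1 q.2).card := by
  classical
  set T := univ.filter fun q : Fin N × Fin N => r q.1 q.2 with hT
  have h1 : (T.filter fun q => q.1 < q.2).card + (T.filter fun q => ¬ q.1 < q.2).card
      = T.card := Finset.card_filter_add_card_filter_not _
  have h2 : (T.filter fun q => ¬ q.1 < q.2)
      = (T.filter fun q => q.2 < q.1) ∪ (T.filter fun q => q.1 = q.2) := by
    rw [← Finset.filter_or]
    apply Finset.filter_congr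
    intro q _
    constructor
    · intro h
      rcases lt_or_eq_of_le (not_lt.mp h) with h' | h'
      · exact Or.inl h'
      · exact Or.inr h'.symm
    · rintro (h | h)
      · exact not_lt.mpr h.le
      · exact not_lt.mpr h.ge
  have hdisj : Disjoint (T.filter fun q => q.2 < q.1) (T.filter fun q => q.1 = q.2) := by
    rw [Finset.disjoint_left]
    intro q hq hq'
    have h1 := (Finset.mem_filter.mp hq).2
    have h2 := (Finset.mem_filter.mp hq').2
    exact (ne_of_gt h1) h2
  have h3 : (T.filter fun q => q.2 < q.1).card = (T.filter fun q => q.1 < q.2).card := by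
    have himg : (T.filter fun q => q.2 < q.1) = (T.filter fun q => q.1 < q.2).image Prod.swap := by
      ext q
      simp only [Finset.mem_image, Finset.mem_filter, hT, Finset.mem_univ, true_and,
        Prod.fst_swap, Prod.snd_swap]
      constructor
      · rintro ⟨hr, hlt⟩
        exact ⟨q.swap, ⟨⟨hsym _ _ hr, hlt⟩, Prod.swap_swap q⟩⟩
      · rintro ⟨a, ⟨⟨hr, hlt⟩, rfl⟩⟩
        exact ⟨hsym _ _ hr, hlt⟩
    rw [himg, Finset.card_image_of_injective _ Prod.swap_injective]
  have h4 : (T.filter fun q => q.1 = q.2).card = N := by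
    have : (T.filter fun q => q.1 = q.2) = (univ : Finset (Fin N)).image (fun a => (a, a)) := by
      ext q
      simp only [Finset.mem_filter, hT, Finset.mem_univ, true_and, Finset.mem_image]
      constructor
      · rintro ⟨-, h⟩
        exact ⟨q.1, by rw [Prod.ext_iff]; exact ⟨rfl, h⟩⟩
      · rintro ⟨a, rfl⟩
        exact ⟨hrefl a, rfl⟩
    rw [this, Finset.card_image_of_injective _ (fun a b h => (Prod.ext_iff.mp h).1),
      Finset.card_univ, Fintype.card_fin]
  have h5 : (T.filter fun q => q.1 < q.2) = univ.filter fun q : Fin N × Fin N => q.1 < q.2 ∧ r q.1 q.2 := by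
    rw [hT, Finset.filter_filter]
    apply Finset.filter_congr
    intro q _
    tauto
  rw [h2, Finset.card_union_of_disjoint hdisj, h3, h4, h5] at h1
  rw [← h1]
  omega

lemma key_count {N p : ℕ} (y : Fin N → Fin p) :
    N ^ 2 ≤ p * (N + 2 * (univ.filter fun q : Fin N × Fin N => q.1 < q.2 ∧ y q.1 = y q.2).card) := by
  classical
  set c : Fin p → ℕ := fun k => (univ.filter fun s => y s = k).card with hc
  have hsum : ∑ k, c k = N := by
    rw [← Fintype.card_fin N, ← Finset.card_univ,
      Finset.card_eq_sum_card_fiberwise (fun x _ => Finset.mem_univ (y x))]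
  have hfib : ∑ k, (c k) ^ 2 = (univ.filter fun q : Fin N × Fin N => y q.1 = y q.2).card := by
    rw [Finset.card_eq_sum_card_fiberwise
      (f := fun q : Fin N × Fin N => y q.1) (t := univ) (fun x _ => Finset.mem_univ _)]
    apply Finset.sum_congr rfl
    intro k _
    have : ((univ.filter fun q : Fin N × Fin N => y q.1 = y q.2).filter fun q => y q.1 = k)
        = (univ.filter fun s : Fin N => y s = k) ×ˢ (univ.filter fun t : Fin N => y t = k) := by
      ext ⟨s, t⟩
      simp only [Finset.mem_filter, Finset.mem_univ, true_and, Finset.mem_product]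
      constructor
      · rintro ⟨h1, h2⟩
        exact ⟨h2, h1.symm.trans h2⟩
      · rintro ⟨h1, h2⟩
        exact ⟨h1.trans h2.symm, h1⟩
    rw [this, Finset.card_product, hc, sq]
  have hCS : (N : ℝ) ^ 2 ≤ (p : ℝ) * ∑ k, (c k : ℝ) ^ 2 := by
    have := sq_sum_le_card_mul_sum_sq (s := (univ : Finset (Fin p))) (f := fun k => (c k : ℝ))
    simp only [Finset.card_univ, Fintype.card_fin] at this
    calc (N : ℝ) ^ 2 = (∑ k, (c k : ℝ)) ^ 2 := by
          rw [← Nat.cast_sum, hsum]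
      _ ≤ (p : ℝ) * ∑ k, (c k : ℝ) ^ 2 := this
  have hCS' : N ^ 2 ≤ p * ∑ k, (c k) ^ 2 := by
    have h2 : ((N ^ 2 : ℕ) : ℝ) ≤ ((p * ∑ k, (c k) ^ 2 : ℕ) : ℝ) := by push_cast; exact hCS
    exact_mod_cast h2
  calc N ^ 2 ≤ p * ∑ k, (c k) ^ 2 := hCS'
    _ = p * (N + 2 * (univ.filter fun q : Fin N × Fin N => q.1 < q.2 ∧ y q.1 = y q.2).card) := by
        rw [hfib, card_sym (fun a b => y a = y b) (fun a b h => h.symm) (fun a => rfl)]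


open Filter

lemma exists_mono_chain {T : Set ℕ} {G : ℕ → Set ℕ}
    (hT : T ∈ Filter.hyperfilter ℕ) (hG : ∀ i, G i ∈ Filter.hyperfilter ℕ) (N : ℕ) :
    ∃ f : Fin N → ℕ, StrictMono f ∧ (∀ s, f s ∈ T) ∧ ∀ s t, s < t → f t ∈ G (f s) := by
  induction N with
  | zero => exact ⟨Fin.elim0, fun s => s.elim0, fun s => s.elim0, fun s => s.elim0⟩
  | succ N ih =>
    obtain ⟨f, hmono, hfT, hfG⟩ := ih
    have hA : (T ∩ ⋂ s : Fin N, G (f s)) ∈ Filter.hyperfilter ℕ :=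
      Filter.inter_mem hT ((Filter.iInter_mem).mpr fun s => hG (f s))
    have hinf : (T ∩ ⋂ s : Fin N, G (f s)).Infinite := by
      intro hfin
      have h1 : (T ∩ ⋂ s : Fin N, G (f s))ᶜ ∈ Filter.hyperfilter ℕ :=
        Filter.hyperfilter_le_cofinite (by rwa [Filter.mem_cofinite, compl_compl])
      exact (Ultrafilter.compl_notMem_iff.mpr hA) h1
    set bound := Finset.univ.sup (fun s : Fin N => f s) with hbound
    obtain ⟨j, hjmem, hjgt⟩ := hinf.exists_gt bound
    refine ⟨Fin.snoc f j, ?_, ?_, ?_⟩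
    · intro s t hst
      rcases Fin.eq_castSucc_or_eq_last t with ⟨t', rfl⟩ | rfl
      · have hs : s < Fin.last N := lt_of_lt_of_le hst t'.castSucc_lt_last.le
        obtain ⟨s', rfl⟩ := Fin.exists_castSucc_eq.mpr (Fin.ne_last_of_lt hst)
        rw [Fin.snoc_castSucc, Fin.snoc_castSucc]
        exact hmono (by exact_mod_cast hst)
      · obtain ⟨s', rfl⟩ := Fin.exists_castSucc_eq.mpr (Fin.ne_last_of_lt hst)
        rw [Fin.snoc_castSucc, Fin.snoc_last]
        exact lt_of_le_of_lt (Finset.le_sup (Finset.mem_univ s')) hjgt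
    · intro s
      rcases Fin.eq_castSucc_or_eq_last s with ⟨s', rfl⟩ | rfl
      · rw [Fin.snoc_castSucc]; exact hfT s'
      · rw [Fin.snoc_last]; exact hjmem.1
    · intro s t hst
      obtain ⟨s', rfl⟩ := Fin.exists_castSucc_eq.mpr (Fin.ne_last_of_lt hst)
      rcases Fin.eq_castSucc_or_eq_last t with ⟨t', rfl⟩ | rfl
      · rw [Fin.snoc_castSucc, Fin.snoc_castSucc]
        exact hfG s' t' (by exact_mod_cast hst)
      · rw [Fin.snoc_castSucc, Fin.snoc_last]
        exact Set.mem_iInter.mp hjmem.2 s'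

lemma select {ι : Type*} [Fintype ι] (c : ℕ → ℕ → ι → ℝ)
    (hval : ∀ i j q, c i j q ∈ Set.Icc (0:ℝ) 1) (δ : ℝ) (hδ : 0 < δ) (N : ℕ) :
    ∃ (f : Fin N → ℕ) (C : ι → ℝ), StrictMono f ∧ (∀ q, C q ∈ Set.Icc (0:ℝ) 1) ∧
      ∀ s t : Fin N, s < t → ∀ q, |c (f s) (f t) q - C q| ≤ 2 * δ := by
  classical
  have hK : IsCompact (Set.univ.pi fun _ : ι => Set.Icc (0:ℝ) 1) :=
    isCompact_univ_pi fun _ => isCompact_Icc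
  have hmem : ∀ i j, (fun q => c i j q) ∈ (Set.univ.pi fun _ : ι => Set.Icc (0:ℝ) 1) := by
    intro i j
    exact fun q _ => hval i j q
  -- limits in j
  have hL : ∀ i : ℕ, ∃ L ∈ (Set.univ.pi fun _ : ι => Set.Icc (0:ℝ) 1),
      Filter.Tendsto (fun j => c i j) (Filter.hyperfilter ℕ) (nhds L) := by
    intro i
    obtain ⟨L, hLK, hconv⟩ := hK.ultrafilter_le_nhds ((Filter.hyperfilter ℕ).map (fun j => c i j))
      (by rw [Ultrafilter.coe_map, Filter.le_principal_iff, Filter.mem_map]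
          exact Filter.univ_mem' (fun j => hmem i j))
    exact ⟨L, hLK, hconv⟩
  choose L hLK hLconv using hL
  obtain ⟨C, hCK, hCconv⟩ := hK.ultrafilter_le_nhds ((Filter.hyperfilter ℕ).map L)
    (by rw [Ultrafilter.coe_map, Filter.le_principal_iff, Filter.mem_map]
        exact Filter.univ_mem' (fun i => hLK i))
  set T : Set ℕ := {i | dist (L i) C ≤ δ} with hTdef
  have hT : T ∈ Filter.hyperfilter ℕ := hCconv (Metric.closedBall_mem_nhds C hδ)
  set G : ℕ → Set ℕ := fun i => {j | dist (fun q => c i j q) (L i) ≤ δ} with hGdef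
  have hG : ∀ i, G i ∈ Filter.hyperfilter ℕ :=
    fun i => (hLconv i) (Metric.closedBall_mem_nhds (L i) hδ)
  obtain ⟨f, hmono, hfT, hfG⟩ := exists_mono_chain hT hG N
  refine ⟨f, C, hmono, ?_, ?_⟩
  · intro q
    exact hCK q (Set.mem_univ q)
  · intro s t hst q
    have h1 : dist (fun q => c (f s) (f t) q) (L (f s)) ≤ δ := hfG s t hst
    have h2 : dist (L (f s)) C ≤ δ := hfT s
    have h3 : dist (fun q => c (f s) (f t) q) C ≤ 2 * δ := by
      calc dist (fun q => c (f s) (f t) q) C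
          ≤ dist (fun q => c (f s) (f t) q) (L (f s)) + dist (L (f s)) C := dist_triangle _ _ _
        _ ≤ 2 * δ := by linarith
    have h4 := (dist_le_pi_dist (fun q => c (f s) (f t) q) C q).trans h3
    rwa [Real.dist_eq] at h4



variable {p : ℕ}

noncomputable def efn (p : ℕ) (i : ℕ) (α : Fin p) : (ℕ → Fin p) → ℝ :=
  ({x : ℕ → Fin p | x i = α}).indicator (fun _ => (1:ℝ))

lemma efn_apply (i : ℕ) (α : Fin p) (x : ℕ → Fin p) :
    efn p i α x = if x i = α then 1 else 0 := by
  simp only [efn, Set.indicator_apply, Set.mem_setOf_eq]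

lemma meas_efn_set (i : ℕ) (α : Fin p) : MeasurableSet {x : ℕ → Fin p | x i = α} := by
  have h : {x : ℕ → Fin p | x i = α} = (fun x : ℕ → Fin p => x i) ⁻¹' {α} := by
    ext x; simp
  rw [h]
  exact measurable_pi_apply i (measurableSet_singleton α)

lemma measurable_efn (i : ℕ) (α : Fin p) : Measurable (efn p i α) :=
  (measurable_const.indicator (meas_efn_set i α))

lemma efn_nonneg (i : ℕ) (α : Fin p) (x : ℕ → Fin p) : 0 ≤ efn p i α x := by
  rw [efn_apply]; split <;> norm_num

lemma efn_le_one (i : ℕ) (α : Fin p) (x : ℕ → Fin p) : efn p i α x ≤ 1 := by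
  rw [efn_apply]; split <;> norm_num

variable (m : Measure (ℕ → Fin p)) [IsProbabilityMeasure m]

lemma integrable_efn_mul (i j : ℕ) (α β : Fin p) :
    Integrable (fun x => efn p i α x * efn p j β x) m := by
  apply Integrable.mono' (integrable_const (1:ℝ))
  · exact ((measurable_efn i α).mul (measurable_efn j β)).aestronglyMeasurable
  · filter_upwards with x
    rw [Real.norm_eq_abs, abs_of_nonneg (mul_nonneg (efn_nonneg i α x) (efn_nonneg j β x))]
    calc efn p i α x * efn p j β x ≤ 1 * 1 :=
          mul_le_mul (efn_le_one i α x) (efn_le_one j β x) (efn_nonneg j β x) zero_le_one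
      _ = 1 := by ring

lemma integrable_efn (i : ℕ) (α : Fin p) : Integrable (efn p i α) m := by
  have : efn p i α = fun x => efn p i α x * efn p i α x := by
    funext x; rw [efn_apply]; split <;> norm_num
  rw [this]; exact integrable_efn_mul m i i α α

noncomputable def corr (m : Measure (ℕ → Fin p)) (i j : ℕ) (q : Fin p × Fin p) : ℝ :=
  ∫ x, efn p i q.1 x * efn p j q.2 x ∂m

lemma corr_nonneg (i j : ℕ) (q : Fin p × Fin p) : 0 ≤ corr m i j q :=
  integral_nonneg (fun x => mul_nonneg (efn_nonneg _ _ x) (efn_nonneg _ _ x))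

lemma corr_le_one (i j : ℕ) (q : Fin p × Fin p) : corr m i j q ≤ 1 := by
  have h := integral_mono (integrable_efn_mul m i j q.1 q.2) (integrable_const (1:ℝ))
    (fun x => by
      calc efn p i q.1 x * efn p j q.2 x ≤ 1 * 1 :=
            mul_le_mul (efn_le_one _ _ x) (efn_le_one _ _ x) (efn_nonneg _ _ x) zero_le_one
        _ = 1 := by ring)
  simpa [measure_univ, corr] using h

lemma corr_comm (i j : ℕ) (q : Fin p × Fin p) : corr m i j q = corr m j i q.swap := by
  rw [corr, corr]
  congr 1
  funext x
  rw [Prod.fst_swap, Prod.snd_swap, mul_comm]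

lemma sum_corr (i j : ℕ) : ∑ q : Fin p × Fin p, corr m i j q = 1 := by
  simp only [corr]
  rw [← integral_finset_sum _ (fun q _ => integrable_efn_mul m i j q.1 q.2)]
  have hpt : ∀ x : ℕ → Fin p, ∑ q : Fin p × Fin p, efn p i q.1 x * efn p j q.2 x = 1 := by
    intro x
    rw [Fintype.sum_prod_type]
    have h1 : ∀ α : Fin p, ∑ β : Fin p, efn p i α x * efn p j β x
        = efn p i α x * ∑ β : Fin p, efn p j β x := by
      intro α; rw [Finset.mul_sum]
    have h2 : ∀ (k : ℕ), ∑ β : Fin p, efn p k β x = 1 := by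
      intro k
      have : ∀ β : Fin p, efn p k β x = if x k = β then (1:ℝ) else 0 := fun β => efn_apply k β x
      simp only [this]
      rw [Finset.sum_ite_eq univ (x k) (fun _ => (1:ℝ))]
      simp
    simp only [h1, h2, mul_one]
  simp only [hpt]
  simp [measure_univ]

lemma sum_corr_filter (i j : ℕ) (P : Fin p × Fin p → Prop) [DecidablePred P]
    (S : Set (ℕ → Fin p)) (hS : MeasurableSet S)
    (hiff : ∀ x : ℕ → Fin p, x ∈ S ↔ P (x i, x j)) :
    (m S).toReal = ∑ q ∈ univ.filter P, corr m i j q := by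
  simp only [corr]
  rw [← measureReal_def, ← integral_indicator_one hS,
    ← integral_finset_sum _ (fun q _ => integrable_efn_mul m i j q.1 q.2)]
  congr 1
  funext x
  have hterm : ∀ q : Fin p × Fin p, efn p i q.1 x * efn p j q.2 x
      = if q = (x i, x j) then (1:ℝ) else 0 := by
    intro q
    rw [efn_apply, efn_apply]
    by_cases h1 : x i = q.1 <;> by_cases h2 : x j = q.2
    · rw [if_pos h1, if_pos h2, if_pos (Prod.ext_iff.mpr ⟨h1.symm, h2.symm⟩)]; ring
    · rw [if_pos h1, if_neg h2,
        if_neg (show ¬(q = (x i, x j)) by intro hq; apply h2; rw [hq])]; ring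
    · rw [if_neg h1,
        if_neg (show ¬(q = (x i, x j)) by intro hq; apply h1; rw [hq])]; ring
    · rw [if_neg h1,
        if_neg (show ¬(q = (x i, x j)) by intro hq; apply h1; rw [hq])]; ring
  simp only [hterm]
  rw [Finset.sum_ite_eq' (univ.filter P) ((x i, x j)) (fun _ => (1:ℝ))]
  by_cases h : P (x i, x j)
  · simp [Set.indicator_apply, (hiff x), h]
  · simp [Set.indicator_apply, (hiff x), h]

lemma meas_lt_set (i j : ℕ) : MeasurableSet {x : ℕ → Fin p | x j < x i} := by
  have : {x : ℕ → Fin p | x j < x i}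
      = ⋃ (α : Fin p), ⋃ (β : Fin p), ⋃ (_ : β < α), ({x | x i = α} ∩ {x | x j = β}) := by
    ext x
    simp only [Set.mem_setOf_eq, Set.mem_iUnion, Set.mem_inter_iff]
    constructor
    · intro h; exact ⟨x i, x j, h, rfl, rfl⟩
    · rintro ⟨α, β, h, h1, h2⟩; rw [h1, h2]; exact h
  rw [this]
  exact MeasurableSet.iUnion fun α => MeasurableSet.iUnion fun β => MeasurableSet.iUnion
    fun _ => (meas_efn_set i α).inter (meas_efn_set j β)

lemma meas_eq_set2 (i j : ℕ) : MeasurableSet {x : ℕ → Fin p | x i = x j} := by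
  have : {x : ℕ → Fin p | x i = x j}
      = ⋃ (α : Fin p), ({x | x i = α} ∩ {x | x j = α}) := by
    ext x
    simp only [Set.mem_setOf_eq, Set.mem_iUnion, Set.mem_inter_iff]
    constructor
    · intro h; exact ⟨x j, h, rfl⟩
    · rintro ⟨α, h1, h2⟩; rw [h1, h2]
  rw [this]
  exact MeasurableSet.iUnion fun α => (meas_efn_set i α).inter (meas_efn_set j α)

lemma measure_lt_eq_sum (i j : ℕ) :
    (m {x : ℕ → Fin p | x j < x i}).toReal
      = ∑ q ∈ univ.filter (fun q : Fin p × Fin p => q.2 < q.1), corr m i j q :=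
  sum_corr_filter m i j _ _ (meas_lt_set i j) (fun x => Iff.rfl)

lemma measure_eq_eq_sum (i j : ℕ) :
    (m {x : ℕ → Fin p | x i = x j}).toReal
      = ∑ q ∈ univ.filter (fun q : Fin p × Fin p => q.1 = q.2), corr m i j q :=
  sum_corr_filter m i j _ _ (meas_eq_set2 i j) (fun x => Iff.rfl)


lemma corr_def (i j : ℕ) (q : Fin p × Fin p) :
    corr m i j q = ∫ x, efn p i q.1 x * efn p j q.2 x ∂m := rfl

lemma integral_sum_mul_sum {k l : ℕ} (u : Fin k → ℕ) (v : Fin l → ℕ) (γ γ' : Fin p) :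
    ∫ x, (∑ s, efn p (u s) γ x) * (∑ t, efn p (v t) γ' x) ∂m
      = ∑ s, ∑ t, corr m (u s) (v t) (γ, γ') := by
  have h : (fun x => (∑ s, efn p (u s) γ x) * (∑ t, efn p (v t) γ' x))
      = fun x => ∑ s, ∑ t, efn p (u s) γ x * efn p (v t) γ' x := by
    funext x; rw [Finset.sum_mul_sum]
  rw [h, integral_finset_sum _
    (fun s _ => integrable_finset_sum _ (fun t _ => integrable_efn_mul m (u s) (v t) γ γ'))]
  exact Finset.sum_congr rfl fun s _ => by
    rw [integral_finset_sum _ (fun t _ => integrable_efn_mul m (u s) (v t) γ γ')]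
    exact Finset.sum_congr rfl fun t _ => (corr_def m (u s) (v t) (γ, γ')).symm

lemma integrable_sum_mul_sum {k l : ℕ} (u : Fin k → ℕ) (v : Fin l → ℕ) (γ γ' : Fin p) :
    Integrable (fun x => (∑ s, efn p (u s) γ x) * (∑ t, efn p (v t) γ' x)) m := by
  have h : (fun x => (∑ s, efn p (u s) γ x) * (∑ t, efn p (v t) γ' x))
      = fun x => ∑ s, ∑ t, efn p (u s) γ x * efn p (v t) γ' x := by
    funext x; rw [Finset.sum_mul_sum]
  rw [h]
  exact integrable_finset_sum _
    (fun s _ => integrable_finset_sum _ (fun t _ => integrable_efn_mul m (u s) (v t) γ γ'))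

lemma sq_integral_abs_le (f : (ℕ → Fin p) → ℝ) (hf : Integrable f m)
    (hf2 : Integrable (fun x => f x ^ 2) m) :
    (∫ x, |f x| ∂m) ^ 2 ≤ ∫ x, f x ^ 2 ∂m := by
  set t := ∫ x, |f x| ∂m with ht
  have htn : 0 ≤ t := integral_nonneg fun x => abs_nonneg _
  have h0 : (0:ℝ) ≤ ∫ x, (|f x| - t) ^ 2 ∂m := integral_nonneg fun x => sq_nonneg _
  have hexp : ∫ x, (|f x| - t) ^ 2 ∂m
      = (∫ x, f x ^ 2 ∂m) - 2 * t * t + t ^ 2 := by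
    have hfun : (fun x => (|f x| - t) ^ 2)
        = fun x => f x ^ 2 - (2 * t) * |f x| + t ^ 2 := by
      funext x
      have : |f x| ^ 2 = f x ^ 2 := sq_abs _
      nlinarith [this]
    have iA : Integrable (fun x => f x ^ 2 - 2 * t * |f x|) m := hf2.sub (hf.abs.const_mul (2*t))
    have iB : Integrable (fun x => 2 * t * |f x|) m := hf.abs.const_mul (2*t)
    rw [hfun]
    rw [integral_add iA (integrable_const _), integral_sub hf2 iB, integral_const_mul]
    simp [measure_univ, ← ht]
    try ring
  nlinarith [h0, hexp]

lemma window {n : ℕ} (hn : 1 ≤ n) (g : Fin (3*n) → ℕ) (hg : StrictMono g)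
    (C : Fin p × Fin p → ℝ) (η : ℝ) (hη : 0 ≤ η)
    (hC : ∀ q, C q ∈ Set.Icc (0:ℝ) 1)
    (hpair : ∀ s t : Fin (3*n), s < t → ∀ q, |corr m (g s) (g t) q - C q| ≤ η)
    (α β : Fin p) :
    C (α, β) - C (β, α) ≤ 2*η + Real.sqrt (4*η + 2/n) := by
  have hnR : (0:ℝ) < n := by exact_mod_cast hn
  set σ1 : Fin n → Fin (3*n) := fun s => ⟨s.1, by have := s.2; omega⟩ with hσ1
  set σ2 : Fin n → Fin (3*n) := fun s => ⟨n + s.1, by have := s.2; omega⟩ with hσ2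
  set σ3 : Fin n → Fin (3*n) := fun s => ⟨2*n + s.1, by have := s.2; omega⟩ with hσ3
  have h12 : ∀ s t : Fin n, σ1 s < σ2 t := by
    intro s t; rw [Fin.lt_def]; simp only [hσ1, hσ2]; have := s.2; omega
  have h23 : ∀ s t : Fin n, σ2 s < σ3 t := by
    intro s t; rw [Fin.lt_def]; simp only [hσ2, hσ3]; have := s.2; omega
  have h13 : ∀ s t : Fin n, σ1 s < σ3 t := by
    intro s t; rw [Fin.lt_def]; simp only [hσ1, hσ3]; have := s.2; omega
  have h11 : ∀ s t : Fin n, s < t → σ1 s < σ1 t := by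
    intro s t h; rw [Fin.lt_def]; simp only [hσ1]; exact h
  have h33 : ∀ s t : Fin n, s < t → σ3 s < σ3 t := by
    intro s t h; rw [Fin.lt_def]; simp only [hσ3]; have := Fin.lt_def.mp h; omega
  set G1 : (ℕ → Fin p) → ℝ := fun x => ∑ s, efn p (g (σ1 s)) β x with hG1
  set F : (ℕ → Fin p) → ℝ := fun x => ∑ t, efn p (g (σ2 t)) α x with hF
  set G2 : (ℕ → Fin p) → ℝ := fun x => ∑ s, efn p (g (σ3 s)) β x with hG2
  have hconst : ∀ c0 : ℝ, (∑ _s : Fin n, ∑ _t : Fin n, c0) = (n:ℝ)^2 * c0 := by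
    intro c0
    rw [Finset.sum_const, Finset.sum_const, Finset.card_univ, Fintype.card_fin,
      smul_smul, nsmul_eq_mul]
    push_cast
    ring
  -- upper bound for F * G1
  have hFG1 : ∫ x, F x * G1 x ∂m ≤ (n:ℝ)^2 * (C (β, α) + η) := by
    rw [hF, hG1, integral_sum_mul_sum m _ _ α β, ← hconst (C (β, α) + η)]
    apply Finset.sum_le_sum
    intro t _
    apply Finset.sum_le_sum
    intro s _
    have hc := corr_comm m (g (σ2 t)) (g (σ1 s)) (α, β)
    have hb := hpair (σ1 s) (σ2 t) (h12 s t) (β, α)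
    rw [Prod.swap_prod_mk] at hc
    rw [hc]
    linarith [(abs_le.mp hb).2]
  -- lower bound for F * G2
  have hFG2 : (n:ℝ)^2 * (C (α, β) - η) ≤ ∫ x, F x * G2 x ∂m := by
    rw [hF, hG2, integral_sum_mul_sum m _ _ α β, ← hconst (C (α, β) - η)]
    apply Finset.sum_le_sum
    intro t _
    apply Finset.sum_le_sum
    intro s _
    have hb := hpair (σ2 t) (σ3 s) (h23 t s) (α, β)
    linarith [(abs_le.mp hb).1]
  -- diagonal-type bounds
  have hsqbound : ∀ (σ : Fin n → Fin (3*n)), (∀ s t : Fin n, s < t → σ s < σ t) →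
      ∫ x, (∑ s, efn p (g (σ s)) β x) * (∑ t, efn p (g (σ t)) β x) ∂m
        ≤ (n:ℝ)^2 * (C (β, β) + η) + n := by
    intro σ hσ
    rw [integral_sum_mul_sum m _ _ β β]
    have hterm : ∀ s t : Fin n, corr m (g (σ s)) (g (σ t)) (β, β)
        ≤ (C (β, β) + η) + (if s = t then 1 else 0) := by
      intro s t
      rcases lt_trichotomy s t with h | h | h
      · have hb := hpair (σ s) (σ t) (hσ s t h) (β, β)
        rw [if_neg (ne_of_lt h)]
        linarith [(abs_le.mp hb).2]
      · rw [if_pos h]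
        have h1 := corr_le_one m (g (σ s)) (g (σ t)) ((β : Fin p), β)
        have h2 := (hC (β, β)).1
        linarith
      · have hc := corr_comm m (g (σ s)) (g (σ t)) (β, β)
        rw [Prod.swap_prod_mk] at hc
        have hb := hpair (σ t) (σ s) (hσ t s h) (β, β)
        rw [if_neg (ne_of_gt h), hc]
        linarith [(abs_le.mp hb).2]
    calc ∑ s, ∑ t, corr m (g (σ s)) (g (σ t)) (β, β)
        ≤ ∑ s : Fin n, ∑ t : Fin n, ((C (β, β) + η) + (if s = t then 1 else 0)) :=
          Finset.sum_le_sum fun s _ => Finset.sum_le_sum fun t _ => hterm s t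
      _ = (n:ℝ)^2 * (C (β, β) + η) + n := by
          have hrow : ∀ s : Fin n, ∑ t : Fin n, ((C (β, β) + η) + (if s = t then (1:ℝ) else 0))
              = n * (C (β, β) + η) + 1 := by
            intro s
            rw [Finset.sum_add_distrib, Finset.sum_const, Finset.card_univ, Fintype.card_fin,
              nsmul_eq_mul, Finset.sum_ite_eq univ s (fun _ => (1:ℝ))]
            simp
          simp only [hrow]
          rw [Finset.sum_const, Finset.card_univ, Fintype.card_fin, nsmul_eq_mul]
          push_cast
          ring
  have hG1sq : ∫ x, G1 x * G1 x ∂m ≤ (n:ℝ)^2 * (C (β, β) + η) + n := by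
    rw [hG1]; exact hsqbound σ1 h11
  have hG2sq : ∫ x, G2 x * G2 x ∂m ≤ (n:ℝ)^2 * (C (β, β) + η) + n := by
    rw [hG2]; exact hsqbound σ3 h33
  have hG1G2 : (n:ℝ)^2 * (C (β, β) - η) ≤ ∫ x, G1 x * G2 x ∂m := by
    rw [hG1, hG2, integral_sum_mul_sum m _ _ β β, ← hconst (C (β, β) - η)]
    apply Finset.sum_le_sum
    intro s _
    apply Finset.sum_le_sum
    intro t _
    have hb := hpair (σ1 s) (σ3 t) (h13 s t) (β, β)
    linarith [(abs_le.mp hb).1]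
  -- integrability
  have iG1 : Integrable G1 m := by
    rw [hG1]; exact integrable_finset_sum _ (fun s _ => integrable_efn m _ _)
  have iG2 : Integrable G2 m := by
    rw [hG2]; exact integrable_finset_sum _ (fun s _ => integrable_efn m _ _)
  have iFG1 : Integrable (fun x => F x * G1 x) m := by
    rw [hF, hG1]; exact integrable_sum_mul_sum m _ _ α β
  have iFG2 : Integrable (fun x => F x * G2 x) m := by
    rw [hF, hG2]; exact integrable_sum_mul_sum m _ _ α β
  have iG1G2 : Integrable (fun x => G1 x * G2 x) m := by
    rw [hG1, hG2]; exact integrable_sum_mul_sum m _ _ β β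
  have iG1G1 : Integrable (fun x => G1 x * G1 x) m := by
    rw [hG1]; exact integrable_sum_mul_sum m _ _ β β
  have iG2G2 : Integrable (fun x => G2 x * G2 x) m := by
    rw [hG2]; exact integrable_sum_mul_sum m _ _ β β
  have iZ : Integrable (fun x => G2 x - G1 x) m := iG2.sub iG1
  have hfunZ : (fun x => (G2 x - G1 x)^2)
      = fun x => G2 x * G2 x - 2*(G1 x * G2 x) + G1 x * G1 x := by
    funext x; ring
  have iZsq : Integrable (fun x => (G2 x - G1 x)^2) m := by
    rw [hfunZ]; exact (iG2G2.sub (iG1G2.const_mul 2)).add iG1G1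
  have hZint : ∫ x, (G2 x - G1 x)^2 ∂m
      = (∫ x, G2 x * G2 x ∂m) - 2*(∫ x, G1 x * G2 x ∂m) + ∫ x, G1 x * G1 x ∂m := by
    have iA : Integrable (fun x => G2 x * G2 x - 2*(G1 x * G2 x)) m :=
      iG2G2.sub (iG1G2.const_mul 2)
    have iB : Integrable (fun x => 2*(G1 x * G2 x)) m := iG1G2.const_mul 2
    rw [hfunZ, integral_add iA iG1G1, integral_sub iG2G2 iB, integral_const_mul]
  have hZsq : ∫ x, (G2 x - G1 x)^2 ∂m ≤ 4*η*(n:ℝ)^2 + 2*n := by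
    rw [hZint]; linarith
  have habs := sq_integral_abs_le m (fun x => G2 x - G1 x) iZ iZsq
  have iFZ : Integrable (fun x => F x * (G2 x - G1 x)) m := by
    have h : (fun x => F x * (G2 x - G1 x)) = fun x => F x * G2 x - F x * G1 x := by
      funext x; ring
    rw [h]; exact iFG2.sub iFG1
  have hFpt : ∀ x, F x * (G2 x - G1 x) ≤ (n:ℝ) * |G2 x - G1 x| := by
    intro x
    have hF0 : 0 ≤ F x := by
      rw [hF]; exact Finset.sum_nonneg fun t _ => efn_nonneg _ _ _
    have hFn : F x ≤ (n:ℝ) := by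
      rw [hF]
      calc ∑ t : Fin n, efn p (g (σ2 t)) α x ≤ ∑ _t : Fin n, (1:ℝ) :=
            Finset.sum_le_sum fun t _ => efn_le_one _ _ _
        _ = n := by rw [Finset.sum_const, Finset.card_univ, Fintype.card_fin, nsmul_eq_mul]; ring
    calc F x * (G2 x - G1 x) ≤ F x * |G2 x - G1 x| :=
          mul_le_mul_of_nonneg_left (le_abs_self _) hF0
      _ ≤ (n:ℝ) * |G2 x - G1 x| := mul_le_mul_of_nonneg_right hFn (abs_nonneg _)
  have hFZle : ∫ x, F x * (G2 x - G1 x) ∂m ≤ (n:ℝ) * ∫ x, |G2 x - G1 x| ∂m := by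
    rw [← integral_const_mul]
    exact integral_mono iFZ (iZ.abs.const_mul _) hFpt
  have hsplitFZ : ∫ x, F x * (G2 x - G1 x) ∂m
      = (∫ x, F x * G2 x ∂m) - ∫ x, F x * G1 x ∂m := by
    have h : (fun x => F x * (G2 x - G1 x)) = fun x => F x * G2 x - F x * G1 x := by
      funext x; ring
    rw [h, integral_sub iFG2 iFG1]
  have ht0 : 0 ≤ ∫ x, |G2 x - G1 x| ∂m := integral_nonneg fun x => abs_nonneg _
  have htZ : ∫ x, |G2 x - G1 x| ∂m ≤ (n:ℝ) * Real.sqrt (4*η + 2/n) := by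
    have h2 : ∫ x, |G2 x - G1 x| ∂m ≤ Real.sqrt (∫ x, (G2 x - G1 x)^2 ∂m) := by
      rw [← Real.sqrt_sq ht0]
      exact Real.sqrt_le_sqrt habs
    have h4 : (4*η*(n:ℝ)^2 + 2*n) = (n:ℝ)^2 * (4*η + 2/n) := by
      field_simp
    have h5 : Real.sqrt ((n:ℝ)^2 * (4*η + 2/n)) = (n:ℝ) * Real.sqrt (4*η + 2/n) := by
      rw [Real.sqrt_mul (sq_nonneg _), Real.sqrt_sq hnR.le]
    calc ∫ x, |G2 x - G1 x| ∂m ≤ Real.sqrt (∫ x, (G2 x - G1 x)^2 ∂m) := h2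
      _ ≤ Real.sqrt (4*η*(n:ℝ)^2 + 2*n) := Real.sqrt_le_sqrt hZsq
      _ = (n:ℝ) * Real.sqrt (4*η + 2/n) := by rw [h4, h5]
  have hchain : (n:ℝ)^2 * (C (α, β) - C (β, α) - 2*η)
      ≤ (n:ℝ)^2 * Real.sqrt (4*η + 2/n) := by
    have hb1 : ∫ x, F x * (G2 x - G1 x) ∂m ≤ (n:ℝ)^2 * Real.sqrt (4*η + 2/n) := by
      have := mul_le_mul_of_nonneg_left htZ hnR.le
      calc ∫ x, F x * (G2 x - G1 x) ∂m ≤ (n:ℝ) * ∫ x, |G2 x - G1 x| ∂m := hFZle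
        _ ≤ (n:ℝ) * ((n:ℝ) * Real.sqrt (4*η + 2/n)) := this
        _ = (n:ℝ)^2 * Real.sqrt (4*η + 2/n) := by ring
    have hb2 : (n:ℝ)^2 * (C (α, β) - C (β, α) - 2*η) ≤ ∫ x, F x * (G2 x - G1 x) ∂m := by
      rw [hsplitFZ]
      have e1 : (n:ℝ)^2 * (C (α, β) - C (β, α) - 2*η)
          = (n:ℝ)^2 * (C (α, β) - η) - (n:ℝ)^2 * (C (β, α) + η) := by ring
      linarith
    linarith
  have hpos : (0:ℝ) < (n:ℝ)^2 := by positivity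
  have := (mul_le_mul_iff_right₀ hpos).mp hchain
  linarith
-- APPEND
lemma main_real (hp : 1 ≤ p) (ε : ℝ) (hε : 0 < ε) (hε1 : ε ≤ 1) :
    ∃ i j : ℕ, i < j ∧
      (m {x : ℕ → Fin p | x j < x i}).toReal ≤ 1/2 * (1 - 1/(p:ℝ)) + ε := by
  classical
  have hpR : (1:ℝ) ≤ (p:ℝ) := by exact_mod_cast hp
  have hp0 : (0:ℝ) < (p:ℝ) := by linarith
  set η : ℝ := ε^2/(64 * (p:ℝ)^4) with hηdef
  have hη0 : 0 < η := by positivity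
  obtain ⟨n, hn1, hnR⟩ : ∃ n : ℕ, 1 ≤ n ∧ 16 * (p:ℝ)^4 / ε^2 ≤ (n:ℝ) := by
    refine ⟨⌈16 * (p:ℝ)^4 / ε^2⌉₊ + 1, by omega, ?_⟩
    have h1 := Nat.le_ceil (16 * (p:ℝ)^4 / ε^2)
    push_cast
    linarith
  have hn0R : (0:ℝ) < (n:ℝ) := by exact_mod_cast hn1
  -- selection
  obtain ⟨f, C, hmono, hCIcc, hpair0⟩ := select (fun i j => corr m i j)
    (fun i j q => ⟨corr_nonneg m i j q, corr_le_one m i j q⟩) (η/2) (by positivity) (3*n)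
  have hpair : ∀ s t : Fin (3*n), s < t → ∀ q, |corr m (f s) (f t) q - C q| ≤ η := by
    intro s t hst q
    have h := hpair0 s t hst q
    linarith only [h]
  have hsym := window m hn1 f hmono C η hη0.le hCIcc hpair
  -- pigeonhole
  set PN := univ.filter (fun q : Fin (3*n) × Fin (3*n) => q.1 < q.2) with hPNdef
  have hKN : (3*n) * (3*n) = (3*n) + 2 * PN.card := by
    have h := card_sym (N := 3*n) (fun _ _ => True) (fun _ _ h => h) (fun _ => trivial)
    simp only [Finset.filter_true, and_true] at h
    rw [Finset.card_univ, Fintype.card_prod, Fintype.card_fin] at h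
    rw [hPNdef]
    exact h
  set A : ℝ := ((3*n : ℕ) : ℝ) with hAdef
  have hA3 : (3:ℝ) ≤ A := by
    rw [hAdef]
    have : (3:ℕ) ≤ 3*n := by omega
    exact_mod_cast this
  have hKNR : (PN.card : ℝ) = (A*A - A)/2 := by
    have : ((3*n) * (3*n) : ℕ) = ((3*n) + 2 * PN.card : ℕ) := hKN
    have h2 : A * A = A + 2 * (PN.card : ℝ) := by
      rw [hAdef]; exact_mod_cast this
    linarith
  set Dg := ∑ r ∈ univ.filter (fun r : Fin p × Fin p => r.1 = r.2), C r with hDgdef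
  -- integral pigeonhole
  have hP2 : (A^2/(p:ℝ) - A)/2 ≤ ∑ q ∈ PN, (m {x : ℕ → Fin p | x (f q.1) = x (f q.2)}).toReal := by
    have hpt : ∀ x : ℕ → Fin p, (A^2/(p:ℝ) - A)/2
        ≤ ∑ q ∈ PN, ({x' : ℕ → Fin p | x' (f q.1) = x' (f q.2)}).indicator 1 x := by
      intro x
      have hsum : ∑ q ∈ PN, ({x' : ℕ → Fin p | x' (f q.1) = x' (f q.2)}).indicator 1 x
          = ((univ.filter fun q : Fin (3*n) × Fin (3*n) =>
              q.1 < q.2 ∧ x (f q.1) = x (f q.2)).card : ℝ) := by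
        have hterm : ∀ q : Fin (3*n) × Fin (3*n),
            ({x' : ℕ → Fin p | x' (f q.1) = x' (f q.2)}).indicator (1 : (ℕ → Fin p) → ℝ) x
              = if x (f q.1) = x (f q.2) then 1 else 0 := by
          intro q
          by_cases h : x (f q.1) = x (f q.2)
          · simp [Set.indicator_apply, h]
          · simp [Set.indicator_apply, h]
        rw [Finset.sum_congr rfl (fun q _ => hterm q), Finset.sum_boole, hPNdef,
          Finset.filter_filter]
      rw [hsum]
      have hkc := key_count (fun s : Fin (3*n) => x (f s))
      set E := (univ.filter fun q : Fin (3*n) × Fin (3*n) =>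
        q.1 < q.2 ∧ x (f q.1) = x (f q.2)).card
      have hcast : A^2 ≤ (p:ℝ) * (A + 2*(E:ℝ)) := by
        rw [hAdef]
        exact_mod_cast hkc
      have hdiv : A^2/(p:ℝ) ≤ A + 2*(E:ℝ) := by
        rw [div_le_iff₀ hp0, mul_comm]
        exact hcast
      linarith only [hdiv]
    have hIntInd : ∀ q : Fin (3*n) × Fin (3*n),
        Integrable (({x' : ℕ → Fin p | x' (f q.1) = x' (f q.2)}).indicator
          (1 : (ℕ → Fin p) → ℝ)) m :=
      fun q => (integrable_const (1:ℝ)).indicator (meas_eq_set2 (f q.1) (f q.2))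
    have hint : ∑ q ∈ PN, (m {x : ℕ → Fin p | x (f q.1) = x (f q.2)}).toReal
        = ∫ x, (∑ q ∈ PN, ({x' : ℕ → Fin p | x' (f q.1) = x' (f q.2)}).indicator 1 x) ∂m := by
      rw [integral_finset_sum _ (fun q _ => hIntInd q)]
      exact Finset.sum_congr rfl fun q _ => (integral_indicator_one (meas_eq_set2 _ _)).symm
    rw [hint]
    have h1 := integral_mono (μ := m) (integrable_const ((A^2/(p:ℝ) - A)/2))
      (integrable_finset_sum _ (fun q _ => hIntInd q))
      hpt
    simpa [measure_univ] using h1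
  -- per-pair bound for the diagonal sums
  have hP3 : ∀ q ∈ PN, (m {x : ℕ → Fin p | x (f q.1) = x (f q.2)}).toReal
      ≤ Dg + (p:ℝ)^2 * η := by
    intro q hq
    have hlt : q.1 < q.2 := (Finset.mem_filter.mp hq).2
    rw [measure_eq_eq_sum m (f q.1) (f q.2)]
    have hb : ∀ r ∈ univ.filter (fun r : Fin p × Fin p => r.1 = r.2),
        corr m (f q.1) (f q.2) r ≤ C r + η := by
      intro r _
      have := hpair q.1 q.2 hlt r
      linarith [(abs_le.mp this).2]
    calc ∑ r ∈ univ.filter (fun r : Fin p × Fin p => r.1 = r.2), corr m (f q.1) (f q.2) r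
        ≤ ∑ r ∈ univ.filter (fun r : Fin p × Fin p => r.1 = r.2), (C r + η) :=
          Finset.sum_le_sum hb
      _ = Dg + ((univ.filter (fun r : Fin p × Fin p => r.1 = r.2)).card : ℝ) * η := by
          rw [Finset.sum_add_distrib, Finset.sum_const, nsmul_eq_mul, hDgdef]
      _ ≤ Dg + (p:ℝ)^2 * η := by
          have hcard : ((univ.filter (fun r : Fin p × Fin p => r.1 = r.2)).card : ℝ) ≤ (p:ℝ)^2 := by
            have h1 : (univ.filter (fun r : Fin p × Fin p => r.1 = r.2)).card ≤ p * p := by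
              calc (univ.filter (fun r : Fin p × Fin p => r.1 = r.2)).card
                  ≤ (univ : Finset (Fin p × Fin p)).card := Finset.card_filter_le _ _
                _ = p * p := by rw [Finset.card_univ, Fintype.card_prod, Fintype.card_fin]
            calc ((univ.filter (fun r : Fin p × Fin p => r.1 = r.2)).card : ℝ)
                ≤ ((p * p : ℕ) : ℝ) := by exact_mod_cast h1
              _ = (p:ℝ)^2 := by push_cast; ring
          have hmul := mul_le_mul_of_nonneg_right hcard hη0.le
          linarith only [hmul]
  have hDg : 1/(p:ℝ) - 1/(A - 1) - (p:ℝ)^2 * η ≤ Dg := by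
    have hsumB : ∑ q ∈ PN, (m {x : ℕ → Fin p | x (f q.1) = x (f q.2)}).toReal
        ≤ (PN.card : ℝ) * (Dg + (p:ℝ)^2 * η) := by
      calc ∑ q ∈ PN, (m {x : ℕ → Fin p | x (f q.1) = x (f q.2)}).toReal
          ≤ ∑ _q ∈ PN, (Dg + (p:ℝ)^2 * η) := Finset.sum_le_sum hP3
        _ = (PN.card : ℝ) * (Dg + (p:ℝ)^2 * η) := by
            rw [Finset.sum_const, nsmul_eq_mul]
    have hW : (A^2/(p:ℝ) - A)/2 ≤ ((A*A - A)/2) * (Dg + (p:ℝ)^2 * η) := by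
      rw [← hKNR]; linarith only [hP2, hsumB]
    have hA1 : (0:ℝ) < A - 1 := by linarith only [hA3]
    have hv : (A - 1) * (1/(A-1)) = 1 := mul_one_div_cancel (ne_of_gt hA1)
    have hu : (p:ℝ) * (1/(p:ℝ)) = 1 := mul_one_div_cancel (ne_of_gt hp0)
    have hu0 : (0:ℝ) ≤ 1/(p:ℝ) := by positivity
    have hApos : (0:ℝ) < A := by linarith only [hA3]
    have hA1p : (0:ℝ) < A - 1 := by linarith only [hA3]
    have hKpos : (0:ℝ) < (A*A - A)/2 := by
      have h2 : (0:ℝ) < A*(A-1) := mul_pos hApos hA1p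
      have h3 : (A*A - A)/2 = A*(A-1)/2 := by ring
      rw [h3]
      exact div_pos h2 (by norm_num)
    have hkey : (1/(p:ℝ) - 1/(A-1)) * ((A*A - A)/2) ≤ (A^2/(p:ℝ) - A)/2 := by
      have hpne : (p:ℝ) ≠ 0 := ne_of_gt hp0
      have hAne : A - 1 ≠ 0 := ne_of_gt hA1
      have hid : (A^2/(p:ℝ) - A)/2 - (1/(p:ℝ) - 1/(A-1)) * ((A*A - A)/2)
          = A * (1/(p:ℝ)) / 2 + ((A-1)*(1/(A-1)) - 1) * (A/2) := by
        field_simp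
        ring
      have h0 : ((A-1)*(1/(A-1)) - 1) * (A/2) = 0 := by rw [hv]; ring
      have hA0 : (0:ℝ) ≤ A := by linarith only [hA3]
      have hpos : (0:ℝ) ≤ A * (1/(p:ℝ)) / 2 := by
        apply div_nonneg (mul_nonneg hA0 hu0) (by norm_num)
      linarith [hid, h0, hpos]
    have hchain : (1/(p:ℝ) - 1/(A-1)) * ((A*A - A)/2) ≤ ((A*A - A)/2) * (Dg + (p:ℝ)^2 * η) :=
      le_trans hkey hW
    rw [mul_comm] at hchain
    have hfin := (mul_le_mul_iff_right₀ hKpos).mp hchain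
    linarith only [hfin]
  -- final pair
  have h01 : (⟨0, by omega⟩ : Fin (3*n)) < (⟨1, by omega⟩ : Fin (3*n)) :=
    Fin.mk_lt_mk.mpr one_pos
  set s0 : Fin (3*n) := ⟨0, by omega⟩ with hs0
  set s1 : Fin (3*n) := ⟨1, by omega⟩ with hs1
  refine ⟨f s0, f s1, hmono h01, ?_⟩
  rw [measure_lt_eq_sum m (f s0) (f s1)]
  set Qlt := univ.filter (fun q : Fin p × Fin p => q.2 < q.1) with hQltdef
  set Sq := Real.sqrt (4*η + 2/(n:ℝ)) with hSqdef
  have hSq0 : 0 ≤ Sq := Real.sqrt_nonneg _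
  have hcardQlt : ((Qlt.card : ℕ) : ℝ) ≤ (p:ℝ)^2 := by
    have h1 : Qlt.card ≤ p * p := by
      calc Qlt.card ≤ (univ : Finset (Fin p × Fin p)).card := Finset.card_filter_le _ _
        _ = p * p := by rw [Finset.card_univ, Fintype.card_prod, Fintype.card_fin]
    calc ((Qlt.card : ℕ) : ℝ) ≤ ((p * p : ℕ) : ℝ) := by exact_mod_cast h1
      _ = (p:ℝ)^2 := by push_cast; ring
  have h1 : ∑ q ∈ Qlt, corr m (f s0) (f s1) q ≤ (∑ q ∈ Qlt, C q) + (p:ℝ)^2 * η := by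
    have hb : ∀ q ∈ Qlt, corr m (f s0) (f s1) q ≤ C q + η := by
      intro q _
      have := hpair s0 s1 h01 q
      linarith [(abs_le.mp this).2]
    calc ∑ q ∈ Qlt, corr m (f s0) (f s1) q ≤ ∑ q ∈ Qlt, (C q + η) := Finset.sum_le_sum hb
      _ = (∑ q ∈ Qlt, C q) + (Qlt.card : ℝ) * η := by
          rw [Finset.sum_add_distrib, Finset.sum_const, nsmul_eq_mul]
      _ ≤ (∑ q ∈ Qlt, C q) + (p:ℝ)^2 * η := by
          have hmul := mul_le_mul_of_nonneg_right hcardQlt hη0.le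
          linarith only [hmul]
  -- symmetrization
  have hswap : ∑ q ∈ Qlt, C q.swap
      = ∑ q ∈ univ.filter (fun q : Fin p × Fin p => q.1 < q.2), C q := by
    have hinj : ∀ x ∈ Qlt, ∀ y ∈ Qlt, x.swap = y.swap → x = y :=
      fun x _ y _ h => Prod.swap_injective h
    have himg : ∑ q ∈ Qlt.image Prod.swap, C q = ∑ q ∈ Qlt, C q.swap :=
      Finset.sum_image hinj
    have hset : Qlt.image Prod.swap = univ.filter (fun q : Fin p × Fin p => q.1 < q.2) := by
      ext q
      simp only [Finset.mem_image, hQltdef, Finset.mem_filter, Finset.mem_univ, true_and]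
      constructor
      · rintro ⟨a, ha, rfl⟩
        exact ha
      · intro h
        refine ⟨q.swap, ?_, Prod.swap_swap q⟩
        simpa using h
    rw [← himg, hset]
  have hoffsplit : ∑ q ∈ univ.filter (fun q : Fin p × Fin p => ¬ q.1 = q.2), C q
      = (∑ q ∈ Qlt, C q) + ∑ q ∈ univ.filter (fun q : Fin p × Fin p => q.1 < q.2), C q := by
    rw [← Finset.sum_filter_add_sum_filter_not
      (univ.filter (fun q : Fin p × Fin p => ¬ q.1 = q.2)) (fun q => q.2 < q.1) C]
    congr 1
    · rw [Finset.filter_filter, hQltdef]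
      congr 1
      ext q
      simp only [Finset.mem_filter, Finset.mem_univ, true_and]
      constructor
      · rintro ⟨-, h⟩; exact h
      · intro h; exact ⟨(ne_of_gt h), h⟩
    · rw [Finset.filter_filter]
      congr 1
      ext q
      simp only [Finset.mem_filter, Finset.mem_univ, true_and]
      constructor
      · rintro ⟨hne, hnl⟩
        exact lt_of_le_of_ne (not_lt.mp hnl) hne
      · intro h
        exact ⟨ne_of_lt h, not_lt.mpr h.le⟩
  have h2 : ∑ q ∈ Qlt, C q
      ≤ 1/2 * (∑ q ∈ univ.filter (fun q : Fin p × Fin p => ¬ q.1 = q.2), C q)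
        + 1/2 * (p:ℝ)^2 * (2*η + Sq) := by
    have hdiff : ∑ q ∈ Qlt, (C q - C q.swap) ≤ (p:ℝ)^2 * (2*η + Sq) := by
      have hb : ∀ q ∈ Qlt, C q - C q.swap ≤ 2*η + Sq := by
        intro q _
        have := hsym q.1 q.2
        rw [hSqdef]
        simpa [Prod.swap, hSqdef] using this
      calc ∑ q ∈ Qlt, (C q - C q.swap) ≤ ∑ _q ∈ Qlt, (2*η + Sq) := Finset.sum_le_sum hb
        _ = (Qlt.card : ℝ) * (2*η + Sq) := by rw [Finset.sum_const, nsmul_eq_mul]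
        _ ≤ (p:ℝ)^2 * (2*η + Sq) := by
            have h2ηS : (0:ℝ) ≤ 2*η + Sq := by linarith only [hη0.le, hSq0]
            have hmul := mul_le_mul_of_nonneg_right hcardQlt h2ηS
            linarith only [hmul]
    have hsumdiff : ∑ q ∈ Qlt, (C q - C q.swap)
        = (∑ q ∈ Qlt, C q) - ∑ q ∈ Qlt, C q.swap := Finset.sum_sub_distrib _ _
    have hofs := hoffsplit
    rw [← hswap] at hofs
    linarith only [hofs, hsumdiff, hdiff]
  have h3 : ∑ q ∈ univ.filter (fun q : Fin p × Fin p => ¬ q.1 = q.2), C q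
      ≤ 1 + (p:ℝ)^2 * η - Dg := by
    have hsumuniv : ∑ q : Fin p × Fin p, C q ≤ 1 + (p:ℝ)^2 * η := by
      have hb : ∀ q ∈ (univ : Finset (Fin p × Fin p)), C q ≤ corr m (f s0) (f s1) q + η := by
        intro q _
        have := hpair s0 s1 h01 q
        linarith [(abs_le.mp this).1]
      have hcard : (((univ : Finset (Fin p × Fin p)).card : ℕ) : ℝ) = (p:ℝ) * (p:ℝ) := by
        rw [Finset.card_univ, Fintype.card_prod, Fintype.card_fin]; push_cast; ring
      calc ∑ q : Fin p × Fin p, C q ≤ ∑ q : Fin p × Fin p, (corr m (f s0) (f s1) q + η) :=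
            Finset.sum_le_sum hb
        _ = (∑ q : Fin p × Fin p, corr m (f s0) (f s1) q)
            + ((univ : Finset (Fin p × Fin p)).card : ℝ) * η := by
            rw [Finset.sum_add_distrib, Finset.sum_const, nsmul_eq_mul]
        _ = 1 + ((univ : Finset (Fin p × Fin p)).card : ℝ) * η := by rw [sum_corr]
        _ ≤ 1 + (p:ℝ)^2 * η := by
            rw [hcard]
            have hpp : (p:ℝ) * (p:ℝ) * η = (p:ℝ)^2 * η := by ring
            linarith only [hpp]
    have hsplit : ∑ q : Fin p × Fin p, C q
        = Dg + ∑ q ∈ univ.filter (fun q : Fin p × Fin p => ¬ q.1 = q.2), C q := by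
      rw [hDgdef, ← Finset.sum_filter_add_sum_filter_not
        (univ : Finset (Fin p × Fin p)) (fun q => q.1 = q.2) C]
    linarith only [hsumuniv, hsplit]
  -- numeric: sqrt bound
  have hsqrt : Sq ≤ ε/(2*(p:ℝ)^2) := by
    have hw0 : (0:ℝ) ≤ ε^2/(p:ℝ)^4 := by positivity
    have h2n : 2/(n:ℝ) ≤ (ε^2/(p:ℝ)^4)/8 := by
      rw [div_le_div_iff₀ hn0R (by norm_num : (0:ℝ) < 8)]
      have hq : (0:ℝ) < ε^2/(p:ℝ)^4 := by positivity
      have h5 := mul_le_mul_of_nonneg_left hnR hq.le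
      have h6 : ε^2/(p:ℝ)^4 * (16*(p:ℝ)^4/ε^2) = 16 := by
        field_simp
      linarith only [h5, h6]
    have h4η : 4*η = (ε^2/(p:ℝ)^4)/16 := by
      rw [hηdef]; field_simp; ring
    have harg : 4*η + 2/(n:ℝ) ≤ (ε/(2*(p:ℝ)^2))^2 := by
      have : (ε/(2*(p:ℝ)^2))^2 = (ε^2/(p:ℝ)^4)/4 := by
        field_simp; ring
      rw [this, h4η]
      linarith only [h2n, hw0]
    rw [hSqdef]
    calc Real.sqrt (4*η + 2/(n:ℝ)) ≤ Real.sqrt ((ε/(2*(p:ℝ)^2))^2) := Real.sqrt_le_sqrt harg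
      _ = ε/(2*(p:ℝ)^2) := Real.sqrt_sq (by positivity)
  have hp2Sq : 1/2 * (p:ℝ)^2 * Sq ≤ ε/4 := by
    have hp2 : (0:ℝ) < (p:ℝ)^2 := by positivity
    have hmul := mul_le_mul_of_nonneg_left hsqrt (le_of_lt hp2)
    have heq : (p:ℝ)^2 * (ε/(2*(p:ℝ)^2)) = ε/2 := by field_simp
    linarith only [hmul, heq]
  have hη1 : (p:ℝ)^2 * η ≤ ε/16 := by
    have he1 : (p:ℝ)^2 * η = ε^2/(64*(p:ℝ)^2) := by rw [hηdef]; field_simp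
    rw [he1]
    have hεsq : ε^2 ≤ ε := by
      have hm := mul_le_mul_of_nonneg_left hε1 hε.le
      have hq : ε * 1 = ε := by ring
      have hq2 : ε * ε = ε^2 := by ring
      linarith only [hm, hq, hq2]
    have hpsq : (1:ℝ) ≤ (p:ℝ)^2 := by
      simpa using pow_le_pow_left₀ (by norm_num : (0:ℝ) ≤ 1) hpR 2
    have h64 : (64:ℝ) ≤ 64*(p:ℝ)^2 := by linarith only [hpsq]
    have he2 : ε^2/(64*(p:ℝ)^2) ≤ ε/64 := by
      apply div_le_div₀ hε.le hεsq (by norm_num)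
      linarith only [hpsq]
    linarith only [he2, hε.le]
  have hAe : 1/(A-1) ≤ ε/4 := by
    have hA1 : (0:ℝ) < A - 1 := by linarith only [hA3]
    rw [div_le_div_iff₀ hA1 (by norm_num : (0:ℝ) < 4)]
    have hp4 : (1:ℝ) ≤ (p:ℝ)^4 := by
      simpa using pow_le_pow_left₀ (by norm_num : (0:ℝ) ≤ 1) hpR 4
    have hA3n : A = 3*(n:ℝ) := by rw [hAdef]; push_cast; ring
    have hεne : ε ≠ 0 := ne_of_gt hε
    have hb : 16*(p:ℝ)^4 ≤ (n:ℝ)*ε^2 := by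
      have hm := mul_le_mul_of_nonneg_right hnR (sq_nonneg ε)
      have hid : 16*(p:ℝ)^4/ε^2*ε^2 = 16*(p:ℝ)^4 := by field_simp
      linarith only [hm, hid]
    have h48A : (48:ℝ) ≤ ε^2 * A := by
      have hid : ε^2*A = 3*((n:ℝ)*ε^2) := by rw [hA3n]; ring
      linarith only [hid, hb, hp4]
    have hA0 : (0:ℝ) ≤ A := by linarith only [hA3]
    have hhint : (0:ℝ) ≤ (1-ε)*(ε*A) :=
      mul_nonneg (by linarith only [hε1]) (mul_nonneg hε.le hA0)
    nlinarith [h48A, hε.le, hε1, hhint]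
  -- assemble
  have hfinal : (∑ q ∈ Qlt, C q) + (p:ℝ)^2 * η ≤ 1/2 * (1 - 1/(p:ℝ)) + ε := by
    have e1 : ∑ q ∈ Qlt, C q ≤ 1/2 * (1 + (p:ℝ)^2 * η - Dg) + 1/2 * (p:ℝ)^2 * (2*η + Sq) := by
      calc ∑ q ∈ Qlt, C q
          ≤ 1/2 * (∑ q ∈ univ.filter (fun q : Fin p × Fin p => ¬ q.1 = q.2), C q)
            + 1/2 * (p:ℝ)^2 * (2*η + Sq) := h2
        _ ≤ 1/2 * (1 + (p:ℝ)^2 * η - Dg) + 1/2 * (p:ℝ)^2 * (2*η + Sq) := by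
            linarith only [h3]
    have e2 : 1/2 * (1 + (p:ℝ)^2 * η - Dg)
        ≤ 1/2 * (1 - 1/(p:ℝ)) + 1/2 * (1/(A-1)) + (p:ℝ)^2 * η := by
      linarith only [hDg]
    linarith only [e1, e2, hp2Sq, hη1, hAe, hη0.le, hε.le]
  linarith only [h1, hfinal]

theorem stmt2 (p : ℕ) (hp : 1 ≤ p) (m : Measure (ℕ → Fin p)) [IsProbabilityMeasure m] :
    ⨅ (q : {q : ℕ × ℕ // q.1 < q.2}), m {x | x q.1.2 < x q.1.1}
      ≤ ENNReal.ofReal ((1 / 2) * (1 - 1 / (p : ℝ))) := by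
  apply ENNReal.le_of_forall_pos_le_add
  intro ε' hε' _
  set εr : ℝ := min (ε' : ℝ) 1 with hεr
  have hεr0 : 0 < εr := lt_min (by exact_mod_cast hε') one_pos
  have hεr1 : εr ≤ 1 := min_le_right _ _
  obtain ⟨i, j, hij, hle⟩ := main_real m hp εr hεr0 hεr1
  have hc0 : (0:ℝ) ≤ 1/2 * (1 - 1/(p:ℝ)) := by
    have hpR : (1:ℝ) ≤ (p:ℝ) := by exact_mod_cast hp
    have hp0 : (0:ℝ) < (p:ℝ) := by linarith
    have h1 : 1/(p:ℝ) ≤ 1 := by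
      rw [div_le_one hp0]; exact hpR
    linarith
  calc ⨅ (q : {q : ℕ × ℕ // q.1 < q.2}), m {x | x q.1.2 < x q.1.1}
      ≤ m {x : ℕ → Fin p | x j < x i} :=
        iInf_le (fun q : {q : ℕ × ℕ // q.1 < q.2} => m {x | x q.1.2 < x q.1.1})
          (⟨(i, j), hij⟩ : {q : ℕ × ℕ // q.1 < q.2})
    _ ≤ ENNReal.ofReal (1/2 * (1 - 1/(p:ℝ)) + εr) := by
        rw [← ENNReal.ofReal_toReal (measure_ne_top m _)]
        exact ENNReal.ofReal_le_ofReal hle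
    _ ≤ ENNReal.ofReal ((1 / 2) * (1 - 1 / (p : ℝ))) + ε' := by
        rw [ENNReal.ofReal_add hc0 hεr0.le]
        have h2 : ENNReal.ofReal εr ≤ (ε' : ℝ≥0∞) := by
          calc ENNReal.ofReal εr ≤ ENNReal.ofReal (ε':ℝ) :=
                ENNReal.ofReal_le_ofReal (min_le_left _ _)
            _ = (ε' : ℝ≥0∞) := ENNReal.ofReal_coe_nnreal
        exact add_le_add le_rfl h2
end

section
/- Let G be a countable directed graph, (Ω, 𝒜, μ) a probability space, and X : Ω → 2^{E_G} a random subgraph of G (i.e., each event X_e = {x : e ∈ X(x)} is measurable). Then the set P = {x ∈ Ω : X(x) has an infinite directed path} is measurable with respect to the μ-completion of 𝒜. -/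
open MeasureTheory Set Function
open scoped ENNReal

section Aux

variable {Ω : Type*} [MeasurableSpace Ω]

/-- halving arithmetic -/
lemma half_split' (a : ℝ≥0∞) (n : ℕ) : a / 2 ^ (n + 1) + a / 2 ^ (n + 1) = a / 2 ^ n := by
  have : a / 2 ^ (n + 1) = a / 2 ^ n / 2 := by
    rw [pow_succ, ENNReal.div_eq_inv_mul, ENNReal.div_eq_inv_mul, ENNReal.div_eq_inv_mul,
      ENNReal.mul_inv (Or.inl (by simp)) (Or.inl (by simp))]
    ring
  rw [this, ENNReal.add_halves]

lemma sum_halves_le' (ε : ℝ≥0∞) (n : ℕ) : ∑ i ∈ Finset.range n, ε / 2 ^ (i + 1) ≤ ε := by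
  have h : ∀ m : ℕ, ∑ i ∈ Finset.range m, ε / 2 ^ (i + 1) + ε / 2 ^ m = ε := by
    intro m
    induction m with
    | zero => simp
    | succ m ih => rw [Finset.sum_range_succ, add_assoc, half_split', ih]
  calc ∑ i ∈ Finset.range n, ε / 2 ^ (i + 1) ≤ _ + ε / 2 ^ n := le_self_add
    _ = ε := h n

/-- König's lemma via compactness. -/
lemma koenig_aux (g : ℕ → ℕ) (R : ℕ → ℕ → Prop)
    (h : ∀ n : ℕ, ∃ f : ℕ → ℕ, (∀ i, f i ≤ g i) ∧ ∀ k < n, R (f k) (f (k + 1))) :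
    ∃ f : ℕ → ℕ, ∀ k, R (f k) (f (k + 1)) := by
  set K : Set (ℕ → ℕ) := Set.pi Set.univ (fun i => Set.Iic (g i)) with hK
  set F : ℕ → Set (ℕ → ℕ) := fun n => {f ∈ K | ∀ k < n, R (f k) (f (k + 1))} with hF
  have hKcl : IsClosed K := isClosed_set_pi (fun i _ => isClosed_Iic)
  have hFcl : ∀ n, IsClosed (F n) := by
    intro n
    refine hKcl.inter ?_
    show IsClosed {f : ℕ → ℕ | ∀ k < n, R (f k) (f (k + 1))}
    have : {f : ℕ → ℕ | ∀ k < n, R (f k) (f (k + 1))}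
        = ⋂ k, ⋂ (_ : k < n), (fun f : ℕ → ℕ => (f k, f (k + 1))) ⁻¹' {p | R p.1 p.2} := by
      ext f; simp [Set.mem_iInter]
    rw [this]
    exact isClosed_iInter fun k => isClosed_iInter fun _ =>
      (isClosed_discrete _).preimage ((continuous_apply k).prodMk (continuous_apply (k + 1)))
  have hF0 : IsCompact (F 0) := by
    have hKc : IsCompact K := isCompact_univ_pi (fun i => (Set.finite_Iic (g i)).isCompact)
    exact hKc.of_isClosed_subset (hFcl 0) (Set.sep_subset _ _)
  have hFne : ∀ n, (F n).Nonempty := by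
    intro n
    obtain ⟨f, hf1, hf2⟩ := h n
    exact ⟨f, fun i _ => hf1 i, hf2⟩
  have hmono : ∀ n, F (n + 1) ⊆ F n := by
    intro n f hf
    exact ⟨hf.1, fun k hk => hf.2 k (Nat.lt_succ_of_lt hk)⟩
  obtain ⟨f, hf⟩ := IsCompact.nonempty_iInter_of_sequence_nonempty_isCompact_isClosed
    F hmono hFne hF0 hFcl
  refine ⟨f, fun k => ?_⟩
  exact (Set.mem_iInter.1 hf (k + 1)).2 k (Nat.lt_succ_self k)

/-- the event that `f` is an `X`-path on its first `n` edges -/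
def pathC (X : Ω → ℕ → ℕ → Prop) (f : ℕ → ℕ) (n : ℕ) : Set Ω :=
  {x | ∀ k < n, X x (f k) (f (k + 1))}

/-- the event that some infinite `X`-path exists whose first `n` vertices are bounded by `g` -/
def pathD (X : Ω → ℕ → ℕ → Prop) (g : ℕ → ℕ) (n : ℕ) : Set Ω :=
  ⋃ (f : ℕ → ℕ) (_ : ∀ i < n, f i ≤ g i), ⋂ m, pathC X f m

lemma mem_pathC {X : Ω → ℕ → ℕ → Prop} {f : ℕ → ℕ} {n : ℕ} {x : Ω} :
    x ∈ pathC X f n ↔ ∀ k < n, X x (f k) (f (k + 1)) := Iff.rfl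

lemma mem_pathD {X : Ω → ℕ → ℕ → Prop} {g : ℕ → ℕ} {n : ℕ} {x : Ω} :
    x ∈ pathD X g n ↔ ∃ f : ℕ → ℕ, (∀ i < n, f i ≤ g i) ∧ ∀ m, ∀ k < m, X x (f k) (f (k + 1)) := by
  simp [pathD, pathC, Set.mem_iUnion, Set.mem_iInter]

lemma pathC_measurable {X : Ω → ℕ → ℕ → Prop} (hmeas : ∀ a b, MeasurableSet {x | X x a b})
    (f : ℕ → ℕ) (n : ℕ) : MeasurableSet (pathC X f n) := by
  have : pathC X f n = ⋂ k, ⋂ (_ : k < n), {x | X x (f k) (f (k + 1))} := by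
    ext x; simp [pathC]
  rw [this]
  exact .iInter fun k => .iInter fun _ => hmeas _ _

lemma pathC_anti {X : Ω → ℕ → ℕ → Prop} (f : ℕ → ℕ) {m n : ℕ} (h : m ≤ n) :
    pathC X f n ⊆ pathC X f m := fun x hx k hk => hx k (hk.trans_le h)

lemma pathD_zero (X : Ω → ℕ → ℕ → Prop) (g : ℕ → ℕ) :
    pathD X g 0 = {x | ∃ f : ℕ → ℕ, ∀ k, X x (f k) (f (k + 1))} := by
  ext x
  rw [mem_pathD]
  constructor
  · rintro ⟨f, -, hf⟩; exact ⟨f, fun k => hf (k + 1) k (Nat.lt_succ_self k)⟩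
  · rintro ⟨f, hf⟩; exact ⟨f, fun i h => absurd h (Nat.not_lt_zero i), fun m k _ => hf k⟩

lemma pathD_sup (μ : Measure Ω) [IsFiniteMeasure μ] (X : Ω → ℕ → ℕ → Prop)
    (g : ℕ → ℕ) (n : ℕ) :
    μ (pathD X g n) = ⨆ k, μ (pathD X (Function.update g n k) (n + 1)) := by
  have hmono : Monotone (fun k => pathD X (Function.update g n k) (n + 1)) := by
    intro k k' hk x hx
    rw [mem_pathD] at hx ⊢
    obtain ⟨f, hf, hx⟩ := hx
    refine ⟨f, fun i hi => (hf i hi).trans ?_, hx⟩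
    rcases eq_or_ne i n with rfl | hne
    · simp [Function.update_self, hk]
    · simp [Function.update_of_ne hne]
  have hU : (⋃ k, pathD X (Function.update g n k) (n + 1)) = pathD X g n := by
    ext x
    simp only [Set.mem_iUnion, mem_pathD]
    constructor
    · rintro ⟨k, f, hf, hx⟩
      refine ⟨f, fun i hi => ?_, hx⟩
      have := hf i (Nat.lt_succ_of_lt hi)
      rwa [Function.update_of_ne hi.ne] at this
    · rintro ⟨f, hf, hx⟩
      refine ⟨f n, f, fun i hi => ?_, hx⟩
      rcases eq_or_ne i n with rfl | hne
      · simp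
      · rw [Function.update_of_ne hne]
        exact hf i (by omega)
  rw [← hU, hmono.measure_iUnion]

lemma pathD_step (μ : Measure Ω) [IsFiniteMeasure μ] (X : Ω → ℕ → ℕ → Prop)
    (g : ℕ → ℕ) (n : ℕ) (δ : ℝ≥0∞) (hδ : δ ≠ 0) :
    ∃ k : ℕ, μ (pathD X g n) ≤ μ (pathD X (Function.update g n k) (n + 1)) + δ := by
  rcases eq_or_ne (μ (pathD X g n)) 0 with h0 | h0
  · exact ⟨0, by simp [h0]⟩
  · have hlt : μ (pathD X g n) - δ < ⨆ k, μ (pathD X (Function.update g n k) (n + 1)) :=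
      (ENNReal.sub_lt_self (measure_ne_top μ _) h0 hδ).trans_eq (pathD_sup μ X g n)
    obtain ⟨k, hk⟩ := lt_iSup_iff.1 hlt
    exact ⟨k, tsub_le_iff_right.1 hk.le⟩

lemma pad_getD (f : ℕ → ℕ) (m i : ℕ) :
    ((List.range m).map f).getD i 0 = if i < m then f i else 0 := by
  by_cases h : i < m
  · rw [List.getD_eq_getElem _ _ (by simpa using h)]
    simp [h]
  · rw [List.getD_eq_default _ _ (by simpa using Nat.not_lt.1 h)]
    simp [h]

lemma exists_approx (μ : Measure Ω) [IsFiniteMeasure μ]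
    (X : Ω → ℕ → ℕ → Prop) (hmeas : ∀ a b, MeasurableSet {x | X x a b})
    (ε : ℝ≥0∞) (hε : ε ≠ 0) :
    ∃ B : Set Ω, MeasurableSet B ∧ B ⊆ {x | ∃ f : ℕ → ℕ, ∀ k, X x (f k) (f (k + 1))} ∧
      μ {x | ∃ f : ℕ → ℕ, ∀ k, X x (f k) (f (k + 1))} ≤ μ B + ε := by
  have hδ : ∀ n : ℕ, (ε / 2 ^ (n + 1)) ≠ 0 := fun n => by
    simp [ENNReal.div_eq_zero_iff, hε]
  choose pick hpick using fun (g : ℕ → ℕ) (n : ℕ) =>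
    pathD_step μ X g n (ε / 2 ^ (n + 1)) (hδ n)
  -- the recursively chosen bounding sequence
  let gseq : ℕ → (ℕ → ℕ) := fun n =>
    Nat.rec (fun _ => 0) (fun m gm => Function.update gm m (pick gm m)) n
  have gseq_succ : ∀ n, gseq (n + 1) = Function.update (gseq n) n (pick (gseq n) n) :=
    fun n => rfl
  set glim : ℕ → ℕ := fun i => gseq (i + 1) i with hglimdef
  have hstab : ∀ n i, i < n → gseq n i = glim i := by
    intro n
    induction n with
    | zero => intro i hi; omega
    | succ n ih =>
      intro i hi
      rcases Nat.lt_or_ge i n with h | h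
      · rw [gseq_succ, Function.update_of_ne (by omega)]
        exact ih i h
      · have : i = n := by omega
        subst this
        rfl
  -- invariant
  have hinv : ∀ n, μ {x | ∃ f : ℕ → ℕ, ∀ k, X x (f k) (f (k + 1))}
      ≤ μ (pathD X (gseq n) n) + ∑ i ∈ Finset.range n, ε / 2 ^ (i + 1) := by
    intro n
    induction n with
    | zero => rw [pathD_zero]; simp
    | succ n ih =>
      calc μ {x | ∃ f : ℕ → ℕ, ∀ k, X x (f k) (f (k + 1))}
          ≤ μ (pathD X (gseq n) n) + ∑ i ∈ Finset.range n, ε / 2 ^ (i + 1) := ih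
        _ ≤ (μ (pathD X (gseq (n + 1)) (n + 1)) + ε / 2 ^ (n + 1))
              + ∑ i ∈ Finset.range n, ε / 2 ^ (i + 1) := by
            gcongr
            rw [gseq_succ]
            exact hpick (gseq n) n
        _ = μ (pathD X (gseq (n + 1)) (n + 1)) + ∑ i ∈ Finset.range (n + 1), ε / 2 ^ (i + 1) := by
            rw [Finset.sum_range_succ]; ring
  -- the approximating measurable sets
  set En : ℕ → Set Ω := fun n =>
    ⋃ (s : List ℕ) (_ : ∀ i, s.getD i 0 ≤ glim i), pathC X (fun i => s.getD i 0) n with hEn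
  have hEmeas : ∀ n, MeasurableSet (En n) :=
    fun n => .iUnion fun s => .iUnion fun _ => pathC_measurable hmeas _ _
  have hEanti : Antitone En := by
    intro m n hmn
    exact Set.iUnion_mono fun s => Set.iUnion_mono' fun hs => ⟨hs, pathC_anti _ hmn⟩
  have hDE : ∀ n, pathD X (gseq (n + 1)) (n + 1) ⊆ En n := by
    intro n x hx
    rw [mem_pathD] at hx
    obtain ⟨f, hf, hx⟩ := hx
    rw [hEn]
    simp only [Set.mem_iUnion]
    refine ⟨(List.range (n + 1)).map f, fun i => ?_, fun k hk => ?_⟩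
    · simp only [pad_getD]
      split_ifs with h
      · rw [← hstab (n + 1) i h]
        exact hf i h
      · exact Nat.zero_le _
    · simp only [pad_getD]
      rw [if_pos (by omega : k < n + 1), if_pos (by omega : k + 1 < n + 1)]
      exact hx (n + 1) k (by omega)
  have hBsub : (⋂ n, En n) ⊆ {x | ∃ f : ℕ → ℕ, ∀ k, X x (f k) (f (k + 1))} := by
    intro x hx
    apply koenig_aux glim (fun a b => X x a b)
    intro n
    have hxn := Set.mem_iInter.1 hx n
    rw [hEn] at hxn
    simp only [Set.mem_iUnion] at hxn
    obtain ⟨s, hs, hxs⟩ := hxn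
    exact ⟨fun i => s.getD i 0, hs, hxs⟩
  refine ⟨⋂ n, En n, .iInter hEmeas, hBsub, ?_⟩
  have hEbound : ∀ n, μ {x | ∃ f : ℕ → ℕ, ∀ k, X x (f k) (f (k + 1))} ≤ μ (En n) + ε := by
    intro n
    calc μ {x | ∃ f : ℕ → ℕ, ∀ k, X x (f k) (f (k + 1))}
        ≤ μ (pathD X (gseq (n + 1)) (n + 1)) + ∑ i ∈ Finset.range (n + 1), ε / 2 ^ (i + 1) :=
          hinv (n + 1)
      _ ≤ μ (En n) + ε := by
          gcongr
          · exact hDE n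
          · exact sum_halves_le' ε (n + 1)
  have hμB : μ (⋂ n, En n) = ⨅ n, μ (En n) :=
    hEanti.measure_iInter (fun n => (hEmeas n).nullMeasurableSet) ⟨0, measure_ne_top μ _⟩
  calc μ {x | ∃ f : ℕ → ℕ, ∀ k, X x (f k) (f (k + 1))} ≤ ⨅ n, (μ (En n) + ε) :=
        le_iInf hEbound
    _ = (⨅ n, μ (En n)) + ε := ENNReal.iInf_add.symm
    _ = μ (⋂ n, En n) + ε := by rw [hμB]

lemma aux_nat (μ : Measure Ω) [IsFiniteMeasure μ]
    (X : Ω → ℕ → ℕ → Prop) (hmeas : ∀ a b, MeasurableSet {x | X x a b}) :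
    NullMeasurableSet {x | ∃ f : ℕ → ℕ, ∀ k, X x (f k) (f (k + 1))} μ := by
  set P : Set Ω := {x | ∃ f : ℕ → ℕ, ∀ k, X x (f k) (f (k + 1))} with hP
  choose B hBmeas hBsub hBle using fun m : ℕ =>
    exists_approx μ X hmeas ((m : ℝ≥0∞) + 1)⁻¹ (by simp)
  set K : Set Ω := ⋃ m, B m with hK
  have hKmeas : MeasurableSet K := .iUnion hBmeas
  have hKsub : K ⊆ P := Set.iUnion_subset hBsub
  have hKeq : μ K = μ P := by
    refine le_antisymm (measure_mono hKsub) ?_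
    refine ENNReal.le_of_forall_pos_le_add fun δ hδ _ => ?_
    obtain ⟨m, hm⟩ := ENNReal.exists_inv_nat_lt (a := (δ : ℝ≥0∞)) (by simpa using hδ.ne')
    calc μ P ≤ μ (B m) + ((m : ℝ≥0∞) + 1)⁻¹ := hBle m
      _ ≤ μ K + δ := by
          gcongr
          · exact Set.subset_iUnion B m
          · refine le_trans ?_ hm.le
            gcongr
            exact le_self_add
  have hnull : μ (P \ K) = 0 := by
    have hsub2 : P \ K ⊆ toMeasurable μ P \ K := Set.diff_subset_diff_left (subset_toMeasurable μ P)
    refine measure_mono_null hsub2 ?_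
    rw [measure_diff (hKsub.trans (subset_toMeasurable μ P)) hKmeas.nullMeasurableSet
      (measure_ne_top μ _), measure_toMeasurable, ← hKeq, tsub_self]
  have : P = K ∪ (P \ K) := by rw [Set.union_diff_cancel hKsub]
  rw [this]
  exact hKmeas.nullMeasurableSet.union (NullMeasurableSet.of_null hnull)

end Aux

theorem stmt7 {V : Type*} [Countable V] (E : V → V → Prop)
    {Ω : Type*} [MeasurableSpace Ω] (μ : Measure Ω) [IsProbabilityMeasure μ]
    (X : Ω → V → V → Prop) (hsub : ∀ x a b, X x a b → E a b)
    (hmeas : ∀ a b, MeasurableSet {x | X x a b}) :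
    NullMeasurableSet {x | ∃ f : ℕ → V, ∀ k, X x (f k) (f (k + 1))} μ := by
  rcases isEmpty_or_nonempty V with hV | hV
  · have : {x : Ω | ∃ f : ℕ → V, ∀ k, X x (f k) (f (k + 1))} = ∅ := by
      ext x
      simp only [Set.mem_setOf_eq, Set.mem_empty_iff_false, iff_false]
      rintro ⟨f, -⟩
      exact (hV.false (f 0)).elim
    rw [this]
    exact MeasurableSet.empty.nullMeasurableSet
  · obtain ⟨e, he⟩ := exists_surjective_nat V
    have hset : {x : Ω | ∃ f : ℕ → V, ∀ k, X x (f k) (f (k + 1))}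
        = {x : Ω | ∃ f : ℕ → ℕ, ∀ k, X x (e (f k)) (e (f (k + 1)))} := by
      ext x
      constructor
      · rintro ⟨f, hf⟩
        refine ⟨fun k => (he (f k)).choose, fun k => ?_⟩
        rw [(he (f k)).choose_spec, (he (f (k + 1))).choose_spec]
        exact hf k
      · rintro ⟨f, hf⟩
        exact ⟨fun k => e (f k), hf⟩
    rw [hset]
    exact aux_nat μ (fun x a b => X x (e a) (e b)) (fun a b => hmeas (e a) (e b))
end

section
/- Let G be a countable directed graph and suppose there is a coloring c : E_G → ℕ such that every infinite directed path in G meets all but finitely many colors. Then for every ε > 0 there exist a probability space (Ω, 𝒜, μ) and a random subgraph X : Ω → 2^{E_G} of G such that X(x) has no infinite path for any x ∈ Ω, yet μ(X_e) > 1 − ε for every edge e ∈ E_G. -/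
open MeasureTheory
open scoped ENNReal

theorem stmt8 {V : Type} [Countable V] (E : V → V → Prop) (c : V → V → ℕ)
    (hc : ∀ f : ℕ → V, (∀ k, E (f k) (f (k + 1))) →
      {n : ℕ | ∀ k, c (f k) (f (k + 1)) ≠ n}.Finite)
    (ε : ℝ) (hε : 0 < ε) :
    ∃ (Ω : Type) (_ : MeasurableSpace Ω) (μ : Measure Ω), IsProbabilityMeasure μ ∧
      ∃ X : Ω → V → V → Prop,
        (∀ x a b, X x a b → E a b) ∧
        (∀ a b, E a b → MeasurableSet {x | X x a b}) ∧
        (∀ x, ¬ ∃ f : ℕ → V, ∀ k, X x (f k) (f (k + 1))) ∧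
        (∀ a b, E a b → ENNReal.ofReal (1 - ε) < μ {x | X x a b}) := by
  set K : ℕ := ⌈1/ε⌉₊ + 1 with hKdef
  have hK2 : 2 ≤ K := by
    have : 1 ≤ ⌈1/ε⌉₊ := Nat.one_le_ceil_iff.mpr (by positivity)
    omega
  have hKpos : (0:ℝ) < K := by positivity
  have hKε : 1/(K:ℝ) < ε := by
    rw [div_lt_iff₀ hKpos]
    have h1 : 1/ε < K := by
      calc 1/ε ≤ ⌈1/ε⌉₊ := Nat.le_ceil _
      _ < K := by exact_mod_cast Nat.lt_succ_self _
    calc (1:ℝ) = ε * (1/ε) := by field_simp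
    _ < ε * K := by exact mul_lt_mul_of_pos_left h1 hε
  refine ⟨Fin K, ⊤, (K : ℝ≥0∞)⁻¹ • Measure.count, ?_, ?_⟩
  · constructor
    rw [Measure.smul_apply, Measure.count_apply_finite' (Set.toFinite _) MeasurableSpace.measurableSet_top]
    simp [ENNReal.inv_mul_cancel (by exact_mod_cast (by omega : K ≠ 0))
      (by simp : (K:ℝ≥0∞) ≠ ⊤)]
  refine ⟨fun x a b => E a b ∧ (c a b) % K ≠ x.val, fun x a b h => h.1,
    fun a b _ => trivial, ?_, ?_⟩
  · rintro x ⟨f, hf⟩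
    have hpath : ∀ k, E (f k) (f (k + 1)) := fun k => (hf k).1
    have hfin := hc f hpath
    have hsub : {n : ℕ | n % K = x.val} ⊆ {n : ℕ | ∀ k, c (f k) (f (k + 1)) ≠ n} := by
      intro n hn k hceq
      exact (hf k).2 (hceq ▸ hn)
    have hinf : {n : ℕ | n % K = x.val}.Infinite := by
      refine Set.infinite_of_injective_forall_mem (f := fun m : ℕ => x.val + m * K) ?_ ?_
      · intro m m' h
        simp only at h
        have : K ≠ 0 := by omega
        have h2 : m * K = m' * K := by omega
        exact Nat.eq_of_mul_eq_mul_right (by omega) h2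
      · intro m
        simp [Nat.add_mul_mod_self_right, Nat.mod_eq_of_lt x.isLt]
    exact hinf (hfin.subset hsub)
  · intro a b hab
    have hset : {x : Fin K | E a b ∧ (c a b) % K ≠ x.val} = {x : Fin K | x ≠ ⟨c a b % K, Nat.mod_lt _ (by omega)⟩} := by
      ext x
      simp only [Set.mem_setOf_eq, hab, true_and, Fin.ne_iff_vne]
      exact ⟨fun h => fun h2 => h h2.symm, fun h h2 => h h2.symm⟩
    rw [Measure.smul_apply, hset,
      Measure.count_apply_finite' (Set.toFinite _) MeasurableSpace.measurableSet_top]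
    have hcard : ({x : Fin K | x ≠ ⟨c a b % K, Nat.mod_lt _ (by omega)⟩}).toFinite.toFinset.card = K - 1 := by
      rw [Set.Finite.card_toFinset]
      simp [Finset.filter_ne', Finset.card_erase_of_mem]
    rw [hcard]
    have hval : ((K:ℝ≥0∞))⁻¹ * ((K - 1 : ℕ) : ℝ≥0∞) = ENNReal.ofReal ((K - 1 : ℕ) / K) := by
      rw [ENNReal.ofReal_div_of_pos hKpos, ENNReal.ofReal_natCast, ENNReal.ofReal_natCast,
        ENNReal.div_eq_inv_mul]
    rw [smul_eq_mul, hval]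
    rw [ENNReal.ofReal_lt_ofReal_iff
      (div_pos (by exact_mod_cast (by omega : 0 < K - 1)) hKpos)]
    have : ((K - 1 : ℕ):ℝ) = (K:ℝ) - 1 := by
      have : 1 ≤ K := by omega
      push_cast [this]; ring
    rw [this]
    rw [sub_div, div_self (ne_of_gt hKpos)]
    linarith
end

section
/- Let F and G be countable directed graphs, (Ω, 𝒜, μ) a probability space, and X : Ω → 2^{E_G} a random subgraph of G. Define the relative capacity c(F,G) = sup over Borel probability measures m on V_F^{V_G} of inf over (i,j) ∈ E_G of m({u : (u(i),u(j)) ∈ E_F}). If inf_{e ∈ E_G} μ(X_e) > c(F,G), then the set P = {x ∈ Ω : there is no graph morphism from X(x) to F} has positive measure (with respect to the μ-completion). -/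
open MeasureTheory
open scoped ENNReal

namespace Stmt9Aux

variable {Ω : Type*} [MeasurableSpace Ω]

lemma hull_diff_null (μ : Measure Ω) [IsFiniteMeasure μ] (s B : Set Ω)
    (hB : MeasurableSet B) (hsB : s ⊆ B) : μ (toMeasurable μ s \ B) = 0 := by
  have h1 : μ (toMeasurable μ s ∩ B) = μ (toMeasurable μ s) := by
    refine le_antisymm (measure_mono Set.inter_subset_left) ?_
    rw [measure_toMeasurable]
    exact measure_mono (Set.subset_inter (subset_toMeasurable μ s) hsB)
  have h2 : toMeasurable μ s \ B = toMeasurable μ s \ (toMeasurable μ s ∩ B) := by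
    rw [Set.diff_self_inter]
  rw [h2, measure_diff Set.inter_subset_left ((measurableSet_toMeasurable μ s).inter hB).nullMeasurableSet (measure_ne_top μ _), h1, tsub_self]

variable {VF : Type} [Countable VF] [MeasurableSpace VF] [DiscreteMeasurableSpace VF]

section

variable (μ : Measure Ω) (EF : VF → VF → Prop) (Y : Ω → ℕ → ℕ → Prop) (f : ℕ → VF)

/-- The set of `x` such that some morphism of `Y x` into `EF` has prefix `w`. -/
def E (w : List VF) : Set Ω :=
  {x | ∃ u : ℕ → VF, (∀ k, k < w.length → u k = w.getD k (f 0)) ∧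
    ∀ i j, Y x i j → EF (u i) (u j)}

/-- Measurable hull of `E`. -/
def H (w : List VF) : Set Ω := toMeasurable μ (E EF Y f w)

/-- `w` is a partial morphism at `x`. -/
def Q (w : List VF) : Set Ω :=
  {x | ∀ i, i < w.length → ∀ j, j < w.length → Y x i j →
    EF (w.getD i (f 0)) (w.getD j (f 0))}

open scoped Classical in
noncomputable def nxtIdx (x : Ω) (w : List VF) : ℕ :=
  if h : ∃ k, x ∈ H μ EF Y f (w ++ [f k]) then Nat.find h else 0

noncomputable def L (x : Ω) : ℕ → List VF
  | 0 => []
  | n + 1 => L x n ++ [f (nxtIdx μ EF Y f x (L x n))]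

noncomputable def Phi (x : Ω) (n : ℕ) : VF := (L μ EF Y f x (n + 1)).getD n (f 0)

def Bad : Set Ω :=
  ⋃ w : List VF, ((H μ EF Y f w \ Q EF Y f w) ∪
    (H μ EF Y f w \ ⋃ v : VF, H μ EF Y f (w ++ [v])))

end

variable {μ : Measure Ω} {EF : VF → VF → Prop} {Y : Ω → ℕ → ℕ → Prop} {f : ℕ → VF}

lemma measurableSet_H (w : List VF) : MeasurableSet (H μ EF Y f w) :=
  measurableSet_toMeasurable μ _

lemma measurableSet_Q (hY : ∀ i j, MeasurableSet {x | Y x i j}) (w : List VF) :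
    MeasurableSet (Q EF Y f w) := by
  have h : Q EF Y f w = ⋂ (i : ℕ) (_ : i < w.length) (j : ℕ) (_ : j < w.length),
      {x | Y x i j → EF (w.getD i (f 0)) (w.getD j (f 0))} := by
    ext x
    simp only [Q, Set.mem_setOf_eq, Set.mem_iInter]
  rw [h]
  refine MeasurableSet.iInter fun i => MeasurableSet.iInter fun _ =>
    MeasurableSet.iInter fun j => MeasurableSet.iInter fun _ => ?_
  by_cases hEF : EF (w.getD i (f 0)) (w.getD j (f 0))
  · have h2 : {x | Y x i j → EF (w.getD i (f 0)) (w.getD j (f 0))} = Set.univ :=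
      Set.eq_univ_of_forall fun x _ => hEF
    rw [h2]; exact MeasurableSet.univ
  · have h2 : {x | Y x i j → EF (w.getD i (f 0)) (w.getD j (f 0))} = {x | Y x i j}ᶜ := by
      ext x
      exact ⟨fun h3 h4 => hEF (h3 h4), fun h3 h4 => absurd h4 h3⟩
    rw [h2]; exact (hY i j).compl

lemma E_subset_Q (w : List VF) : E EF Y f w ⊆ Q EF Y f w := by
  rintro x ⟨u, hu, hmor⟩ i hi j hj hYij
  rw [← hu i hi, ← hu j hj]
  exact hmor i j hYij

lemma E_subset_iUnion (w : List VF) : E EF Y f w ⊆ ⋃ v : VF, E EF Y f (w ++ [v]) := by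
  rintro x ⟨u, hu, hmor⟩
  refine Set.mem_iUnion.2 ⟨u w.length, u, fun k hk => ?_, hmor⟩
  rw [List.length_append, List.length_singleton] at hk
  rcases Nat.lt_succ_iff_lt_or_eq.mp hk with h | h
  · rw [List.getD_append _ _ _ _ h]
    exact hu k h
  · subst h
    rw [List.getD_append_right _ _ _ _ (le_refl _), Nat.sub_self]
    rfl

lemma measurableSet_Bad (hY : ∀ i j, MeasurableSet {x | Y x i j}) :
    MeasurableSet (Bad μ EF Y f) :=
  MeasurableSet.iUnion fun w =>
    (((measurableSet_H w).diff (measurableSet_Q hY w)).union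
      ((measurableSet_H w).diff (MeasurableSet.iUnion fun v => measurableSet_H _)))

lemma measure_Bad_null [IsFiniteMeasure μ] (hY : ∀ i j, MeasurableSet {x | Y x i j}) :
    μ (Bad μ EF Y f) = 0 := by
  refine measure_iUnion_null fun w => measure_union_null ?_ ?_
  · exact hull_diff_null μ _ _ (measurableSet_Q hY w) (E_subset_Q w)
  · refine hull_diff_null μ _ _ (MeasurableSet.iUnion fun v => measurableSet_H _) ?_
    exact (E_subset_iUnion w).trans
      (Set.iUnion_mono fun v => subset_toMeasurable μ _)

lemma L_length (x : Ω) (n : ℕ) : (L μ EF Y f x n).length = n := by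
  induction n with
  | zero => simp [L]
  | succ n ih => simp [L, ih]

lemma mem_H_L (hf : Function.Surjective f) (x : Ω) (hx : x ∉ Bad μ EF Y f)
    (hx0 : x ∈ E EF Y f []) : ∀ n, x ∈ H μ EF Y f (L μ EF Y f x n) := by
  classical
  intro n
  induction n with
  | zero => exact subset_toMeasurable μ _ hx0
  | succ n ih =>
    have hnot : x ∉ (H μ EF Y f (L μ EF Y f x n) \ Q EF Y f (L μ EF Y f x n)) ∪
        (H μ EF Y f (L μ EF Y f x n) \ ⋃ v : VF, H μ EF Y f (L μ EF Y f x n ++ [v])) :=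
      fun h => hx (Set.mem_iUnion.2 ⟨L μ EF Y f x n, h⟩)
    have hxu : x ∈ ⋃ v : VF, H μ EF Y f (L μ EF Y f x n ++ [v]) := by
      by_contra hc
      exact hnot (Or.inr ⟨ih, hc⟩)
    obtain ⟨v, hv⟩ := Set.mem_iUnion.1 hxu
    obtain ⟨k, rfl⟩ := hf v
    have hex : ∃ k, x ∈ H μ EF Y f (L μ EF Y f x n ++ [f k]) := ⟨k, hv⟩
    show x ∈ H μ EF Y f (L μ EF Y f x n ++ [f (nxtIdx μ EF Y f x (L μ EF Y f x n))])
    rw [nxtIdx, dif_pos hex]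
    exact Nat.find_spec hex

lemma mem_Q_L (hf : Function.Surjective f) (x : Ω) (hx : x ∉ Bad μ EF Y f)
    (hx0 : x ∈ E EF Y f []) : ∀ n, x ∈ Q EF Y f (L μ EF Y f x n) := by
  intro n
  have hH := mem_H_L hf x hx hx0 n
  by_contra hc
  exact hx (Set.mem_iUnion.2 ⟨L μ EF Y f x n, Or.inl ⟨hH, hc⟩⟩)

lemma L_prefix (x : Ω) {n m : ℕ} (h : n ≤ m) :
    L μ EF Y f x n <+: L μ EF Y f x m := by
  induction m with
  | zero =>
    obtain rfl := Nat.le_zero.mp h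
    exact List.prefix_rfl
  | succ m ih =>
    rcases Nat.lt_succ_iff_lt_or_eq.mp (Nat.lt_succ_of_le h) with h' | h'
    · exact (ih (Nat.lt_succ_iff.mp h')).trans ⟨_, rfl⟩
    · subst h'
      exact List.prefix_rfl

lemma Phi_eq (x : Ω) {k n : ℕ} (hk : k < n) :
    Phi μ EF Y f x k = (L μ EF Y f x n).getD k (f 0) := by
  obtain ⟨t, ht⟩ := L_prefix (μ := μ) (EF := EF) (Y := Y) (f := f) x (show k + 1 ≤ n from hk)
  rw [Phi, ← ht, List.getD_append]
  rw [L_length]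
  omega

lemma morph (hf : Function.Surjective f) (x : Ω) (hx : x ∉ Bad μ EF Y f)
    (hx0 : x ∈ E EF Y f []) :
    ∀ i j, Y x i j → EF (Phi μ EF Y f x i) (Phi μ EF Y f x j) := by
  intro i j hij
  have hQ := mem_Q_L hf x hx hx0 (max i j + 1)
  have hi : i < max i j + 1 := by omega
  have hj : j < max i j + 1 := by omega
  have := hQ i (by rw [L_length]; omega) j (by rw [L_length]; omega) hij
  rw [Phi_eq x hi, Phi_eq x hj]
  exact this

lemma measurable_nxtIdx (w : List VF) : Measurable fun x => nxtIdx μ EF Y f x w := by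
  classical
  apply measurable_to_countable'
  intro k
  set A : ℕ → Set Ω := fun j => H μ EF Y f (w ++ [f j]) with hA
  have hAm : ∀ j, MeasurableSet (A j) := fun j => measurableSet_H _
  have heq : (fun x => nxtIdx μ EF Y f x w) ⁻¹' {k} =
      (A k ∩ ⋂ (j : ℕ) (_ : j < k), (A j)ᶜ) ∪ ((⋂ j : ℕ, (A j)ᶜ) ∩ {_x : Ω | k = 0}) := by
    ext x
    simp only [Set.mem_preimage, Set.mem_singleton_iff, Set.mem_union, Set.mem_inter_iff,
      Set.mem_iInter, Set.mem_compl_iff, Set.mem_setOf_eq]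
    by_cases h : ∃ j, x ∈ A j
    · rw [nxtIdx, dif_pos h]
      constructor
      · intro hfind
        left
        rw [Nat.find_eq_iff h] at hfind
        exact ⟨hfind.1, fun j hj => hfind.2 j hj⟩
      · rintro (⟨h1, h2⟩ | ⟨h1, _⟩)
        · rw [Nat.find_eq_iff h]
          exact ⟨h1, fun j hj => h2 j hj⟩
        · obtain ⟨j, hj⟩ := h
          exact absurd hj (h1 j)
    · rw [nxtIdx, dif_neg h]
      push_neg at h
      constructor
      · intro hk
        exact Or.inr ⟨h, hk.symm⟩
      · rintro (⟨h1, _⟩ | ⟨_, h2⟩)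
        · exact absurd h1 (h _)
        · exact h2.symm
  rw [heq]
  refine MeasurableSet.union ?_ ?_
  · exact (hAm k).inter (MeasurableSet.iInter fun j => MeasurableSet.iInter fun _ => (hAm j).compl)
  · exact (MeasurableSet.iInter fun j => (hAm j).compl).inter (MeasurableSet.const _)

lemma measurableSet_L_fiber : ∀ (n : ℕ) (w : List VF),
    MeasurableSet {x | L μ EF Y f x n = w} := by
  intro n
  induction n with
  | zero =>
    intro w
    have : {x : Ω | L μ EF Y f x 0 = w} = {_x : Ω | ([] : List VF) = w} := rfl
    rw [this]
    exact MeasurableSet.const _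
  | succ n ih =>
    intro w
    have heq : {x | L μ EF Y f x (n + 1) = w} =
        ⋃ w' : List VF, ({x | L μ EF Y f x n = w'} ∩
          ((fun x => nxtIdx μ EF Y f x w') ⁻¹' {k | w' ++ [f k] = w})) := by
      ext x
      simp only [Set.mem_setOf_eq, Set.mem_iUnion, Set.mem_inter_iff, Set.mem_preimage]
      constructor
      · intro h
        exact ⟨L μ EF Y f x n, rfl, h⟩
      · rintro ⟨w', h1, h2⟩
        show L μ EF Y f x n ++ [f (nxtIdx μ EF Y f x (L μ EF Y f x n))] = w
        rw [h1]
        exact h2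
    rw [heq]
    refine MeasurableSet.iUnion fun w' => (ih w').inter ?_
    exact measurable_nxtIdx w' (MeasurableSet.of_discrete)

lemma measurable_Phi (n : ℕ) : Measurable fun x => Phi μ EF Y f x n := by
  apply measurable_to_countable'
  intro v
  have heq : (fun x => Phi μ EF Y f x n) ⁻¹' {v} =
      ⋃ (w : List VF) (_ : w.getD n (f 0) = v), {x | L μ EF Y f x (n + 1) = w} := by
    ext x
    simp only [Set.mem_preimage, Set.mem_singleton_iff, Set.mem_iUnion, Set.mem_setOf_eq]
    constructor
    · intro h
      exact ⟨L μ EF Y f x (n + 1), h, rfl⟩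
    · rintro ⟨w, h1, h2⟩
      rw [Phi, h2, h1]
  rw [heq]
  exact MeasurableSet.iUnion fun w => MeasurableSet.iUnion fun _ => measurableSet_L_fiber _ _

end Stmt9Aux

theorem stmt9 {VF VG : Type} [Countable VF] [Countable VG]
    [MeasurableSpace VF] [DiscreteMeasurableSpace VF]
    (EF : VF → VF → Prop) (EG : VG → VG → Prop)
    {Ω : Type*} [MeasurableSpace Ω] (μ : Measure Ω) [IsProbabilityMeasure μ]
    (X : Ω → VG → VG → Prop) (hsub : ∀ x a b, X x a b → EG a b)
    (hmeas : ∀ a b, MeasurableSet {x | X x a b})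
    (hinf : (⨆ (m : Measure (VG → VF)) (_ : IsProbabilityMeasure m),
        ⨅ (e : {q : VG × VG // EG q.1 q.2}), m {u | EF (u e.1.1) (u e.1.2)})
      < ⨅ (e : {q : VG × VG // EG q.1 q.2}), μ {x | X x e.1.1 e.1.2}) :
    0 < μ {x | ¬ ∃ φ : VG → VF, ∀ a b, X x a b → EF (φ a) (φ b)} := by
  by_contra hcon
  have hP : μ {x | ¬ ∃ φ : VG → VF, ∀ a b, X x a b → EF (φ a) (φ b)} = 0 :=
    nonpos_iff_eq_zero.mp (not_lt.mp hcon)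
  rcases isEmpty_or_nonempty VG with hVG | hVG
  · -- VG empty: both sides of hinf are ⊤, contradiction
    haveI : IsEmpty {q : VG × VG // EG q.1 q.2} := ⟨fun q => isEmptyElim q.1.1⟩
    set p : VG → VF := fun a => isEmptyElim a
    haveI hdm : IsProbabilityMeasure (Measure.dirac p) := inferInstance
    have htop : (⊤ : ℝ≥0∞) ≤ ⨆ (m : Measure (VG → VF)) (_ : IsProbabilityMeasure m),
        ⨅ (e : {q : VG × VG // EG q.1 q.2}), m {u | EF (u e.1.1) (u e.1.2)} := by
      refine le_trans ?_ (le_iSup_of_le (Measure.dirac p) (le_iSup_of_le hdm le_rfl))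
      rw [iInf_of_empty]
    exact absurd (lt_of_lt_of_le hinf le_top) (not_lt.mpr htop)
  · rcases isEmpty_or_nonempty VF with hVF | hVF
    · -- VF empty, VG nonempty: bad set is everything
      have huniv : {x | ¬ ∃ φ : VG → VF, ∀ a b, X x a b → EF (φ a) (φ b)} = Set.univ := by
        ext x
        simp only [Set.mem_setOf_eq, Set.mem_univ, iff_true]
        rintro ⟨φ, -⟩
        exact isEmptyElim (φ hVG.some)
      rw [huniv, measure_univ] at hP
      exact one_ne_zero hP
    · -- main case
      obtain ⟨g, hg⟩ := exists_surjective_nat VG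
      obtain ⟨f, hf⟩ := exists_surjective_nat VF
      set Y : Ω → ℕ → ℕ → Prop := fun x i j => X x (g i) (g j) with hYdef
      have hY : ∀ i j, MeasurableSet {x | Y x i j} := fun i j => hmeas _ _
      set P : Set Ω := {x | ¬ ∃ φ : VG → VF, ∀ a b, X x a b → EF (φ a) (φ b)} with hPdef
      set N : Set Ω := toMeasurable μ P with hNdef
      have hN0 : μ N = 0 := by rw [hNdef, measure_toMeasurable]; exact hP
      set B : Set Ω := Stmt9Aux.Bad μ EF Y f with hBdef
      have hB0 : μ B = 0 := Stmt9Aux.measure_Bad_null hY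
      have hBm : MeasurableSet B := Stmt9Aux.measurableSet_Bad hY
      set D : Set Ω := N ∪ B with hDdef
      have hDm : MeasurableSet D := (measurableSet_toMeasurable μ P).union hBm
      have hD0 : μ D = 0 := measure_union_null hN0 hB0
      have hgood : ∀ x ∉ D, ∀ i j, Y x i j →
          EF (Stmt9Aux.Phi μ EF Y f x i) (Stmt9Aux.Phi μ EF Y f x j) := by
        intro x hx
        have hxB : x ∉ B := fun h => hx (Or.inr h)
        have hxN : x ∉ N := fun h => hx (Or.inl h)
        have hxP : x ∉ P := fun h => hxN (subset_toMeasurable μ P h)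
        have hx0 : x ∈ Stmt9Aux.E EF Y f [] := by
          obtain ⟨φ, hφ⟩ := not_not.mp hxP
          exact ⟨φ ∘ g, fun k hk => absurd hk (Nat.not_lt_zero k),
            fun i j h => hφ _ _ h⟩
        exact Stmt9Aux.morph hf x hxB hx0
      set s : VG → ℕ := fun a => (hg a).choose with hsdef
      have hgs : ∀ a, g (s a) = a := fun a => (hg a).choose_spec
      set Ψ : Ω → VG → VF := fun x a => Stmt9Aux.Phi μ EF Y f x (s a) with hΨdef
      have hΨ : Measurable Ψ :=
        measurable_pi_lambda _ fun a => Stmt9Aux.measurable_Phi (s a)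
      set m : Measure (VG → VF) := (μ.restrict Dᶜ).map Ψ with hmdef
      haveI hrp : IsProbabilityMeasure (μ.restrict Dᶜ) := by
        constructor
        rw [Measure.restrict_apply MeasurableSet.univ, Set.univ_inter,
          measure_compl hDm (measure_ne_top μ D), hD0, measure_univ, tsub_zero]
      haveI hmprob : IsProbabilityMeasure m := Measure.isProbabilityMeasure_map hΨ.aemeasurable
      have hkey : ∀ e : {q : VG × VG // EG q.1 q.2},
          μ {x | X x e.1.1 e.1.2} ≤ m {u | EF (u e.1.1) (u e.1.2)} := by
        rintro ⟨⟨a, b⟩, he⟩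
        have hset : MeasurableSet {u : VG → VF | EF (u a) (u b)} := by
          have : {u : VG → VF | EF (u a) (u b)} =
              (fun u : VG → VF => (u a, u b)) ⁻¹' {p : VF × VF | EF p.1 p.2} := rfl
          rw [this]
          exact ((measurable_pi_apply a).prodMk (measurable_pi_apply b))
            (Set.to_countable _).measurableSet
        rw [hmdef, Measure.map_apply hΨ hset, Measure.restrict_apply (hΨ hset)]
        have hsub2 : {x | X x a b} ∩ Dᶜ ⊆ Ψ ⁻¹' {u : VG → VF | EF (u a) (u b)} ∩ Dᶜ := by
          rintro x ⟨hx1, hx2⟩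
          refine ⟨?_, hx2⟩
          have hYab : Y x (s a) (s b) := by
            show X x (g (s a)) (g (s b))
            rw [hgs, hgs]
            exact hx1
          exact hgood x hx2 (s a) (s b) hYab
        calc μ {x | X x a b} ≤ μ (({x | X x a b} ∩ Dᶜ) ∪ D) := by
              refine measure_mono fun x hx => ?_
              by_cases hxD : x ∈ D
              · exact Or.inr hxD
              · exact Or.inl ⟨hx, hxD⟩
          _ ≤ μ ({x | X x a b} ∩ Dᶜ) + μ D := measure_union_le _ _
          _ = μ ({x | X x a b} ∩ Dᶜ) := by rw [hD0, add_zero]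
          _ ≤ μ (Ψ ⁻¹' {u : VG → VF | EF (u a) (u b)} ∩ Dᶜ) := measure_mono hsub2
      have hfinal : (⨅ (e : {q : VG × VG // EG q.1 q.2}), μ {x | X x e.1.1 e.1.2}) ≤
          ⨆ (m' : Measure (VG → VF)) (_ : IsProbabilityMeasure m'),
            ⨅ (e : {q : VG × VG // EG q.1 q.2}), m' {u | EF (u e.1.1) (u e.1.2)} := by
        refine le_trans ?_ (le_iSup_of_le m (le_iSup_of_le hmprob le_rfl))
        exact le_iInf fun e => le_trans (iInf_le _ e) (hkey e)
      exact absurd hinf (not_lt.mpr hfinal)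
end

section
/- Let F, G be countable directed graphs with F finite, (Ω, 𝒜, μ) a probability space, and X : Ω → 2^{E_G} a random subgraph of G. Then the set Ω₀ = {x ∈ Ω : there exists a graph morphism from X(x) to F} is measurable, and there exists a measurable function φ : Ω₀ → V_F^{V_G} such that for every x ∈ Ω₀, φ(x) is a graph morphism from X(x) to F. -/
open MeasureTheory Function

namespace Stmt10Aux

open Classical in
noncomputable def pick {VF : Type} [Inhabited VF] (P : VF → Prop) : VF :=
  if h : ∃ c, P c then h.choose else default

lemma pick_spec {VF : Type} [Inhabited VF] {P : VF → Prop} (h : ∃ c, P c) : P (pick P) := by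
  rw [pick, dif_pos h]
  exact h.choose_spec

noncomputable def hist {VF : Type} [Inhabited VF] (G : ℕ → (ℕ → VF) → VF → Prop) : ℕ → ℕ → VF
  | 0 => fun _ => default
  | n + 1 => Function.update (hist G n) n (pick (G n (hist G n)))

lemma hist_stable {VF : Type} [Inhabited VF] (G : ℕ → (ℕ → VF) → VF → Prop) :
    ∀ n i, i < n → hist G n i = hist G (i + 1) i := by
  intro n
  induction n with
  | zero => omega
  | succ n ih =>
    intro i hi
    rcases Nat.lt_or_ge i n with h | h
    · rw [hist, Function.update_of_ne (by omega)]
      exact ih i h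
    · have : i = n := by omega
      subst this
      rfl

lemma hist_ge {VF : Type} [Inhabited VF] (G : ℕ → (ℕ → VF) → VF → Prop) :
    ∀ n i, n ≤ i → hist G n i = default := by
  intro n
  induction n with
  | zero => intro i _; rfl
  | succ n ih =>
    intro i hi
    rw [hist, Function.update_of_ne (by omega)]
    exact ih i (by omega)

/-- Compactness: a system of binary constraints over a finite alphabet is satisfiable
iff it is finitely satisfiable. -/
lemma keyA {VF VG : Type} [Finite VF] (P : VG → VG → VF → VF → Prop)
    (h : ∀ S : Finset VG, ∃ φ : VG → VF, ∀ a ∈ S, ∀ b ∈ S, P a b (φ a) (φ b)) :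
    ∃ φ : VG → VF, ∀ a b, P a b (φ a) (φ b) := by
  classical
  letI : TopologicalSpace VF := ⊥
  haveI : DiscreteTopology VF := ⟨rfl⟩
  haveI : Nonempty (Finset VG) := ⟨∅⟩
  set K : Finset VG → Set (VG → VF) :=
    fun S => {φ | ∀ a ∈ S, ∀ b ∈ S, P a b (φ a) (φ b)} with hK
  have hdir : Directed (fun x1 x2 => x1 ⊇ x2) K := by
    intro S T
    refine ⟨S ∪ T, ?_, ?_⟩
    · intro φ hφ a ha b hb
      exact hφ a (Finset.mem_union_left _ ha) b (Finset.mem_union_left _ hb)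
    · intro φ hφ a ha b hb
      exact hφ a (Finset.mem_union_right _ ha) b (Finset.mem_union_right _ hb)
  have hne : ∀ S, (K S).Nonempty := by
    intro S
    obtain ⟨φ, hφ⟩ := h S
    exact ⟨φ, hφ⟩
  have hclosed : ∀ S, IsClosed (K S) := by
    intro S
    have : K S = ⋂ a ∈ S, ⋂ b ∈ S, {φ : VG → VF | P a b (φ a) (φ b)} := by
      ext φ; simp [hK]
    rw [this]
    refine isClosed_biInter fun a _ => isClosed_biInter fun b _ => ?_
    have h2 : {φ : VG → VF | P a b (φ a) (φ b)} =
        (fun φ : VG → VF => (φ a, φ b)) ⁻¹' {p : VF × VF | P a b p.1 p.2} := rfl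
    rw [h2]
    exact (isClosed_discrete _).preimage ((continuous_apply a).prodMk (continuous_apply b))
  have hcompact : ∀ S, IsCompact (K S) := fun S => (hclosed S).isCompact
  obtain ⟨φ, hφ⟩ := IsCompact.nonempty_iInter_of_directed_nonempty_isCompact_isClosed
    K hdir hne hcompact hclosed
  refine ⟨φ, fun a b => ?_⟩
  have := Set.mem_iInter.mp hφ {a, b}
  exact this a (by simp) b (by simp)

/-- Measurability of the event that a homomorphism with unary side constraints exists. -/
lemma keyC {VF VG : Type} [Fintype VF] [Countable VG] [Inhabited VF]
    {Ω : Type*} [MeasurableSpace Ω]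
    (EF : VF → VF → Prop) (X : Ω → VG → VG → Prop)
    (hmeas : ∀ a b, MeasurableSet {x | X x a b}) (Q : VG → VF → Prop) :
    MeasurableSet {x | ∃ φ : VG → VF, (∀ a b, X x a b → EF (φ a) (φ b)) ∧ ∀ a, Q a (φ a)} := by
  classical
  have key : {x | ∃ φ : VG → VF, (∀ a b, X x a b → EF (φ a) (φ b)) ∧ ∀ a, Q a (φ a)} =
      ⋂ S : Finset VG, {x | ∃ ψ : S → VF,
        (∀ a b : S, X x a.1 b.1 → EF (ψ a) (ψ b)) ∧ ∀ a : S, Q a.1 (ψ a)} := by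
    ext x
    simp only [Set.mem_setOf_eq, Set.mem_iInter]
    constructor
    · rintro ⟨φ, hφ, hQ⟩ S
      exact ⟨fun a => φ a.1, fun a b h => hφ a.1 b.1 h, fun a => hQ a.1⟩
    · intro hS
      have := keyA (VG := VG)
        (fun a b u v => (X x a b → EF u v) ∧ Q a u ∧ Q b v) ?_
      · obtain ⟨φ, hφ⟩ := this
        exact ⟨φ, fun a b h => (hφ a b).1 h, fun a => (hφ a a).2.1⟩
      · intro S
        obtain ⟨ψ, hψ1, hψ2⟩ := hS S
        refine ⟨fun v => if h : v ∈ S then ψ ⟨v, h⟩ else default, fun a ha b hb => ?_⟩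
        simp only [dif_pos ha, dif_pos hb]
        exact ⟨fun h => hψ1 ⟨a, ha⟩ ⟨b, hb⟩ h, hψ2 ⟨a, ha⟩, hψ2 ⟨b, hb⟩⟩
  rw [key]
  refine MeasurableSet.iInter fun S => ?_
  have : {x : Ω | ∃ ψ : S → VF,
      (∀ a b : S, X x a.1 b.1 → EF (ψ a) (ψ b)) ∧ ∀ a : S, Q a.1 (ψ a)} =
      ⋃ ψ : S → VF, ((⋂ a : S, ⋂ b : S, {x | X x a.1 b.1 → EF (ψ a) (ψ b)}) ∩
        {x | ∀ a : S, Q a.1 (ψ a)}) := by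
    ext x
    simp only [Set.mem_setOf_eq, Set.mem_iUnion, Set.mem_inter_iff, Set.mem_iInter]
  rw [this]
  refine MeasurableSet.iUnion fun ψ => ?_
  refine MeasurableSet.inter ?_ (MeasurableSet.const _)
  refine MeasurableSet.iInter fun a => MeasurableSet.iInter fun b => ?_
  have : {x : Ω | X x a.1 b.1 → EF (ψ a) (ψ b)} =
      {x | X x a.1 b.1}ᶜ ∪ {_x | EF (ψ a) (ψ b)} := by
    ext x; simp [imp_iff_not_or]
  rw [this]
  exact (hmeas a.1 b.1).compl.union (MeasurableSet.const _)

end Stmt10Aux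

open Stmt10Aux

theorem stmt10 {VF VG : Type} [Fintype VF] [Countable VG]
    [MeasurableSpace VF] [DiscreteMeasurableSpace VF]
    (EF : VF → VF → Prop) (EG : VG → VG → Prop)
    {Ω : Type*} [MeasurableSpace Ω]
    (X : Ω → VG → VG → Prop) (hsub : ∀ x a b, X x a b → EG a b)
    (hmeas : ∀ a b, MeasurableSet {x | X x a b}) :
    MeasurableSet {x | ∃ φ : VG → VF, ∀ a b, X x a b → EF (φ a) (φ b)} ∧
    ∃ φ : {x : Ω // ∃ f : VG → VF, ∀ a b, X x a b → EF (f a) (f b)} → VG → VF,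
      Measurable φ ∧ ∀ x, ∀ a b, X x.1 a b → EF (φ x a) (φ x b) := by
  classical
  by_cases hVG : Nonempty VG
  case neg =>
    haveI : IsEmpty VG := not_nonempty_iff.mp hVG
    constructor
    · have : {x | ∃ φ : VG → VF, ∀ a b, X x a b → EF (φ a) (φ b)} = Set.univ := by
        ext x
        simp only [Set.mem_setOf_eq, Set.mem_univ, iff_true]
        exact ⟨isEmptyElim, fun a => isEmptyElim a⟩
      rw [this]; exact MeasurableSet.univ
    · refine ⟨fun _ => isEmptyElim, ?_, ?_⟩
      · rw [measurable_pi_iff]; exact fun a => isEmptyElim a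
      · exact fun x a => isEmptyElim a
  by_cases hVF : Nonempty VF
  case neg =>
    haveI : IsEmpty VF := not_nonempty_iff.mp hVF
    obtain ⟨v0⟩ := hVG
    have hempty : ∀ x : Ω, ¬ ∃ φ : VG → VF, ∀ a b, X x a b → EF (φ a) (φ b) := by
      rintro x ⟨φ, -⟩
      exact IsEmpty.false (φ v0)
    constructor
    · have : {x | ∃ φ : VG → VF, ∀ a b, X x a b → EF (φ a) (φ b)} = ∅ := by
        ext x
        simp only [Set.mem_setOf_eq, Set.mem_empty_iff_false, iff_false]
        exact hempty x
      rw [this]; exact MeasurableSet.empty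
    · haveI : IsEmpty {x : Ω // ∃ f : VG → VF, ∀ a b, X x a b → EF (f a) (f b)} :=
        ⟨fun x => hempty x.1 x.2⟩
      exact ⟨fun x => isEmptyElim x, measurable_of_empty _, fun x => isEmptyElim x⟩
  -- main case
  haveI := hVF
  inhabit VF
  obtain ⟨u, hu⟩ := exists_surjective_nat VG
  set G : Ω → ℕ → (ℕ → VF) → VF → Prop := fun x n p c =>
    ∃ φ : VG → VF, (∀ a b, X x a b → EF (φ a) (φ b)) ∧ (∀ i < n, φ (u i) = p i) ∧ φ (u n) = c
    with hG
  -- index of a vertex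
  have hnv : ∀ v : VG, ∃ n, u n = v := hu
  set nv : VG → ℕ := fun v => (hnv v).choose with hnvdef
  have hnv' : ∀ v, u (nv v) = v := fun v => (hnv v).choose_spec
  -- invariant
  have inv : ∀ x : Ω, (∃ φ : VG → VF, ∀ a b, X x a b → EF (φ a) (φ b)) → ∀ n,
      ∃ φ : VG → VF, (∀ a b, X x a b → EF (φ a) (φ b)) ∧ ∀ i < n, φ (u i) = hist (G x) n i := by
    intro x hx n
    induction n with
    | zero =>
      obtain ⟨φ, hφ⟩ := hx
      exact ⟨φ, hφ, by omega⟩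
    | succ n ih =>
      obtain ⟨φ, hφ, hagree⟩ := ih
      have hGx : ∃ c, G x n (hist (G x) n) c := ⟨φ (u n), φ, hφ, hagree, rfl⟩
      obtain ⟨φ', hφ', hagree', heq⟩ := pick_spec hGx
      refine ⟨φ', hφ', fun i hi => ?_⟩
      rcases Nat.lt_or_ge i n with h | h
      · rw [hist, Function.update_of_ne (by omega)]
        exact hagree' i h
      · have : i = n := by omega
        subst this
        rw [hist, Function.update_self]
        exact heq
  -- the selector
  refine ⟨?_, fun x v => hist (G x.1) (nv v + 1) (nv v), ?_, ?_⟩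
  · -- measurability of the event
    have : {x | ∃ φ : VG → VF, ∀ a b, X x a b → EF (φ a) (φ b)} =
        {x | ∃ φ : VG → VF, (∀ a b, X x a b → EF (φ a) (φ b)) ∧
          ∀ a, (fun (_ : VG) (_ : VF) => True) a (φ a)} := by
      simp
    rw [this]
    exact keyC EF X hmeas fun _ _ => True
  · -- measurability of the selector
    have main : ∀ n i, Measurable fun x : Ω => hist (G x) n i := by
      intro n
      induction n with
      | zero => intro i; exact measurable_const
      | succ n ih =>
        intro i
        rcases eq_or_ne n i with rfl | hne
        · -- the interesting coordinate
          have histep : (fun x : Ω => hist (G x) (n + 1) n) =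
              fun x => pick (G x n (hist (G x) n)) := by
            funext x
            rw [hist, Function.update_self]
          rw [histep]
          letI : MeasurableSpace (Set VF) := ⊤
          haveI : MeasurableSingletonClass (Set VF) := ⟨fun _ => trivial⟩
          set T : Ω → Set VF := fun x => {c | G x n (hist (G x) n) c} with hT
          have hTfact : (fun x : Ω => pick (G x n (hist (G x) n))) =
              (fun s : Set VF => pick (· ∈ s)) ∘ T := by
            funext x; rfl
          rw [hTfact]
          refine Measurable.comp measurable_from_top ?_
          -- measurable events for fixed candidate value
          have hE : ∀ c : VF, MeasurableSet {x : Ω | G x n (hist (G x) n) c} := by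
            intro c
            -- partition by the values of hist at indices < n
            have hpart : {x : Ω | G x n (hist (G x) n) c} =
                ⋃ q : Fin n → VF,
                  ((⋂ j : Fin n, {x : Ω | hist (G x) n j.1 = q j}) ∩
                   {x : Ω | G x n (fun i => if h : i < n then q ⟨i, h⟩ else default) c}) := by
              ext x
              simp only [Set.mem_setOf_eq, Set.mem_iUnion, Set.mem_inter_iff, Set.mem_iInter]
              constructor
              · intro hx
                refine ⟨fun j => hist (G x) n j.1, fun j => rfl, ?_⟩
                have : (fun i => if h : i < n then hist (G x) n i else default) =
                    hist (G x) n := by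
                  funext i
                  split
                  · rfl
                  · rw [hist_ge (G x) n i (by omega)]
                rw [this]
                exact hx
              · rintro ⟨q, hq, hx⟩
                have : (fun i => if h : i < n then q ⟨i, h⟩ else default) =
                    hist (G x) n := by
                  funext i
                  split
                  case isTrue h => rw [← hq ⟨i, h⟩]
                  case isFalse h => rw [hist_ge (G x) n i (by omega)]
                rw [← this]
                exact hx
            rw [hpart]
            refine MeasurableSet.iUnion fun q => MeasurableSet.inter ?_ ?_
            · refine MeasurableSet.iInter fun j => ?_
              exact ih j.1 (MeasurableSet.of_discrete (s := {q j}))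
            · -- measurability of G with fixed prefix, via keyC
              set p0 : ℕ → VF := fun i => if h : i < n then q ⟨i, h⟩ else default with hp0
              have : {x : Ω | G x n p0 c} =
                  {x | ∃ φ : VG → VF, (∀ a b, X x a b → EF (φ a) (φ b)) ∧
                    ∀ a, (fun (a : VG) (v : VF) =>
                      ∀ i ≤ n, a = u i → v = if i < n then p0 i else c) a (φ a)} := by
                ext x
                simp only [Set.mem_setOf_eq, hG]
                constructor
                · rintro ⟨φ, hφ, hp, hc⟩
                  refine ⟨φ, hφ, fun a i hi hai => ?_⟩
                  subst hai
                  rcases Nat.lt_or_ge i n with h | h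
                  · rw [if_pos h]; exact hp i h
                  · have : i = n := by omega
                    subst this
                    rw [if_neg (by omega)]; exact hc
                · rintro ⟨φ, hφ, hQ⟩
                  refine ⟨φ, hφ, fun i hi => ?_, ?_⟩
                  · have := hQ (u i) i (by omega) rfl
                    rwa [if_pos hi] at this
                  · have := hQ (u n) n le_rfl rfl
                    rwa [if_neg (by omega)] at this
              rw [this]
              exact keyC EF X hmeas fun a v => ∀ i ≤ n, a = u i → v = if i < n then p0 i else c
          refine measurable_to_countable' fun s => ?_
          have : T ⁻¹' {s} = (⋂ c ∈ s, {x : Ω | G x n (hist (G x) n) c}) ∩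
              (⋂ c ∈ sᶜ, {x : Ω | G x n (hist (G x) n) c}ᶜ) := by
            ext x
            simp only [Set.mem_preimage, Set.mem_singleton_iff, Set.mem_inter_iff,
              Set.mem_iInter, Set.mem_compl_iff, Set.mem_setOf_eq, hT]
            constructor
            · rintro rfl
              exact ⟨fun c hc => hc, fun c hc h => hc h⟩
            · rintro ⟨h1, h2⟩
              ext c
              simp only [Set.mem_setOf_eq]
              constructor
              · intro h
                by_contra hc
                exact h2 c hc h
              · exact h1 c
          rw [this]
          refine MeasurableSet.inter ?_ ?_
          · exact MeasurableSet.biInter (Set.to_countable _) fun c _ => hE c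
          · exact MeasurableSet.biInter (Set.to_countable _) fun c _ => (hE c).compl
        · -- trivial coordinate
          have : (fun x : Ω => hist (G x) (n + 1) i) = fun x : Ω => hist (G x) n i := by
            funext x
            rw [hist, Function.update_of_ne (Ne.symm hne)]
          rw [this]
          exact ih i
    rw [measurable_pi_iff]
    intro v
    exact (main (nv v + 1) (nv v)).comp measurable_subtype_coe
  · -- homomorphism property
    rintro ⟨x, hx⟩ a b hX
    set N : ℕ := max (nv a) (nv b) + 1 with hN
    obtain ⟨φ, hφ, hagree⟩ := inv x hx N
    have ha : hist (G x) (nv a + 1) (nv a) = φ a := by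
      have h1 := hagree (nv a) (by omega)
      rw [hnv' a] at h1
      rw [← hist_stable (G x) N (nv a) (by omega)]
      exact h1.symm
    have hb : hist (G x) (nv b + 1) (nv b) = φ b := by
      have h1 := hagree (nv b) (by omega)
      rw [hnv' b] at h1
      rw [← hist_stable (G x) N (nv b) (by omega)]
      exact h1.symm
    simp only [ha, hb]
    exact hφ a b hX
end

section
/- Let F be a finite irreflexive symmetric directed graph with clique number cl(F). Then c₀(F) := sup_{λ∈Σ_F} Σ_{(a,b)∈E_F} λ_a λ_b = 1 − 1/cl(F). In particular c₀(K_p) = 1 − 1/p for the complete graph K_p on p vertices. -/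
open Finset

section MS

variable {V : Type} [Fintype V] [DecidableEq V] (E : V → V → Prop) [DecidableRel E]

private noncomputable def fE (lam : V → ℝ) : ℝ :=
  ∑ a, ∑ b, if E a b then lam a * lam b else 0

private noncomputable def LF (lam : V → ℝ) (a : V) : ℝ :=
  ∑ b, if E a b then lam b else 0

private lemma fE_eq (lam : V → ℝ) : fE E lam = ∑ a, lam a * LF E lam a := by
  simp [fE, LF, Finset.mul_sum, mul_ite, mul_zero]

private lemma shift_sum (lam g : V → ℝ) (i j : V) (t : ℝ) :
    ∑ a, (lam a + (if a = i then t else 0) - (if a = j then t else 0)) * g a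
      = (∑ a, lam a * g a) + t * g i - t * g j := by
  simp [add_mul, sub_mul, Finset.sum_add_distrib, Finset.sum_sub_distrib, ite_mul, zero_mul,
    Finset.sum_ite_eq']

private lemma LF_shift (lam : V → ℝ) (i j : V) (t : ℝ) (a : V) :
    LF E (fun b => lam b + (if b = i then t else 0) - (if b = j then t else 0)) a
      = LF E lam a + t * (if E a i then 1 else 0) - t * (if E a j then 1 else 0) := by
  simp only [LF]
  have h1 : ∀ b, (if E a b then (lam b + (if b = i then t else 0) - (if b = j then t else 0)) else 0)
      = (if E a b then lam b else 0) + (if b = i then (if E a b then t else 0) else 0)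
        - (if b = j then (if E a b then t else 0) else 0) := by
    intro b
    split_ifs <;> simp_all
  rw [Finset.sum_congr rfl fun b _ => h1 b]
  rw [Finset.sum_sub_distrib, Finset.sum_add_distrib, Finset.sum_ite_eq' univ i,
    Finset.sum_ite_eq' univ j]
  simp [mul_ite, mul_one, mul_zero]

private lemma fE_shift (hirr : ∀ a, ¬ E a a) (hsymm : ∀ a b, E a b → E b a)
    (lam : V → ℝ) (i j : V) (hnE : ¬ E i j) (t : ℝ) :
    fE E (fun b => lam b + (if b = i then t else 0) - (if b = j then t else 0))
      = fE E lam + 2 * t * (LF E lam i - LF E lam j) := by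
  have hnE' : ¬ E j i := fun h => hnE (hsymm _ _ h)
  rw [fE_eq]
  have := fun a => LF_shift E lam i j t a
  rw [Finset.sum_congr rfl fun a _ => by rw [this a]]
  have expand : ∀ a : V, (fun b => lam b + (if b = i then t else 0) - (if b = j then t else 0)) a *
      (LF E lam a + t * (if E a i then 1 else 0) - t * (if E a j then 1 else 0))
      = (fun b => lam b + (if b = i then t else 0) - (if b = j then t else 0)) a * LF E lam a
        + (fun b => lam b + (if b = i then t else 0) - (if b = j then t else 0)) a * (fun c => t * (if E c i then 1 else 0)) a
        - (fun b => lam b + (if b = i then t else 0) - (if b = j then t else 0)) a * (fun c => t * (if E c j then 1 else 0)) a := by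
    intro a; ring
  rw [Finset.sum_congr rfl fun a _ => expand a, Finset.sum_sub_distrib, Finset.sum_add_distrib,
    shift_sum, shift_sum, shift_sum]
  have hLi : ∑ a, lam a * (t * (if E a i then 1 else 0)) = t * LF E lam i := by
    rw [LF, Finset.mul_sum]
    refine Finset.sum_congr rfl fun a _ => ?_
    by_cases h : E a i
    · simp [h, hsymm a i h]; ring
    · have : ¬ E i a := fun h' => h (hsymm i a h')
      simp [h, this]
  have hLj : ∑ a, lam a * (t * (if E a j then 1 else 0)) = t * LF E lam j := by
    rw [LF, Finset.mul_sum]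
    refine Finset.sum_congr rfl fun a _ => ?_
    by_cases h : E a j
    · simp [h, hsymm a j h]; ring
    · have : ¬ E j a := fun h' => h (hsymm j a h')
      simp [h, this]
  rw [hLi, hLj, ← fE_eq]
  simp [hirr i, hirr j, hnE, hnE']
  ring

private lemma fE_le_one_sub_sq (lam : V → ℝ) (hirr : ∀ a, ¬ E a a)
    (h0 : ∀ a, 0 ≤ lam a) (h1 : ∑ a, lam a = 1) :
    fE E lam + ∑ a, lam a ^ 2 ≤ 1 := by
  have key : ∀ a b : V, (if E a b then lam a * lam b else 0) + (if b = a then lam a * lam b else 0)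
      ≤ lam a * lam b := by
    intro a b
    have hnn : 0 ≤ lam a * lam b := mul_nonneg (h0 a) (h0 b)
    split_ifs with hE hb hb
    · exact absurd hE (hb ▸ hirr a)
    · linarith
    · linarith
    · linarith
  calc fE E lam + ∑ a, lam a ^ 2
      = ∑ a, ∑ b, ((if E a b then lam a * lam b else 0) + (if b = a then lam a * lam b else 0)) := by
        rw [fE, ← Finset.sum_add_distrib]
        refine Finset.sum_congr rfl fun a _ => ?_
        rw [Finset.sum_add_distrib, Finset.sum_ite_eq' univ a]
        simp [sq]
    _ ≤ ∑ a, ∑ b, lam a * lam b :=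
        Finset.sum_le_sum fun a _ => Finset.sum_le_sum fun b _ => key a b
    _ = 1 := by rw [← Finset.sum_mul_sum, h1]; norm_num

private lemma upper_bound (hirr : ∀ a, ¬ E a a) (hsymm : ∀ a b, E a b → E b a)
    (n : ℕ) (hn : 1 ≤ n)
    (hmax : ∀ s : Finset V, (∀ a ∈ s, ∀ b ∈ s, a ≠ b → E a b) → s.card ≤ n) :
    ∀ k (lam : V → ℝ), (∀ a, 0 ≤ lam a) → ∑ a, lam a = 1 →
      (univ.filter fun a => lam a ≠ 0).card ≤ k → fE E lam ≤ 1 - 1 / (n : ℝ) := by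
  intro k
  induction k with
  | zero =>
    intro lam h0 h1 hc
    exfalso
    have hemp : (univ.filter fun a => lam a ≠ 0) = ∅ := Finset.card_eq_zero.mp (Nat.le_zero.mp hc)
    have hall : ∀ a, lam a = 0 := by
      intro a
      by_contra h
      have ha : a ∈ (univ.filter fun a => lam a ≠ 0) := by simp [h]
      rw [hemp] at ha
      exact absurd ha (Finset.notMem_empty a)
    rw [Finset.sum_congr rfl fun a _ => hall a] at h1
    simp at h1
  | succ k ih =>
    intro lam h0 h1 hc
    set S := (univ.filter fun a => lam a ≠ 0) with hS
    have hSsum : ∑ a ∈ S, lam a = 1 := by rw [hS, Finset.sum_filter_ne_zero, h1]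
    by_cases hcl : ∀ a ∈ S, ∀ b ∈ S, a ≠ b → E a b
    · -- support is a clique
      have hcard : S.card ≤ n := hmax S hcl
      have hSne : S.Nonempty := by
        by_contra h
        rw [Finset.not_nonempty_iff_eq_empty] at h
        rw [h] at hSsum; simp at hSsum
      have hcs : (1 : ℝ) ≤ S.card * ∑ a ∈ S, lam a ^ 2 := by
        have := sq_sum_le_card_mul_sum_sq (s := S) (f := lam)
        rw [hSsum] at this; push_cast at this; linarith
      have hsub : ∑ a ∈ S, lam a ^ 2 ≤ ∑ a, lam a ^ 2 :=
        Finset.sum_le_sum_of_subset_of_nonneg (Finset.subset_univ S)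
          (fun a _ _ => sq_nonneg _)
      have hcardpos : 0 < (S.card : ℝ) := by exact_mod_cast hSne.card_pos
      have hnpos : 0 < (n : ℝ) := by exact_mod_cast hn
      have hsq : 1 / (n : ℝ) ≤ ∑ a, lam a ^ 2 := by
        have hc' : (S.card : ℝ) ≤ n := by exact_mod_cast hcard
        have h2 : (1:ℝ) ≤ n * ∑ a ∈ S, lam a ^ 2 := by
          refine hcs.trans (mul_le_mul_of_nonneg_right hc' ?_)
          exact Finset.sum_nonneg fun a _ => sq_nonneg _
        rw [div_le_iff₀ hnpos] at *
        nlinarith [Finset.sum_nonneg (fun a (_ : a ∈ (univ : Finset V)) => sq_nonneg (lam a))]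
      have := fE_le_one_sub_sq E lam hirr h0 h1
      linarith
    · -- not a clique: shift weight
      push_neg at hcl
      obtain ⟨i₀, hi₀, j₀, hj₀, hij₀, hnE₀⟩ := hcl
      obtain ⟨i, j, hi, hj, hij, hnE, hL⟩ :
          ∃ i j, i ∈ S ∧ j ∈ S ∧ i ≠ j ∧ ¬ E i j ∧ LF E lam j ≤ LF E lam i := by
        rcases le_total (LF E lam j₀) (LF E lam i₀) with h | h
        · exact ⟨i₀, j₀, hi₀, hj₀, hij₀, hnE₀, h⟩
        · exact ⟨j₀, i₀, hj₀, hi₀, hij₀.symm, fun h' => hnE₀ (hsymm _ _ h'), h⟩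
      set t := lam j with ht
      have htpos : 0 < t := by
        rcases lt_or_eq_of_le (h0 j) with h | h
        · exact h
        · exfalso; rw [hS] at hj; simp at hj; exact hj h.symm
      set mu := fun b => lam b + (if b = i then t else 0) - (if b = j then t else 0) with hmu
      have hmusum : ∑ a, mu a = 1 := by
        have := shift_sum lam (fun _ => 1) i j t
        simp only [mul_one] at this
        rw [hmu]; rw [this, h1]; ring
      have hmupos : ∀ a, 0 ≤ mu a := by
        intro a
        rw [hmu]
        by_cases hai : a = i
        · subst hai
          simp [hij]
          linarith [h0 a, htpos.le]
        · by_cases haj : a = j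
          · subst haj; simp [hai, ht]
          · simp [hai, haj]; exact h0 a
      have hmuj : mu j = 0 := by rw [hmu]; simp [hij.symm, ht]
      have hsupp : (univ.filter fun a => mu a ≠ 0) ⊆ S.erase j := by
        intro a ha
        simp only [Finset.mem_filter, Finset.mem_univ, true_and] at ha
        rw [Finset.mem_erase]
        constructor
        · intro h; rw [h] at ha; exact ha hmuj
        · by_cases hai : a = i
          · rw [hai]; exact hi
          · have haj : a ≠ j := fun h => (h ▸ ha) hmuj
            rw [hmu] at ha; simp [hai, haj] at ha
            rw [hS]; simp [ha]
      have hcard' : (univ.filter fun a => mu a ≠ 0).card ≤ k := by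
        have h1' : (S.erase j).card = S.card - 1 := Finset.card_erase_of_mem hj
        have h2' : 1 ≤ S.card := Finset.card_pos.mpr ⟨j, hj⟩
        have := Finset.card_le_card hsupp
        omega
      have hstep := fE_shift E hirr hsymm lam i j hnE t
      have hge : fE E lam ≤ fE E mu := by
        rw [hmu, hstep]
        nlinarith
      exact hge.trans (ih mu hmupos hmusum hcard')

private lemma fE_uniform (hirr : ∀ a, ¬ E a a) (n : ℕ) (hn : 1 ≤ n)
    (s : Finset V) (hcard : s.card = n) (hs : ∀ a ∈ s, ∀ b ∈ s, a ≠ b → E a b) :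
    fE E (fun a => if a ∈ s then ((n : ℝ))⁻¹ else 0) = 1 - 1 / (n : ℝ) := by
  have hnpos : 0 < (n : ℝ) := by exact_mod_cast hn
  have hterm : ∀ a b : V,
      (if E a b then (if a ∈ s then ((n:ℝ))⁻¹ else 0) * (if b ∈ s then ((n:ℝ))⁻¹ else 0) else 0)
        = if a ∈ s ∧ b ∈ s ∧ a ≠ b then ((n:ℝ))⁻¹ * ((n:ℝ))⁻¹ else 0 := by
    intro a b
    by_cases ha : a ∈ s <;> by_cases hb : b ∈ s <;> by_cases hab : a = b
    · subst hab; simp [ha, hirr a]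
    · simp [ha, hb, hab, hs a ha b hb hab]
    all_goals simp_all
  rw [fE, Finset.sum_congr rfl fun a _ => Finset.sum_congr rfl fun b _ => hterm a b]
  have hrow : ∀ a : V, (∑ b, if a ∈ s ∧ b ∈ s ∧ a ≠ b then ((n:ℝ))⁻¹ * ((n:ℝ))⁻¹ else 0)
      = if a ∈ s then (n - 1 : ℝ) * (((n:ℝ))⁻¹ * ((n:ℝ))⁻¹) else 0 := by
    intro a
    by_cases ha : a ∈ s
    · simp only [ha, true_and, if_true]
      rw [Finset.sum_ite, Finset.sum_const_zero, add_zero, Finset.sum_const, nsmul_eq_mul]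
      congr 1
      have : univ.filter (fun b => b ∈ s ∧ a ≠ b) = s.erase a := by
        ext b
        simp only [Finset.mem_filter, Finset.mem_univ, true_and, Finset.mem_erase]
        tauto
      rw [this, Finset.card_erase_of_mem ha, hcard]
      push_cast [Nat.cast_sub hn]
      ring
    · simp [ha]
  rw [Finset.sum_congr rfl fun a _ => hrow a, Finset.sum_ite, Finset.sum_const_zero, add_zero,
    Finset.sum_const, nsmul_eq_mul]
  have : univ.filter (fun a => a ∈ s) = s := by ext a; simp
  rw [this, hcard]
  field_simp

end MS

theorem stmt12 {V : Type} [Fintype V] [Nonempty V] (E : V → V → Prop) [DecidableRel E]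
    (hirr : ∀ a, ¬ E a a) (hsymm : ∀ a b, E a b → E b a)
    (n : ℕ)
    (hclique : ∃ s : Finset V, s.card = n ∧ ∀ a ∈ s, ∀ b ∈ s, a ≠ b → E a b)
    (hmax : ∀ s : Finset V, (∀ a ∈ s, ∀ b ∈ s, a ≠ b → E a b) → s.card ≤ n) :
    (⨆ lam : stdSimplex ℝ V, ∑ a, ∑ b, if E a b then lam.1 a * lam.1 b else 0)
      = 1 - 1 / (n : ℝ) := by
  classical
  obtain ⟨v⟩ := ‹Nonempty V›
  have hn : 1 ≤ n := by
    have := hmax {v} (by intro a ha b hb hab; simp at ha hb; exact absurd (ha.trans hb.symm) hab)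
    simpa using this
  obtain ⟨s, hcard, hs⟩ := hclique
  have hub : ∀ lam : stdSimplex ℝ V,
      (∑ a, ∑ b, if E a b then lam.1 a * lam.1 b else 0) ≤ 1 - 1 / (n : ℝ) := by
    intro lam
    have h := upper_bound E hirr hsymm n hn hmax (Fintype.card V) lam.1
      lam.2.1 lam.2.2 (Finset.card_le_card (Finset.subset_univ _) |>.trans (le_of_eq (Finset.card_univ)))
    exact h
  set u := fun a => if a ∈ s then ((n : ℝ))⁻¹ else 0 with hu_def
  have hnpos : 0 < (n : ℝ) := by exact_mod_cast hn
  have hu : u ∈ stdSimplex ℝ V := by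
    constructor
    · intro x; rw [hu_def]; dsimp only; split <;> positivity
    · rw [hu_def]; dsimp only
      rw [Finset.sum_ite, Finset.sum_const_zero, add_zero, Finset.sum_const, nsmul_eq_mul]
      have : Finset.univ.filter (fun a => a ∈ s) = s := by ext a; simp
      rw [this, hcard]
      field_simp
  haveI : Nonempty (stdSimplex ℝ V) := ⟨⟨u, hu⟩⟩
  have hbdd : BddAbove (Set.range fun lam : stdSimplex ℝ V =>
      ∑ a, ∑ b, if E a b then lam.1 a * lam.1 b else 0) := by
    refine ⟨1 - 1 / (n : ℝ), ?_⟩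
    rintro _ ⟨lam, rfl⟩
    exact hub lam
  apply le_antisymm
  · exact ciSup_le hub
  · calc (1 : ℝ) - 1 / (n : ℝ) = fE E u := (fE_uniform E hirr n hn s hcard hs).symm
      _ = ∑ a, ∑ b, if E a b then u a * u b else 0 := rfl
      _ ≤ _ := le_ciSup hbdd ⟨u, hu⟩
end

section
/- Let F be a finite irreflexive anti-symmetric directed graph with clique number cl(F). Then c₀(F) := sup_{λ∈Σ_F} Σ_{(a,b)∈E_F} λ_a λ_b = (1/2)(1 − 1/cl(F)). -/
set_option linter.unusedSectionVars false
set_option linter.unusedVariables false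

open Finset

section MS2

variable {V : Type} [Fintype V] [DecidableEq V] (E : V → V → Prop) [DecidableRel E]

noncomputable def msA (a b : V) : ℝ := if E a b ∨ E b a then 1 else 0
noncomputable def msg (lam : V → ℝ) : ℝ := ∑ a, ∑ b, msA E a b * lam a * lam b

lemma msA_symm (a b : V) : msA E a b = msA E b a := by simp [msA, or_comm]
lemma msA_nonneg (a b : V) : 0 ≤ msA E a b := by unfold msA; split <;> norm_num
lemma msA_le_one (a b : V) : msA E a b ≤ 1 := by unfold msA; split <;> norm_num

lemma msg_add (x y : V → ℝ) :
    msg E (fun v => x v + y v) =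
      msg E x + (∑ a, ∑ b, msA E a b * x a * y b)
        + (∑ a, ∑ b, msA E a b * y a * x b) + msg E y := by
  unfold msg
  rw [← sum_add_distrib, ← sum_add_distrib, ← sum_add_distrib]
  refine sum_congr rfl fun a _ => ?_
  rw [← sum_add_distrib, ← sum_add_distrib, ← sum_add_distrib]
  refine sum_congr rfl fun b _ => ?_
  ring

lemma sum_msA_e (i j a : V) :
    ∑ b, msA E a b * ((if b = j then (1:ℝ) else 0) - (if b = i then 1 else 0))
      = msA E a j - msA E a i := by
  simp only [mul_sub, mul_ite, mul_one, mul_zero, sum_sub_distrib, sum_ite_eq', mem_univ, if_true]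

lemma sum_e_f (i j : V) (f : V → ℝ) :
    ∑ a, ((if a = j then (1:ℝ) else 0) - (if a = i then 1 else 0)) * f a
      = f j - f i := by
  simp only [sub_mul, ite_mul, one_mul, zero_mul, sum_sub_distrib, sum_ite_eq', mem_univ, if_true]

/-- shifting identity: moving mass c from i to j (i,j non-adjacent). -/
lemma msg_shift (hirr : ∀ a, ¬ E a a) (i j : V) (hij : i ≠ j)
    (hnadj : ¬ (E i j ∨ E j i)) (lam : V → ℝ) (c : ℝ) :
    msg E (fun v => lam v + c * ((if v = j then (1:ℝ) else 0) - (if v = i then 1 else 0)))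
      = msg E lam + 2 * c * ((∑ b, msA E j b * lam b) - (∑ b, msA E i b * lam b)) := by
  set e : V → ℝ := fun v => (if v = j then (1:ℝ) else 0) - (if v = i then 1 else 0) with he
  have hAij : msA E i j = 0 := by simp [msA, hnadj]
  have hAji : msA E j i = 0 := by rw [msA_symm]; exact hAij
  have hAii : msA E i i = 0 := by simp [msA, hirr i]
  have hAjj : msA E j j = 0 := by simp [msA, hirr j]
  have h1 : ∀ a : V, ∑ b, msA E a b * lam a * (c * e b)
      = c * lam a * (msA E a j - msA E a i) := by
    intro a
    rw [show (c * lam a * (msA E a j - msA E a i)) = c * lam a * (∑ b, msA E a b * e b) by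
      rw [sum_msA_e]]
    rw [Finset.mul_sum]
    exact sum_congr rfl fun b _ => by ring
  have h2 : (∑ a, ∑ b, msA E a b * lam a * (c * e b))
      = c * ((∑ b, msA E j b * lam b) - (∑ b, msA E i b * lam b)) := by
    rw [sum_congr rfl fun a _ => h1 a]
    have : ∀ a : V, c * lam a * (msA E a j - msA E a i)
        = c * (((if a = j then (1:ℝ) else 0) - (if a = i then 1 else 0)) * 0)
          + c * (msA E a j * lam a - msA E a i * lam a) := by
      intro a; ring
    rw [sum_congr rfl fun a _ => this a]
    rw [sum_add_distrib, ← Finset.mul_sum, ← Finset.mul_sum, sum_e_f, sum_sub_distrib]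
    have hj : ∑ a, msA E a j * lam a = ∑ b, msA E j b * lam b :=
      sum_congr rfl fun a _ => by rw [msA_symm]
    have hi : ∑ a, msA E a i * lam a = ∑ b, msA E i b * lam b :=
      sum_congr rfl fun a _ => by rw [msA_symm]
    rw [hj, hi]; ring
  have h3 : (∑ a, ∑ b, msA E a b * (c * e a) * lam b)
      = c * ((∑ b, msA E j b * lam b) - (∑ b, msA E i b * lam b)) := by
    have : ∀ a : V, ∑ b, msA E a b * (c * e a) * lam b
        = c * (e a * (∑ b, msA E a b * lam b)) := by
      intro a; rw [Finset.mul_sum, Finset.mul_sum]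
      exact sum_congr rfl fun b _ => by ring
    rw [sum_congr rfl fun a _ => this a, ← Finset.mul_sum, sum_e_f]
  have h4 : msg E (fun v => c * e v) = 0 := by
    unfold msg
    have : ∀ a : V, ∑ b, msA E a b * (c * e a) * (c * e b)
        = c * e a * (c * (msA E a j - msA E a i)) := by
      intro a
      rw [show c * e a * (c * (msA E a j - msA E a i))
          = c * e a * (c * (∑ b, msA E a b * e b)) by rw [sum_msA_e]]
      rw [Finset.mul_sum, Finset.mul_sum]
      exact sum_congr rfl fun b _ => by ring
    rw [sum_congr rfl fun a _ => this a]
    have h5 : ∀ a : V, c * e a * (c * (msA E a j - msA E a i))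
        = (c * c) * (e a * ((fun a => msA E a j - msA E a i) a)) := by
      intro a; ring
    rw [sum_congr rfl fun a _ => h5 a, ← Finset.mul_sum,
      sum_e_f i j (fun a => msA E a j - msA E a i)]
    simp [hAij, hAji, hAii, hAjj]
  have := msg_add E lam (fun v => c * e v)
  rw [this, h2, h3, h4]
  ring


lemma ms_key (hirr : ∀ a, ¬ E a a) (n : ℕ)
    (hmax : ∀ s : Finset V, (∀ a ∈ s, ∀ b ∈ s, a ≠ b → E a b ∨ E b a) → s.card ≤ n) :
    ∀ k (lam : V → ℝ), (∀ v, 0 ≤ lam v) → ∑ v, lam v = 1 →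
      (univ.filter (fun v => lam v ≠ 0)).card ≤ k → msg E lam ≤ 1 - 1/(n:ℝ) := by
  intro k
  induction k with
  | zero =>
      intro lam hpos hsum hcard
      exfalso
      have hz : ∀ v, lam v = 0 := by
        intro v
        by_contra h
        have hv : v ∈ univ.filter (fun v => lam v ≠ 0) := by simp [h]
        have := card_pos.mpr ⟨v, hv⟩
        omega
      simp [hz] at hsum
  | succ k ih =>
      intro lam hpos hsum hcard
      set S := univ.filter (fun v => lam v ≠ 0) with hS
      by_cases hcl : ∀ a ∈ S, ∀ b ∈ S, a ≠ b → E a b ∨ E b a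
      · -- clique case
        have hcardS : S.card ≤ n := hmax S hcl
        have hsumS : ∑ v ∈ S, lam v = 1 := by
          rw [← hsum]
          exact sum_subset (filter_subset _ _) (fun x _ hx => by
            simpa [hS] using hx)
        have hSne : S.Nonempty := by
          rcases S.eq_empty_or_nonempty with h | h
          · rw [h] at hsumS; simp at hsumS
          · exact h
        have hS1 : 1 ≤ S.card := card_pos.mpr hSne
        have hn1 : 1 ≤ n := le_trans hS1 hcardS
        have hnR : (0:ℝ) < n := by exact_mod_cast lt_of_lt_of_le one_pos hn1
        have bound1 : msg E lam ≤ 1 - ∑ v, lam v ^ 2 := by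
          have step : msg E lam ≤ ∑ a, ∑ b, (if a = b then 0 else lam a * lam b) := by
            refine sum_le_sum fun a _ => sum_le_sum fun b _ => ?_
            by_cases hab : a = b
            · subst hab
              simp [msA, hirr a]
            · simp only [hab, if_false]
              calc msA E a b * lam a * lam b ≤ 1 * lam a * lam b := by
                    have := msA_le_one E a b
                    have h2 := mul_le_mul_of_nonneg_right
                      (mul_le_mul_of_nonneg_right this (hpos a)) (hpos b)
                    exact h2
                _ = lam a * lam b := by ring
          have eq1 : ∑ a, ∑ b, (if a = b then 0 else lam a * lam b)
              = 1 - ∑ v, lam v ^ 2 := by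
            have inner : ∀ a : V, ∑ b, (if a = b then 0 else lam a * lam b)
                = lam a * (∑ b, lam b) - lam a ^ 2 := by
              intro a
              have : ∀ b : V, (if a = b then 0 else lam a * lam b)
                  = lam a * lam b - (if a = b then lam a * lam b else 0) := by
                intro b; by_cases h : a = b <;> simp [h]
              rw [sum_congr rfl fun b _ => this b, sum_sub_distrib, ← Finset.mul_sum,
                sum_ite_eq, if_pos (mem_univ a)]
              ring
            rw [sum_congr rfl fun a _ => inner a, sum_sub_distrib, hsum]
            simp only [mul_one]
            rw [hsum]
          rw [eq1] at step; exact step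
        have bound2 : 1/(n:ℝ) ≤ ∑ v, lam v ^ 2 := by
          have h1 : (1:ℝ) ≤ S.card * ∑ v ∈ S, lam v ^ 2 := by
            have := sq_sum_le_card_mul_sum_sq (s := S) (f := lam)
            rw [hsumS] at this
            simpa using this
          have h2 : ∑ v ∈ S, lam v ^ 2 ≤ ∑ v, lam v ^ 2 :=
            sum_le_sum_of_subset_of_nonneg (subset_univ S) (fun v _ _ => sq_nonneg _)
          have h3 : (1:ℝ) ≤ n * ∑ v, lam v ^ 2 := by
            calc (1:ℝ) ≤ S.card * ∑ v ∈ S, lam v ^ 2 := h1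
              _ ≤ n * ∑ v, lam v ^ 2 := by
                  apply mul_le_mul (by exact_mod_cast hcardS) h2
                    (sum_nonneg fun v _ => sq_nonneg _) (by positivity)
          rw [div_le_iff₀ hnR]  -- 1/n ≤ X ↔ 1 ≤ X * n
          linarith [h3]
        linarith
      · -- non-clique case
        push_neg at hcl
        obtain ⟨i0, hi0, j0, hj0, hij0, hnadj0⟩ := hcl
        set N : V → ℝ := fun v => ∑ b, msA E v b * lam b with hN
        have key : ∀ i j : V, i ∈ S → j ∈ S → i ≠ j → ¬ (E i j ∨ E j i) →
            N i ≤ N j → msg E lam ≤ 1 - 1/(n:ℝ) := by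
          intro i j hiS hjS hij hnadj hNle
          set lam' : V → ℝ := fun v =>
            lam v + lam i * ((if v = j then (1:ℝ) else 0) - (if v = i then 1 else 0))
            with hlam'
          have hlam'i : lam' i = 0 := by
            simp [hlam', hij, if_neg hij]
          have hlam'j : lam' j = lam j + lam i := by
            simp [hlam', (Ne.symm hij)]
          have hlam'o : ∀ v, v ≠ i → v ≠ j → lam' v = lam v := by
            intro v h1 h2; simp [hlam', h1, h2]
          have hpos' : ∀ v, 0 ≤ lam' v := by
            intro v
            by_cases h1 : v = i
            · rw [h1, hlam'i]
            · by_cases h2 : v = j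
              · rw [h2, hlam'j]; exact add_nonneg (hpos j) (hpos i)
              · rw [hlam'o v h1 h2]; exact hpos v
          have hsum' : ∑ v, lam' v = 1 := by
            simp only [hlam']
            rw [sum_add_distrib, hsum, ← Finset.mul_sum]
            rw [sum_sub_distrib]
            simp [sum_ite_eq']
          have hsub : univ.filter (fun v => lam' v ≠ 0) ⊆ S.erase i := by
            intro v hv
            simp only [mem_filter, mem_univ, true_and] at hv
            rw [mem_erase]
            constructor
            · intro h; rw [h, hlam'i] at hv; exact hv rfl
            · by_cases h1 : v = i
              · exfalso; rw [h1, hlam'i] at hv; exact hv rfl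
              · by_cases h2 : v = j
                · rw [h2]; exact hjS
                · rw [hS, mem_filter]
                  refine ⟨mem_univ v, ?_⟩
                  rw [← hlam'o v h1 h2]; exact hv
          have hcard' : (univ.filter (fun v => lam' v ≠ 0)).card ≤ k := by
            have h1 := card_le_card hsub
            have h2 : (S.erase i).card = S.card - 1 := card_erase_of_mem hiS
            omega
          have hshift := msg_shift E hirr i j hij hnadj lam (lam i)
          have hmono : msg E lam ≤ msg E lam' := by
            rw [hlam', hshift]
            have : 0 ≤ 2 * lam i * (N j - N i) := by
              apply mul_nonneg (mul_nonneg (by norm_num) (hpos i)) (by linarith)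
            linarith [this]
          calc msg E lam ≤ msg E lam' := hmono
            _ ≤ 1 - 1/(n:ℝ) := ih lam' hpos' hsum' hcard'
        rcases le_total (N i0) (N j0) with h | h
        · exact key i0 j0 hi0 hj0 hij0 (not_or.mpr hnadj0) h
        · exact key j0 i0 hj0 hi0 (Ne.symm hij0) (not_or.mpr ⟨hnadj0.2, hnadj0.1⟩) h


lemma f_eq_msg (hanti : ∀ a b, E a b → ¬ E b a) (lam : V → ℝ) :
    (∑ a, ∑ b, if E a b then lam a * lam b else 0) = msg E lam / 2 := by
  have h1 : (∑ a, ∑ b, if E a b then lam a * lam b else 0)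
      = ∑ a, ∑ b, if E b a then lam b * lam a else 0 := Finset.sum_comm
  have h2 : msg E lam = (∑ a, ∑ b, if E a b then lam a * lam b else 0)
      + (∑ a, ∑ b, if E b a then lam b * lam a else 0) := by
    unfold msg
    rw [← sum_add_distrib]
    refine sum_congr rfl fun a _ => ?_
    rw [← sum_add_distrib]
    refine sum_congr rfl fun b _ => ?_
    by_cases hab : E a b
    · have : ¬ E b a := hanti a b hab
      simp [msA, hab, this]
    · by_cases hba : E b a
      · simp [msA, hab, hba]
        ring
      · simp [msA, hab, hba]
  rw [h2, ← h1]; ring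

lemma msg_uniform (hirr : ∀ a, ¬ E a a) (s : Finset V) (n : ℕ) (hcard : s.card = n)
    (hn : 1 ≤ n) (hcl : ∀ a ∈ s, ∀ b ∈ s, a ≠ b → E a b ∨ E b a) :
    msg E (fun v => if v ∈ s then (1:ℝ)/n else 0) = 1 - 1/(n:ℝ) := by
  have hnR : (0:ℝ) < n := by exact_mod_cast lt_of_lt_of_le one_pos hn
  set mu : V → ℝ := fun v => if v ∈ s then (1:ℝ)/n else 0 with hmu
  have step1 : msg E mu = ∑ a ∈ s, ∑ b ∈ s, msA E a b * mu a * mu b := by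
    unfold msg
    rw [← sum_subset (subset_univ s)]
    · refine sum_congr rfl fun a _ => ?_
      rw [← sum_subset (subset_univ s)]
      intro b _ hb
      simp [hmu, hb]
    · intro a _ ha
      apply Finset.sum_eq_zero
      intro b _
      simp [hmu, ha]
  have step2 : ∀ a ∈ s, ∀ b ∈ s, msA E a b * mu a * mu b
      = (if a = b then 0 else (1:ℝ)) * (1/n) * (1/n) := by
    intro a ha b hb
    have hma : mu a = 1/n := by simp [hmu, ha]
    have hmb : mu b = 1/n := by simp [hmu, hb]
    rw [hma, hmb]
    congr 1
    congr 1
    by_cases hab : a = b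
    · subst hab; simp [msA, hirr a]
    · simp [msA, hab, hcl a ha b hb hab]
  rw [step1, sum_congr rfl fun a ha => sum_congr rfl fun b hb => step2 a ha b hb]
  have inner : ∀ a ∈ s, ∑ b ∈ s, (if a = b then 0 else (1:ℝ)) * (1/n) * (1/n)
      = ((n:ℝ) - 1) * (1/n) * (1/n) := by
    intro a ha
    have : ∀ b : V, (if a = b then 0 else (1:ℝ)) * (1/n) * (1/n)
        = (1/n) * (1/n) - (if a = b then (1/n) * (1/(n:ℝ)) else 0) := by
      intro b; by_cases h : a = b <;> simp [h] <;> ring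
    rw [sum_congr rfl fun b _ => this b, sum_sub_distrib, sum_const, hcard,
      sum_ite_eq, if_pos ha]
    push_cast
    ring
  rw [sum_congr rfl inner, sum_const, hcard, nsmul_eq_mul]
  have hne : (n:ℝ) ≠ 0 := ne_of_gt hnR
  field_simp

end MS2

theorem stmt13 {V : Type} [Fintype V] [Nonempty V] (E : V → V → Prop) [DecidableRel E]
    (hirr : ∀ a, ¬ E a a) (hanti : ∀ a b, E a b → ¬ E b a)
    (n : ℕ)
    (hclique : ∃ s : Finset V, s.card = n ∧ ∀ a ∈ s, ∀ b ∈ s, a ≠ b → E a b ∨ E b a)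
    (hmax : ∀ s : Finset V, (∀ a ∈ s, ∀ b ∈ s, a ≠ b → E a b ∨ E b a) → s.card ≤ n) :
    (⨆ lam : stdSimplex ℝ V, ∑ a, ∑ b, if E a b then lam.1 a * lam.1 b else 0)
      = (1 / 2) * (1 - 1 / (n : ℝ)) := by
  classical
  obtain ⟨s, hcard, hcl⟩ := hclique
  have hn : 1 ≤ n := by
    have := hmax {Classical.arbitrary V} (by
      intro a ha b hb hab
      simp only [Finset.mem_singleton] at ha hb
      exact absurd (ha.trans hb.symm) hab)
    simpa using this
  have hnR : (0:ℝ) < n := by exact_mod_cast lt_of_lt_of_le one_pos hn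
  -- pointwise upper bound
  have bound : ∀ lam : stdSimplex ℝ V,
      (∑ a, ∑ b, if E a b then lam.1 a * lam.1 b else 0) ≤ (1/2) * (1 - 1/(n:ℝ)) := by
    intro lam
    rw [f_eq_msg E hanti lam.1]
    have h := ms_key E hirr n hmax (Fintype.card V) lam.1 lam.2.1 lam.2.2
      (Finset.card_le_card (Finset.filter_subset _ _) |>.trans (le_of_eq rfl))
    linarith
  -- uniform measure on clique
  set mu : V → ℝ := fun v => if v ∈ s then (1:ℝ)/n else 0 with hmu
  have hmumem : mu ∈ stdSimplex ℝ V := by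
    constructor
    · intro v
      by_cases h : v ∈ s <;> simp [hmu, h] <;> positivity
    · simp only [hmu]
      rw [Finset.sum_ite_mem, Finset.univ_inter, Finset.sum_const, hcard]
      rw [nsmul_eq_mul]; field_simp [ne_of_gt hnR]
  have hmuval : (∑ a, ∑ b, if E a b then mu a * mu b else 0) = (1/2) * (1 - 1/(n:ℝ)) := by
    rw [f_eq_msg E hanti mu, msg_uniform E hirr s n hcard hn hcl]
    ring
  have hbdd : BddAbove (Set.range fun lam : stdSimplex ℝ V =>
      ∑ a, ∑ b, if E a b then lam.1 a * lam.1 b else 0) := by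
    refine ⟨(1/2) * (1 - 1/(n:ℝ)), ?_⟩
    rintro x ⟨lam, rfl⟩
    exact bound lam
  have hne : Nonempty (stdSimplex ℝ V) := ⟨⟨mu, hmumem⟩⟩
  apply le_antisymm
  · exact ciSup_le bound
  · rw [← hmuval]
    exact le_ciSup hbdd (⟨mu, hmumem⟩ : stdSimplex ℝ V)
end

section
/- Let (Ω, 𝒜, μ) be a probability space and for each (i,j) with i<j let X_{i,j} ⊆ Ω be measurable with μ(X_{i,j}) > 1 − 1/p. Then μ({x ∈ Ω : the chromatic number of the graph with edges {(i,j): i<j, x ∈ X_{i,j}} is at least p}) > 0. -/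
open MeasureTheory
open scoped ENNReal

open Finset in
lemma auxCount {q : ℕ} (hq : 0 < q) (m : ℕ) (c : ℕ → Fin q) :
    q * m * (m - 1) ≤ ((Finset.range (q * m)).offDiag.filter fun z => c z.1 = c z.2).card := by
  classical
  set N := q * m with hN
  set n : Fin q → ℕ := fun t => ((Finset.range N).filter fun i => c i = t).card with hn
  have hsum : ∑ t, n t = N := by
    rw [← Finset.card_range N]
    exact (Finset.card_eq_sum_card_fiberwise (f := c) (fun x _ => Finset.mem_univ _)).symm
  -- Cauchy-Schwarz over ℕ
  have hCS : N * N ≤ q * ∑ t, n t * n t := by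
    have h := sq_sum_le_card_mul_sum_sq (s := (Finset.univ : Finset (Fin q))) (f := n)
    simpa [hsum, sq, Finset.card_univ] using h
  -- disjoint union of offDiags of color classes inside the monochromatic pair set
  have hdisj : ∀ t ∈ (Finset.univ : Finset (Fin q)), ∀ t' ∈ Finset.univ, t ≠ t' →
      Disjoint (((Finset.range N).filter fun i => c i = t).offDiag)
        (((Finset.range N).filter fun i => c i = t').offDiag) := by
    intro t _ t' _ htt'
    rw [Finset.disjoint_left]
    intro z hz hz'
    have h1 := (Finset.mem_offDiag.mp hz).1
    have h2 := (Finset.mem_offDiag.mp hz').1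
    exact htt' ((Finset.mem_filter.mp h1).2 ▸ ((Finset.mem_filter.mp h2).2 ▸ rfl))
  have hsub : (Finset.univ.biUnion fun t => ((Finset.range N).filter fun i => c i = t).offDiag)
      ⊆ (Finset.range N).offDiag.filter fun z => c z.1 = c z.2 := by
    intro z hz
    obtain ⟨t, -, hz⟩ := Finset.mem_biUnion.mp hz
    obtain ⟨h1, h2, h3⟩ := Finset.mem_offDiag.mp hz
    refine Finset.mem_filter.mpr ⟨Finset.mem_offDiag.mpr ⟨(Finset.mem_filter.mp h1).1,
      (Finset.mem_filter.mp h2).1, h3⟩, ?_⟩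
    rw [(Finset.mem_filter.mp h1).2, (Finset.mem_filter.mp h2).2]
  have hcard : ∑ t, (n t * n t - n t) ≤
      ((Finset.range N).offDiag.filter fun z => c z.1 = c z.2).card := by
    calc ∑ t, (n t * n t - n t)
        = (Finset.univ.biUnion fun t => ((Finset.range N).filter fun i => c i = t).offDiag).card := by
          rw [Finset.card_biUnion hdisj]
          exact Finset.sum_congr rfl fun t _ => by rw [Finset.offDiag_card]
      _ ≤ _ := Finset.card_le_card hsub
  refine le_trans ?_ hcard
  have h1 : N * m ≤ ∑ t, n t * n t := by
    have : q * (N * m) ≤ q * ∑ t, n t * n t := by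
      calc q * (N * m) = N * N := by rw [hN]; ring
        _ ≤ _ := hCS
    exact Nat.le_of_mul_le_mul_left this hq
  have h2 : ∑ t, n t * n t ≤ ∑ t, (n t * n t - n t) + N := by
    rw [← hsum, ← Finset.sum_add_distrib]
    exact Finset.sum_le_sum fun t _ => le_tsub_add
  have h3 : q * m * (m - 1) = N * m - N := by
    rw [hN]; cases m with
    | zero => simp
    | succ m =>
      have h : q * (m + 1) * (m + 1) = q * (m + 1) * m + q * (m + 1) := by ring
      simp only [Nat.add_sub_cancel]
      omega
  rw [h3]
  exact Nat.sub_le_iff_le_add.mpr (h1.trans h2)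

theorem stmt14 {Ω : Type*} [MeasurableSpace Ω] (μ : Measure Ω) [IsProbabilityMeasure μ]
    (p : ℕ) (hp : 1 ≤ p) (X : ℕ → ℕ → Set Ω)
    (hmeas : ∀ i j, i < j → MeasurableSet (X i j))
    (hlb : ∀ i j, i < j → ENNReal.ofReal (1 - 1 / (p : ℝ)) < μ (X i j)) :
    0 < μ {x | ¬ ∃ c : ℕ → Fin (p - 1), ∀ i j, i < j → x ∈ X i j → c i ≠ c j} := by
  rcases eq_or_lt_of_le hp with hp1 | hp2
  · -- p = 1 : no coloring into Fin 0 exists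
    have hset : {x : Ω | ¬ ∃ c : ℕ → Fin (p - 1), ∀ i j, i < j → x ∈ X i j → c i ≠ c j}
        = Set.univ := by
      ext x
      simp only [Set.mem_setOf_eq, Set.mem_univ, iff_true]
      rintro ⟨c, -⟩
      rw [← hp1] at c
      exact (c 0).elim0
    rw [hset, measure_univ]
    exact zero_lt_one
  · by_contra hcon
    have h0 : μ {x | ¬ ∃ c : ℕ → Fin (p - 1), ∀ i j, i < j → x ∈ X i j → c i ≠ c j} = 0 := by
      simpa using not_lt.mp hcon
    have hae : ∀ᵐ x ∂μ, ∃ c : ℕ → Fin (p - 1), ∀ i j, i < j → x ∈ X i j → c i ≠ c j :=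
      ae_iff.mpr h0
    set N : ℕ := (p - 1) * p with hNdef
    set k : ℕ := (p - 1) * p * (p - 1) with hkdef
    set T : Finset (ℕ × ℕ) := (Finset.range N).offDiag with hTdef
    set S : ℕ × ℕ → Set Ω := fun z => (X (min z.1 z.2) (max z.1 z.2))ᶜ with hSdef
    have hq : 0 < p - 1 := by omega
    have hlt : ∀ z ∈ T, min z.1 z.2 < max z.1 z.2 := by
      intro z hz
      exact min_lt_max.mpr (Finset.mem_offDiag.mp hz).2.2
    have hmeasS : ∀ z ∈ T, MeasurableSet (S z) := fun z hz =>
      (hmeas _ _ (hlt z hz)).compl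
    -- lower bound on the integral
    have key1 : (k : ℝ≥0∞) ≤ ∫⁻ x, ∑ z ∈ T, (S z).indicator (1 : Ω → ℝ≥0∞) x ∂μ := by
      have hpt : ∀ᵐ x ∂μ, (k : ℝ≥0∞) ≤ ∑ z ∈ T, (S z).indicator (1 : Ω → ℝ≥0∞) x := by
        filter_upwards [hae] with x hx
        obtain ⟨c, hc⟩ := hx
        have hcount := auxCount hq p c
        have hmem : ∀ z ∈ T.filter (fun z => c z.1 = c z.2),
            (S z).indicator (1 : Ω → ℝ≥0∞) x = 1 := by
          intro z hz
          obtain ⟨hzT, hzc⟩ := Finset.mem_filter.mp hz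
          have hxS : x ∈ S z := by
            intro hxX
            have hne := hc _ _ (hlt z hzT) hxX
            rcases lt_or_gt_of_ne (Finset.mem_offDiag.mp hzT).2.2 with h | h
            · rw [min_eq_left h.le, max_eq_right h.le] at hne
              exact hne hzc
            · rw [min_eq_right h.le, max_eq_left h.le] at hne
              exact hne hzc.symm
          simp [Set.indicator_of_mem hxS]
        calc (k : ℝ≥0∞) ≤ ((T.filter (fun z => c z.1 = c z.2)).card : ℝ≥0∞) := by
              exact_mod_cast hcount
          _ = ∑ z ∈ T.filter (fun z => c z.1 = c z.2), (S z).indicator (1 : Ω → ℝ≥0∞) x := by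
              rw [Finset.sum_congr rfl hmem]; simp
          _ ≤ ∑ z ∈ T, (S z).indicator (1 : Ω → ℝ≥0∞) x :=
              Finset.sum_le_sum_of_subset (Finset.filter_subset _ _)
      calc (k : ℝ≥0∞) = ∫⁻ _, (k : ℝ≥0∞) ∂μ := by simp
        _ ≤ _ := lintegral_mono_ae hpt
    -- compute the integral
    have key2 : ∫⁻ x, ∑ z ∈ T, (S z).indicator (1 : Ω → ℝ≥0∞) x ∂μ = ∑ z ∈ T, μ (S z) := by
      rw [lintegral_finset_sum _ (fun z hz => measurable_one.indicator (hmeasS z hz))]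
      exact Finset.sum_congr rfl fun z hz => lintegral_indicator_one (hmeasS z hz)
    -- upper bound on each μ (S z)
    have hμS : ∀ z ∈ T, μ (S z) ≤ ENNReal.ofReal (1 / p) := by
      intro z hz
      have h1 : μ (S z) = 1 - μ (X (min z.1 z.2) (max z.1 z.2)) :=
        prob_compl_eq_one_sub (hmeas _ _ (hlt z hz))
      have h2 : (1 : ℝ≥0∞) - μ (X (min z.1 z.2) (max z.1 z.2))
          ≤ 1 - ENNReal.ofReal (1 - 1 / p) :=
        tsub_le_tsub_left (hlb _ _ (hlt z hz)).le 1
      have h3 : (1 : ℝ≥0∞) - ENNReal.ofReal (1 - 1 / p) = ENNReal.ofReal (1 / p) := by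
        have hple : (0:ℝ) ≤ 1 - 1 / p := by
          have h1 : (1:ℝ) ≤ (p:ℝ) := by exact_mod_cast hp
          have h2 : (1:ℝ) / p ≤ 1 := by
            rw [div_le_one (by linarith)]; exact h1
          linarith
        rw [← ENNReal.ofReal_one, ← ENNReal.ofReal_sub _ hple]
        norm_num
      rw [h1]; rw [h3] at h2; exact h2
    have hppos : (0:ℝ) < p := by positivity
    have key3 : ∑ z ∈ T, μ (S z) ≤ (T.card : ℝ≥0∞) * ENNReal.ofReal (1 / p) := by
      calc ∑ z ∈ T, μ (S z) ≤ ∑ _z ∈ T, ENNReal.ofReal (1 / p) := Finset.sum_le_sum hμS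
        _ = (T.card : ℝ≥0∞) * ENNReal.ofReal (1 / p) := by
            rw [Finset.sum_const, nsmul_eq_mul]
    -- final numeric contradiction
    have hcardT : T.card = N * N - N := by
      rw [hTdef, Finset.offDiag_card, Finset.card_range]
    have hNpos : 0 < N := by
      rw [hNdef]; exact Nat.mul_pos hq (by omega)
    have hfinal : (T.card : ℝ≥0∞) * ENNReal.ofReal (1 / p) < (k : ℝ≥0∞) := by
      have hof : ENNReal.ofReal (1 / p) = ((p : ℝ≥0∞))⁻¹ := by
        rw [one_div, ENNReal.ofReal_inv_of_pos hppos, ENNReal.ofReal_natCast]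
      have hkp : k * p = N * N := by rw [hkdef, hNdef]; ring
      rw [hof, ← div_eq_mul_inv,
        ENNReal.div_lt_iff (Or.inl (by exact_mod_cast (by omega : p ≠ 0)))
          (Or.inl (ENNReal.natCast_ne_top p)), ← Nat.cast_mul, Nat.cast_lt]
      calc T.card = N * N - N := hcardT
        _ < N * N := Nat.sub_lt (Nat.mul_pos hNpos hNpos) hNpos
        _ = k * p := hkp.symm
    exact absurd ((key1.trans_eq key2).trans key3) (not_le.mpr hfinal)
end

section
/- Let (Ω, 𝒜, μ) be a probability space, k ≥ 1, λ > 0, and for each increasing k-tuple (i₁,...,i_k) of natural numbers let X_{i₁...i_k} ⊆ Ω be measurable with μ(X_{i₁...i_k}) ≥ λ. Suppose the indicator functions of the sets X_{i₁...i_k} all lie in a compact subset of L¹(Ω,μ). Then for every ε > 0 there exists an infinite set J ⊆ ℕ such that μ(⋂ X_{i₁...i_k}) ≥ λ − C(k)·ε, where the intersection is over all increasing k-tuples from J, and C(k) depends only on k. In particular this intersection is nonempty. -/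
set_option maxHeartbeats 1000000
set_option synthInstance.maxHeartbeats 200000

open MeasureTheory Filter
open scoped ENNReal Topology

private lemma exists_step {P : ℕ → Prop} : ∀ {k : ℕ}, P 0 → ¬ P k → ∃ j, j < k ∧ P j ∧ ¬ P (j + 1) := by
  intro k
  induction k with
  | zero => intro h0 hk; exact absurd h0 hk
  | succ n ih =>
    intro h0 hk
    by_cases hn : P n
    · exact ⟨n, Nat.lt_succ_self n, hn, hk⟩
    · obtain ⟨j, hj, h⟩ := ih h0 hn
      exact ⟨j, hj.trans (Nat.lt_succ_self n), h⟩

private lemma sorted_sublist_range {l : List ℕ} (hl : l.Pairwise (· < ·)) {N : ℕ}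
    (h : ∀ x ∈ l, x < N) : l.Sublist (List.range N) := by
  classical
  have hnd : l.Nodup := hl.nodup
  haveI : Std.Antisymm (α := ℕ) (· < ·) := ⟨fun a b h1 h2 => absurd h2 (lt_asymm h1)⟩
  have key : (List.range N).filter (fun x => decide (x ∈ l)) = l := by
    refine (fun p s1 s2 => List.Perm.eq_of_pairwise' (r := (· < ·)) s1 s2 p) ?_ ?_ ?_
    · rw [List.perm_ext_iff_of_nodup ((List.nodup_range (n := N)).filter _) hnd]
      intro a
      simp only [List.mem_filter, List.mem_range, decide_eq_true_eq]
      exact ⟨fun ha => ha.2, fun ha => ⟨h a ha, ha⟩⟩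
    · exact (List.pairwise_lt_range).filter _
    · exact hl
  exact key ▸ List.filter_sublist

private lemma meas_diff_le_dist {Ω : Type*} [MeasurableSpace Ω] {μ : Measure Ω}
    {S S' : Set Ω} {f g : Lp ℝ 1 μ}
    (hf : S.indicator (fun _ => (1 : ℝ)) =ᵐ[μ] f) (hg : S'.indicator (fun _ => (1 : ℝ)) =ᵐ[μ] g) :
    μ (S \ S') ≤ ENNReal.ofReal (dist f g) := by
  have h1 : μ (S \ S') ≤ μ {x | 1 ≤ (‖(f : Ω → ℝ) x - (g : Ω → ℝ) x‖₊ : ℝ≥0∞)} := by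
    apply measure_mono_ae
    filter_upwards [hf, hg] with x hfx hgx hx
    have hfx1 : (f : Ω → ℝ) x = 1 := by rw [← hfx]; simp [Set.indicator_of_mem hx.1]
    have hgx0 : (g : Ω → ℝ) x = 0 := by rw [← hgx]; simp [Set.indicator_of_notMem hx.2]
    show (1 : ℝ≥0∞) ≤ (‖(f : Ω → ℝ) x - (g : Ω → ℝ) x‖₊ : ℝ≥0∞)
    rw [hfx1, hgx0, sub_zero]
    norm_num
  have h2 : μ {x | 1 ≤ (‖(f : Ω → ℝ) x - (g : Ω → ℝ) x‖₊ : ℝ≥0∞)} ≤ ∫⁻ x, (‖(f : Ω → ℝ) x - (g : Ω → ℝ) x‖₊ : ℝ≥0∞) ∂μ := by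
    have := mul_meas_ge_le_lintegral₀ (μ := μ) (f := fun x => (‖(f : Ω → ℝ) x - (g : Ω → ℝ) x‖₊ : ℝ≥0∞))
      (((Lp.stronglyMeasurable f).measurable.sub (Lp.stronglyMeasurable g).measurable).enorm).aemeasurable 1
    simpa using this
  have h3 : ∫⁻ x, (‖(f : Ω → ℝ) x - (g : Ω → ℝ) x‖₊ : ℝ≥0∞) ∂μ = edist f g := by
    rw [Lp.edist_def, eLpNorm_one_eq_lintegral_enorm]
    exact lintegral_congr fun x => by simp [Pi.sub_apply]; rfl
  rw [edist_dist] at h3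
  exact (h1.trans h2).trans_eq h3

noncomputable def iterLim {α : Type*} (B : List ℕ → α) (lim : (ℕ → α) → α) : ℕ → List ℕ → α
  | 0 => B
  | (j + 1) => fun l => lim fun m => iterLim B lim j (l ++ [m])

noncomputable def iterList (next : List ℕ → ℕ) : ℕ → List ℕ
  | 0 => []
  | (n + 1) => iterList next n ++ [next (iterList next n)]

noncomputable def sset {Ω : Type*} [MeasurableSpace Ω] (μ : Measure Ω) (k : ℕ)
    (X : (Fin k → ℕ) → Set Ω) (T : ℕ → List ℕ → Lp ℝ 1 μ) (l : List ℕ) : Set Ω :=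
  if h : l.length = k then X (fun i => l.get (Fin.cast h.symm i))
  else {x | (T (k - l.length) l : Ω → ℝ) x = 1}

private lemma isClosed_ae_zero_one {Ω : Type*} [MeasurableSpace Ω] {μ : Measure Ω} :
    IsClosed {f : Lp ℝ 1 μ | ∀ᵐ x ∂μ, (f : Ω → ℝ) x = 0 ∨ (f : Ω → ℝ) x = 1} := by
  refine IsSeqClosed.isClosed ?_
  intro g f hg hf
  have hsn : Filter.Tendsto (fun n => eLpNorm ((g n : Ω → ℝ) - (f : Ω → ℝ)) 1 μ) atTop (𝓝 0) := by
    have := (Lp.tendsto_Lp_iff_tendsto_eLpNorm' g f).mp hf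
    exact this
  have h2 : TendstoInMeasure μ (fun n => (g n : Ω → ℝ)) atTop (f : Ω → ℝ) :=
    tendstoInMeasure_of_tendsto_eLpNorm one_ne_zero
      (fun n => (Lp.aestronglyMeasurable (g n))) (Lp.aestronglyMeasurable f) hsn
  obtain ⟨ns, -, hns⟩ := h2.exists_seq_tendsto_ae
  have hall : ∀ᵐ x ∂μ, ∀ n, (g (ns n) : Ω → ℝ) x = 0 ∨ (g (ns n) : Ω → ℝ) x = 1 :=
    (ae_all_iff).mpr fun n => hg (ns n)
  filter_upwards [hall, hns] with x hx htx
  have hmem : ∀ n, (g (ns n) : Ω → ℝ) x ∈ ({0, 1} : Set ℝ) := by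
    intro n; rcases hx n with h | h <;> simp [h]
  have hcl : IsClosed ({0, 1} : Set ℝ) := by
    exact (isClosed_singleton.union isClosed_singleton)
  have := hcl.mem_of_tendsto htx (Filter.Eventually.of_forall hmem)
  simpa using this

private lemma eventually_gt_list (l : List ℕ) :
    ∀ᶠ m in (Filter.atTop : Filter ℕ), ∀ a ∈ l, a < m := by
  induction l with
  | nil => simp
  | cons b tl ih =>
    filter_upwards [ih, Filter.eventually_gt_atTop b] with m h1 h2 a ha
    rcases List.mem_cons.mp ha with rfl | ha
    · exact h2
    · exact h1 a ha

private lemma eventually_all_list {α β : Type*} {f : Filter α} {p : β → α → Prop} :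
    ∀ (l : List β), (∀ b ∈ l, ∀ᶠ x in f, p b x) → ∀ᶠ x in f, ∀ b ∈ l, p b x := by
  intro l
  induction l with
  | nil => intro _; simp
  | cons b tl ih =>
    intro h
    filter_upwards [h b (List.mem_cons_self), ih (fun c hc => h c (List.mem_cons_of_mem _ hc))]
      with x hx1 hx2 c hc
    rcases List.mem_cons.mp hc with rfl | hc
    · exact hx1
    · exact hx2 c hc

theorem stmt16 {Ω : Type*} [MeasurableSpace Ω] (μ : Measure Ω) [IsProbabilityMeasure μ]
    (k : ℕ) (hk : 1 ≤ k) (lam : ℝ) (hlam : 0 < lam)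
    (X : (Fin k → ℕ) → Set Ω)
    (hmeas : ∀ t, StrictMono t → MeasurableSet (X t))
    (hlb : ∀ t, StrictMono t → ENNReal.ofReal lam ≤ μ (X t))
    (hcpt : ∃ K : Set (Lp ℝ 1 μ), IsCompact K ∧
      ∀ t, StrictMono t → ∃ f ∈ K,
        (f : Ω → ℝ) =ᵐ[μ] (X t).indicator (fun _ => (1 : ℝ))) :
    (∃ C : ℝ, 0 < C ∧ ∀ ε : ℝ, 0 < ε → ∃ J : Set ℕ, J.Infinite ∧
        ENNReal.ofReal (lam - C * ε) ≤
          μ (⋂ t ∈ {t : Fin k → ℕ | StrictMono t ∧ ∀ i, t i ∈ J}, X t)) ∧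
      ∃ J : Set ℕ, J.Infinite ∧
        (⋂ t ∈ {t : Fin k → ℕ | StrictMono t ∧ ∀ i, t i ∈ J}, X t).Nonempty := by
  classical
  obtain ⟨K, hKc, hKmem⟩ := hcpt
  suffices H : ∀ ε : ℝ, 0 < ε → ∃ J : Set ℕ, J.Infinite ∧
      ENNReal.ofReal (lam - ε) ≤ μ (⋂ t ∈ {t : Fin k → ℕ | StrictMono t ∧ ∀ i, t i ∈ J}, X t) by
    constructor
    · refine ⟨1, one_pos, fun ε hε => ?_⟩
      obtain ⟨J, hJ1, hJ2⟩ := H ε hε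
      rw [one_mul]
      exact ⟨J, hJ1, hJ2⟩
    · obtain ⟨J, hJ, hle⟩ := H (lam / 2) (by linarith)
      refine ⟨J, hJ, ?_⟩
      apply MeasureTheory.nonempty_of_measure_ne_zero
      have hpos : (0 : ℝ≥0∞) < ENNReal.ofReal (lam - lam / 2) := by
        rw [ENNReal.ofReal_pos]; linarith
      exact (hpos.trans_le hle).ne'
  intro ε hε
  obtain ⟨u, hu⟩ := Filter.exists_ultrafilter_le (Filter.atTop : Filter ℕ)
  -- base functions
  have hbase : ∀ l : List ℕ, ∃ f : Lp ℝ 1 μ, l.Pairwise (· < ·) → ∀ h : l.length = k,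
      f ∈ K ∧ (f : Ω → ℝ) =ᵐ[μ]
        (X (fun i => l.get (Fin.cast h.symm i))).indicator (fun _ => (1 : ℝ)) := by
    intro l
    by_cases hl : l.Pairwise (· < ·) ∧ l.length = k
    · obtain ⟨hs, hlen⟩ := hl
      have hsm : StrictMono (fun i : Fin k => l.get (Fin.cast hlen.symm i)) := by
        intro i j hij
        exact hs.sortedLT.strictMono_get hij
      obtain ⟨f, hfK, hfe⟩ := hKmem _ hsm
      refine ⟨f, fun _ h => ⟨hfK, ?_⟩⟩
      have he : h = hlen := Subsingleton.elim _ _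
      rw [he]; exact hfe
    · exact ⟨0, fun hs h => absurd ⟨hs, h⟩ hl⟩
  choose B hB using hbase
  -- ultrafilter limit operator
  have hlimex : ∀ g : ℕ → Lp ℝ 1 μ, ∃ f : Lp ℝ 1 μ,
      (∀ᶠ m in (u : Filter ℕ), g m ∈ K) → f ∈ K ∧ Filter.Tendsto g (u : Filter ℕ) (𝓝 f) := by
    intro g
    by_cases hg : ∀ᶠ m in (u : Filter ℕ), g m ∈ K
    · have hKm : ↑(Ultrafilter.map g u) ≤ Filter.principal K := by
        rw [Ultrafilter.coe_map, Filter.le_principal_iff, Filter.mem_map]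
        exact hg
      obtain ⟨f, hfK, hf⟩ := isCompact_iff_ultrafilter_le_nhds.mp hKc (Ultrafilter.map g u) hKm
      refine ⟨f, fun _ => ⟨hfK, ?_⟩⟩
      rw [Ultrafilter.coe_map] at hf
      exact hf
    · exact ⟨0, fun h => absurd h hg⟩
  choose lim hlim using hlimex
  set T : ℕ → List ℕ → Lp ℝ 1 μ := iterLim B lim with hTdef
  have hT0 : ∀ l, T 0 l = B l := fun l => rfl
  have hTS : ∀ j l, T (j + 1) l = lim (fun m => T j (l ++ [m])) := fun j l => rfl
  have husorted : ∀ l : List ℕ, l.Pairwise (· < ·) →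
      ∀ᶠ m in (u : Filter ℕ), (l ++ [m]).Pairwise (· < ·) := by
    intro l hl
    filter_upwards [(eventually_gt_list l).filter_mono hu] with m hm
    refine List.pairwise_append.mpr ⟨hl, List.pairwise_singleton _ m, fun a ha c hc => ?_⟩
    rw [List.mem_singleton.mp hc]; exact hm a ha
  -- the invariant
  have hTinv : ∀ j, ∀ l : List ℕ, l.Pairwise (· < ·) → l.length + j = k →
      T j l ∈ K ∧ (∀ᵐ x ∂μ, (T j l : Ω → ℝ) x = 0 ∨ (T j l : Ω → ℝ) x = 1) ∧
        lam ≤ ∫ x, (T j l : Ω → ℝ) x ∂μ := by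
    intro j
    induction j with
    | zero =>
      intro l hs hlen
      rw [Nat.add_zero] at hlen
      obtain ⟨hfK, hfe⟩ := hB l hs hlen
      rw [hT0]
      refine ⟨hfK, ?_, ?_⟩
      · filter_upwards [hfe] with x hx
        rw [hx]
        by_cases hxm : x ∈ X (fun i => l.get (Fin.cast hlen.symm i))
        · right; exact Set.indicator_of_mem hxm _
        · left; exact Set.indicator_of_notMem hxm _
      · rw [integral_congr_ae hfe]
        have hsm : StrictMono (fun i : Fin k => l.get (Fin.cast hlen.symm i)) := fun i j hij =>
          hs.sortedLT.strictMono_get hij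
        rw [integral_indicator_const (1 : ℝ) (hmeas _ hsm)]
        have hle := hlb _ hsm
        rw [ENNReal.ofReal_le_iff_le_toReal (measure_ne_top μ _)] at hle
        rw [smul_eq_mul, mul_one]
        exact hle
    | succ j ih =>
      intro l hs hlen
      have hevs := husorted l hs
      have hlen' : ∀ m : ℕ, (l ++ [m]).length + j = k := by
        intro m; simp only [List.length_append, List.length_singleton]; omega
      have hevK : ∀ᶠ m in (u : Filter ℕ), T j (l ++ [m]) ∈ K := by
        filter_upwards [hevs] with m hm
        exact (ih _ hm (hlen' m)).1
      obtain ⟨hK', ht⟩ := hlim _ hevK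
      rw [hTS]
      refine ⟨hK', ?_, ?_⟩
      · exact isClosed_ae_zero_one.mem_of_tendsto ht
          (by filter_upwards [hevs] with m hm; exact (ih _ hm (hlen' m)).2.1)
      · exact (isClosed_le continuous_const continuous_integral).mem_of_tendsto ht
          (by filter_upwards [hevs] with m hm; exact (ih _ hm (hlen' m)).2.2)
  -- the tendsto property
  have hTt : ∀ j (l : List ℕ), l.Pairwise (· < ·) → l.length + (j + 1) = k →
      Filter.Tendsto (fun m => T j (l ++ [m])) (u : Filter ℕ) (𝓝 (T (j + 1) l)) := by
    intro j l hs hlen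
    have hevK : ∀ᶠ m in (u : Filter ℕ), T j (l ++ [m]) ∈ K := by
      filter_upwards [husorted l hs] with m hm
      exact (hTinv j _ hm (by simp only [List.length_append, List.length_singleton]; omega)).1
    rw [hTS]
    exact (hlim _ hevK).2
  -- indicator a.e. equality
  have hSind : ∀ j, ∀ l : List ℕ, l.Pairwise (· < ·) → l.length + j = k →
      (sset μ k X T l).indicator (fun _ => (1 : ℝ)) =ᵐ[μ] (T j l : Ω → ℝ) := by
    intro j l hs hlen
    by_cases hc : l.length = k
    · have hj : j = 0 := by omega
      subst hj
      obtain ⟨-, hfe⟩ := hB l hs hc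
      rw [hT0]
      simp only [sset]
      rw [dif_pos hc]
      exact hfe.symm
    · have hke : k - l.length = j := by omega
      simp only [sset]
      rw [dif_neg hc, hke]
      filter_upwards [(hTinv j l hs hlen).2.1] with x hx
      rcases hx with h0 | h1
      · have hnm : x ∉ {x : Ω | (T j l : Ω → ℝ) x = 1} := by
          simp only [Set.mem_setOf_eq, h0]; norm_num
        rw [Set.indicator_of_notMem hnm, h0]
      · have hm : x ∈ {x : Ω | (T j l : Ω → ℝ) x = 1} := h1
        rw [Set.indicator_of_mem hm, h1]
  -- the adaptive gap
  set del : List ℕ → ℝ := fun L => ε * (2⁻¹ : ℝ) ^ (L.length + 1) / (L.sublists.length + 1)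
    with hdel
  have hdelpos : ∀ L, 0 < del L := by
    intro L
    rw [hdel]
    positivity
  -- choice of next element
  have hnextex : ∀ L : List ℕ, ∃ m : ℕ, L.Pairwise (· < ·) →
      (∀ a ∈ L, a < m) ∧ ∀ q ∈ L.sublists, q.length < k →
        dist (T (k - q.length) q) (T (k - (q.length + 1)) (q ++ [m])) < del L := by
    intro L
    by_cases hLs : L.Pairwise (· < ·)
    · have h1 : ∀ᶠ m in (u : Filter ℕ), ∀ a ∈ L, a < m :=
        (eventually_gt_list L).filter_mono hu
      have h2 : ∀ᶠ m in (u : Filter ℕ), ∀ q ∈ L.sublists, q.length < k →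
          dist (T (k - q.length) q) (T (k - (q.length + 1)) (q ++ [m])) < del L := by
        refine eventually_all_list _ (fun q hq => ?_)
        by_cases hqk : q.length < k
        · have hqs : q.Pairwise (· < ·) := List.Pairwise.sublist (List.mem_sublists.mp hq) hLs
          have hlen2 : q.length + (k - (q.length + 1) + 1) = k := by omega
          have ht := hTt (k - (q.length + 1)) q hqs hlen2
          have hrw : k - (q.length + 1) + 1 = k - q.length := by omega
          rw [hrw] at ht
          have hev := Metric.tendsto_nhds.mp ht (del L) (hdelpos L)
          filter_upwards [hev] with m hm _
          rw [dist_comm]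
          exact hm
        · filter_upwards with m hm; exact absurd hm hqk
      obtain ⟨m, hm1, hm2⟩ := (h1.and h2).exists
      exact ⟨m, fun _ => ⟨hm1, hm2⟩⟩
    · exact ⟨0, fun hs => absurd hs hLs⟩
  choose nextf hnext using hnextex
  set bb : ℕ → List ℕ := iterList nextf with hbbdef
  have hbb0 : bb 0 = [] := rfl
  have hbbS : ∀ n, bb (n + 1) = bb n ++ [nextf (bb n)] := fun n => rfl
  set b : ℕ → ℕ := fun n => nextf (bb n) with hbdef
  have hbbsorted : ∀ n, (bb n).Pairwise (· < ·) := by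
    intro n
    induction n with
    | zero => rw [hbb0]; exact List.Pairwise.nil
    | succ n ih =>
      rw [hbbS]
      refine List.pairwise_append.mpr ⟨ih, List.pairwise_singleton _ _, fun a ha c hc => ?_⟩
      rw [List.mem_singleton.mp hc]
      exact (hnext (bb n) ih).1 a ha
  have hblt : ∀ n, ∀ a ∈ bb n, a < b n := fun n => (hnext (bb n) (hbbsorted n)).1
  have hbbmap : ∀ n, bb n = (List.range n).map b := by
    intro n
    induction n with
    | zero => rw [hbb0]; simp
    | succ n ih =>
      rw [hbbS, List.range_succ, List.map_append, ← ih]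
      rfl
  have hbblen : ∀ n, (bb n).length = n := by
    intro n; rw [hbbmap]; simp
  have hbmono : StrictMono b := by
    apply strictMono_nat_of_lt_succ
    intro n
    apply hblt (n + 1)
    rw [hbbS]
    exact List.mem_append_right _ (List.mem_singleton_self _)
  refine ⟨Set.range b, Set.infinite_range_of_injective hbmono.injective, ?_⟩
  set I := ⋂ t ∈ {t : Fin k → ℕ | StrictMono t ∧ ∀ i, t i ∈ Set.range b}, X t with hI
  -- the limit set A
  set A := sset μ k X T [] with hA
  have hAset : A = {x : Ω | (T k [] : Ω → ℝ) x = 1} := by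
    rw [hA]
    simp only [sset]
    rw [dif_neg (show ¬([] : List ℕ).length = k by simp only [List.length_nil]; omega)]
    simp
  have hAmeas : MeasurableSet A := by
    rw [hAset]
    exact (Lp.stronglyMeasurable (T k [])).measurable (measurableSet_singleton 1)
  have hTk := hTinv k [] List.Pairwise.nil (by simp)
  have hAlam : ENNReal.ofReal lam ≤ μ A := by
    have hind : A.indicator (fun _ => (1 : ℝ)) =ᵐ[μ] (T k [] : Ω → ℝ) :=
      hSind k [] List.Pairwise.nil (by simp)
    have hint : lam ≤ ∫ x, A.indicator (fun _ => (1 : ℝ)) x ∂μ := by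
      rw [integral_congr_ae hind]; exact hTk.2.2
    rw [integral_indicator_const (1 : ℝ) hAmeas] at hint
    rw [ENNReal.ofReal_le_iff_le_toReal (measure_ne_top μ _)]
    exact (by simpa using hint : lam ≤ μ.real A)
  -- the bad sets
  set D : ℕ → List ℕ → Set Ω := fun n q => sset μ k X T q \ sset μ k X T (q ++ [b n]) with hD
  set U : ℕ → Set Ω := fun n => ⋃ q ∈ {q : List ℕ | q ∈ (bb n).sublists ∧ q.length < k}, D n q
    with hU
  have hincl : A \ I ⊆ ⋃ n, U n := by
    rintro x ⟨hxA, hxI⟩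
    have hex : ∃ t : Fin k → ℕ, (StrictMono t ∧ ∀ i, t i ∈ Set.range b) ∧ x ∉ X t := by
      by_contra hcon
      push_neg at hcon
      exact hxI (Set.mem_iInter₂.mpr (fun t ht => hcon t ht))
    obtain ⟨t, ⟨htm, htr⟩, hxt⟩ := hex
    have htr' : ∀ i, ∃ n, b n = t i := by intro i; exact htr i
    choose nn hnn using htr'
    have hnnmono : StrictMono nn := by
      intro i j hij
      have hbij : b (nn i) < b (nn j) := by rw [hnn i, hnn j]; exact htm hij
      exact hbmono.lt_iff_lt.mp hbij
    set nne : ℕ → ℕ := fun i => if h : i < k then nn ⟨i, h⟩ else 0 with hnne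
    set qq : ℕ → List ℕ := fun j => (List.range j).map (fun i => b (nne i)) with hqq
    have hqq0 : qq 0 = [] := by rw [hqq]; simp
    have hqqS : ∀ j, qq (j + 1) = qq j ++ [b (nne j)] := by
      intro j; rw [hqq]; simp [List.range_succ]
    have hqqlen : ∀ j, (qq j).length = j := by intro j; rw [hqq]; simp
    have hP0 : x ∈ sset μ k X T (qq 0) := by rw [hqq0]; exact hxA
    have hPk : x ∉ sset μ k X T (qq k) := by
      have hlenk := hqqlen k
      simp only [sset]
      rw [dif_pos hlenk]
      have heq : (fun i : Fin k => (qq k).get (Fin.cast hlenk.symm i)) = t := by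
        funext i
        have hik : (i : ℕ) < k := i.isLt
        simp only [hqq, List.get_eq_getElem, List.getElem_map, List.getElem_range, Fin.coe_cast]
        rw [hnne]
        simp only [hik, dif_pos]
        rw [← hnn i]
      rw [heq]
      exact hxt
    obtain ⟨j, hjk, hPj, hPj1⟩ := exists_step (P := fun j => x ∈ sset μ k X T (qq j)) hP0 hPk
    refine Set.mem_iUnion.mpr ⟨nne j, Set.mem_iUnion₂.mpr ⟨qq j, ⟨?_, ?_⟩, ?_, ?_⟩⟩
    · -- qq j is a sublist of bb (nne j)
      rw [List.mem_sublists, hbbmap (nne j)]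
      have hmm : qq j = ((List.range j).map nne).map b := by
        rw [hqq, List.map_map]; rfl
      rw [hmm]
      apply List.Sublist.map
      apply sorted_sublist_range
      · show ((List.range j).map nne).Pairwise (· < ·)
        rw [List.pairwise_map]
        refine List.Pairwise.imp_of_mem ?_ List.pairwise_lt_range
        intro a c ha hc hac
        rw [List.mem_range] at ha hc
        have hak : a < k := by omega
        have hck : c < k := by omega
        rw [hnne]
        simp only [hak, hck, dif_pos]
        exact hnnmono (Fin.mk_lt_mk.mpr hac)
      · intro y hy
        simp only [List.mem_map, List.mem_range] at hy
        obtain ⟨i, hi, rfl⟩ := hy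
        have hik : i < k := by omega
        rw [hnne]
        simp only [hik, dif_pos, hjk, dif_pos]
        exact hnnmono (Fin.mk_lt_mk.mpr hi)
    · rw [hqqlen]; exact hjk
    · exact hPj
    · rw [← hqqS]; exact hPj1
  -- measure of each U n
  have hUn : ∀ n, μ (U n) ≤ ENNReal.ofReal (ε * (2⁻¹ : ℝ) ^ (n + 1)) := by
    intro n
    have hset : {q : List ℕ | q ∈ (bb n).sublists ∧ q.length < k} =
        ↑(((bb n).sublists.toFinset).filter (fun q => q.length < k)) := by
      ext q
      simp [List.mem_toFinset]
    have hterm : ∀ q ∈ ((bb n).sublists.toFinset).filter (fun q => q.length < k),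
        μ (D n q) ≤ ENNReal.ofReal (del (bb n)) := by
      intro q hq
      rw [Finset.mem_filter, List.mem_toFinset] at hq
      obtain ⟨hqsub, hqk⟩ := hq
      have hqs : q.Pairwise (· < ·) := List.Pairwise.sublist (List.mem_sublists.mp hqsub) (hbbsorted n)
      have hqs' : (q ++ [b n]).Pairwise (· < ·) := by
        refine List.pairwise_append.mpr ⟨hqs, List.pairwise_singleton _ _, fun a ha c hc => ?_⟩
        rw [List.mem_singleton.mp hc]
        exact hblt n a ((List.mem_sublists.mp hqsub).subset ha)
      have hind1 := hSind (k - q.length) q hqs (by omega)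
      have hind2 := hSind (k - (q.length + 1)) (q ++ [b n]) hqs'
        (by simp only [List.length_append, List.length_singleton]; omega)
      have hd := meas_diff_le_dist hind1 hind2
      refine hd.trans (ENNReal.ofReal_le_ofReal ?_)
      exact ((hnext (bb n) (hbbsorted n)).2 q hqsub hqk).le
    calc μ (U n) ≤ ∑ q ∈ ((bb n).sublists.toFinset).filter (fun q => q.length < k), μ (D n q) := by
          rw [hU]
          simp only [hset]
          exact measure_biUnion_finset_le _ _
      _ ≤ ∑ _q ∈ ((bb n).sublists.toFinset).filter (fun q => q.length < k),
            ENNReal.ofReal (del (bb n)) := Finset.sum_le_sum hterm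
      _ = (((bb n).sublists.toFinset).filter (fun q => q.length < k)).card •
            ENNReal.ofReal (del (bb n)) := by rw [Finset.sum_const]
      _ = (((((bb n).sublists.toFinset).filter (fun q => q.length < k)).card : ℕ) : ℝ≥0∞) *
            ENNReal.ofReal (del (bb n)) := by rw [nsmul_eq_mul]
      _ ≤ (((bb n).sublists.length + 1 : ℕ) : ℝ≥0∞) * ENNReal.ofReal (del (bb n)) := by
          apply mul_le_mul_left
          have hcard : (((bb n).sublists.toFinset).filter (fun q => q.length < k)).card ≤
              (bb n).sublists.length + 1 :=
            le_trans (Finset.card_filter_le _ _) (le_trans (List.toFinset_card_le _) (Nat.le_succ _))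
          exact_mod_cast Nat.cast_le.mpr hcard
      _ = ENNReal.ofReal ((((bb n).sublists.length + 1 : ℕ) : ℝ) * del (bb n)) := by
          rw [ENNReal.ofReal_mul (by positivity), ENNReal.ofReal_natCast]
      _ ≤ ENNReal.ofReal (ε * (2⁻¹ : ℝ) ^ (n + 1)) := by
          apply ENNReal.ofReal_le_ofReal
          rw [hdel]
          simp only [hbblen n]
          push_cast
          rw [mul_comm, div_mul_cancel₀]
          positivity
  -- summing up
  have hsum : μ (A \ I) ≤ ENNReal.ofReal ε := by
    have h1 : μ (A \ I) ≤ ∑' n, μ (U n) :=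
      (measure_mono hincl).trans (measure_iUnion_le _)
    have h2 : ∑' n, μ (U n) ≤ ∑' n : ℕ, ENNReal.ofReal (ε * (2⁻¹ : ℝ) ^ (n + 1)) :=
      ENNReal.tsum_le_tsum hUn
    have h3 : ∀ n : ℕ, ENNReal.ofReal (ε * (2⁻¹ : ℝ) ^ (n + 1)) =
        ENNReal.ofReal ε * (2⁻¹ : ℝ≥0∞) ^ (n + 1) := by
      intro n
      rw [ENNReal.ofReal_mul hε.le, ENNReal.ofReal_pow (by norm_num)]
      congr 2
      rw [ENNReal.ofReal_inv_of_pos (by norm_num)]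
      norm_num
    have h4 : ∑' n : ℕ, ENNReal.ofReal (ε * (2⁻¹ : ℝ) ^ (n + 1)) = ENNReal.ofReal ε := by
      simp_rw [h3]
      rw [ENNReal.tsum_mul_left, ENNReal.tsum_geometric_add_one, ENNReal.one_sub_inv_two]
      rw [ENNReal.mul_inv_cancel (by simp) (by simp), mul_one]
    exact h1.trans (h2.trans_eq h4)
  have hsplit : μ A ≤ μ I + ENNReal.ofReal ε := by
    have hsub : A ⊆ I ∪ (A \ I) := by
      intro x hx
      by_cases hxI : x ∈ I
      · exact Or.inl hxI
      · exact Or.inr ⟨hx, hxI⟩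
    calc μ A ≤ μ (I ∪ (A \ I)) := measure_mono hsub
      _ ≤ μ I + μ (A \ I) := measure_union_le _ _
      _ ≤ μ I + ENNReal.ofReal ε := add_le_add_right hsum _
  rw [ENNReal.ofReal_sub _ hε.le]
  exact tsub_le_iff_right.mpr (hAlam.trans hsplit)
end

section
/- Let M be a compact metric space, k ≥ 1, and f : {increasing k-tuples of naturals} → M. Then there exists an infinite set J ⊆ ℕ such that the limit of f(i₁,...,i_k), as i₁ → ∞ along increasing k-tuples with all entries in J, exists in M. -/
open Set

/-- Infinite Ramsey theorem for increasing `k`-tuples of naturals. -/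
theorem myRamsey (C : Type*) [Finite C] [Nonempty C] :
    ∀ (k : ℕ) (c : (Fin k → ℕ) → C) (S : Set ℕ), S.Infinite →
    ∃ J, J ⊆ S ∧ J.Infinite ∧ ∃ e : C, ∀ t : Fin k → ℕ,
      StrictMono t → (∀ i, t i ∈ J) → c t = e := by
  intro k
  induction k with
  | zero =>
    intro c S hS
    refine ⟨S, subset_rfl, hS, c (fun i => i.elim0), fun t _ _ => ?_⟩
    congr 1; funext i; exact i.elim0
  | succ k ih =>
    intro c S hS
    have key : ∀ T : Set ℕ, ∃ p : ℕ × Set ℕ × C, T.Infinite →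
        p.1 ∈ T ∧ p.2.1.Infinite ∧ p.2.1 ⊆ T ∧ (∀ b ∈ p.2.1, p.1 < b) ∧
        (∀ t : Fin k → ℕ, StrictMono t → (∀ i, t i ∈ p.2.1) →
          c (Fin.cons p.1 t) = p.2.2) := by
      intro T
      by_cases hT : T.Infinite
      · obtain ⟨a, ha⟩ := hT.nonempty
        have hT' : (T ∩ Set.Ioi a).Infinite := by
          have : T ∩ Set.Ioi a = T \ Set.Iic a := by
            ext x; simp [Set.mem_diff, not_le, Set.mem_Ioi]
          rw [this]
          exact hT.diff (Set.finite_Iic a)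
        obtain ⟨J', hJ'sub, hJ'inf, e, he⟩ := ih (fun t => c (Fin.cons a t)) _ hT'
        refine ⟨(a, J', e), fun _ => ⟨ha, hJ'inf,
          hJ'sub.trans Set.inter_subset_left, fun b hb => (hJ'sub hb).2, he⟩⟩
      · exact ⟨(0, ∅, Classical.arbitrary C), fun h => absurd h hT⟩
    choose g hg using key
    obtain ⟨Tn, hT0, hTs⟩ : ∃ Tn : ℕ → Set ℕ, Tn 0 = S ∧
        ∀ n, Tn (n + 1) = (g (Tn n)).2.1 :=
      ⟨fun n => Nat.rec S (fun _ T => (g T).2.1) n, rfl, fun _ => rfl⟩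
    have Tinf : ∀ n, (Tn n).Infinite := by
      intro n
      induction n with
      | zero => rw [hT0]; exact hS
      | succ n ihn => rw [hTs]; exact (hg (Tn n) ihn).2.1
    set A : ℕ → ℕ := fun n => (g (Tn n)).1 with hA
    set E : ℕ → C := fun n => (g (Tn n)).2.2 with hE
    have hAmem : ∀ n, A n ∈ Tn n := fun n => (hg (Tn n) (Tinf n)).1
    have hsub : ∀ n, Tn (n + 1) ⊆ Tn n := fun n => by
      rw [hTs]; exact (hg (Tn n) (Tinf n)).2.2.1
    have hlt : ∀ n, ∀ b ∈ Tn (n + 1), A n < b := fun n => by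
      rw [hTs]; exact (hg (Tn n) (Tinf n)).2.2.2.1
    have hcol : ∀ n, ∀ t : Fin k → ℕ, StrictMono t → (∀ i, t i ∈ Tn (n + 1)) →
        c (Fin.cons (A n) t) = E n := fun n => by
      rw [hTs]; exact (hg (Tn n) (Tinf n)).2.2.2.2
    have hanti : ∀ {n m : ℕ}, n ≤ m → Tn m ⊆ Tn n := by
      intro n m hnm
      induction hnm with
      | refl => exact subset_rfl
      | step _ ihm => exact (hsub _).trans ihm
    have hAmono : StrictMono A := by
      apply strictMono_nat_of_lt_succ
      intro n
      exact hlt n (A (n + 1)) (hAmem (n + 1))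
    have hAS : ∀ n, A n ∈ S := fun n => by
      rw [← hT0]; exact hanti (Nat.zero_le n) (hAmem n)
    obtain ⟨e, he⟩ := Finite.exists_infinite_fiber E
    have hfib : (E ⁻¹' {e}).Infinite := Set.infinite_coe_iff.mp he
    refine ⟨A '' (E ⁻¹' {e}), ?_, hfib.image (hAmono.injective.injOn), e, ?_⟩
    · rintro x ⟨n, -, rfl⟩; exact hAS n
    · intro t ht htJ
      obtain ⟨n, hne, h0⟩ := htJ 0
      have htail : ∀ i : Fin k, t i.succ ∈ Tn (n + 1) := by
        intro i
        obtain ⟨m, -, hm⟩ := htJ i.succ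
        have h1 : A n < A m := by
          rw [h0, hm] at *
          exact ht (Fin.succ_pos i)
        have hnm : n + 1 ≤ m := hAmono.lt_iff_lt.mp h1
        rw [← hm]
        exact hanti hnm (hAmem m)
      have htail_mono : StrictMono (fun i : Fin k => t i.succ) :=
        ht.comp (Fin.strictMono_succ)
      have hcc := hcol n (fun i => t i.succ) htail_mono htail
      have ht' : Fin.cons (t 0) (fun i => t i.succ) = t := Fin.cons_self_tail t
      rw [← ht', ← h0, hcc]
      exact hne

theorem stmt17 {M : Type*} [MetricSpace M] [CompactSpace M]
    (k : ℕ) (hk : 0 < k) (f : (Fin k → ℕ) → M) :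
    ∃ J : Set ℕ, J.Infinite ∧ ∃ x : M, ∀ ε : ℝ, 0 < ε → ∃ N : ℕ,
      ∀ t : Fin k → ℕ, StrictMono t → (∀ i, t i ∈ J) → N < t ⟨0, hk⟩ →
        dist (f t) x < ε := by
  have hM : Nonempty M := ⟨f (fun _ => 0)⟩
  -- refinement step: given an infinite set, find an infinite subset on which
  -- all increasing tuples map into a set of diameter < 2/(n+1)
  have refine_step : ∀ (n : ℕ) (T : Set ℕ), ∃ J : Set ℕ, T.Infinite →
      J ⊆ T ∧ J.Infinite ∧ ∀ s t : Fin k → ℕ, StrictMono s → StrictMono t →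
        (∀ i, s i ∈ J) → (∀ i, t i ∈ J) →
        dist (f s) (f t) < 2 / (n + 1 : ℝ) := by
    intro n T
    by_cases hT : T.Infinite
    · have hε : (0:ℝ) < 1 / (n + 1 : ℝ) := by positivity
      obtain ⟨F, -, hFfin, hFcov⟩ :=
        finite_cover_balls_of_compact (isCompact_univ : IsCompact (Set.univ : Set M)) hε
      have hz : ∀ y : M, ∃ z ∈ F, dist y z < 1 / (n + 1 : ℝ) := by
        intro y
        have := hFcov (Set.mem_univ y)
        simp only [Set.mem_iUnion, Metric.mem_ball] at this
        obtain ⟨z, hzF, hzd⟩ := this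
        exact ⟨z, hzF, hzd⟩
      choose z hz1 hz2 using hz
      haveI : Finite ↥F := hFfin.to_subtype
      haveI : Nonempty ↥F := ⟨⟨z (Classical.arbitrary M), hz1 _⟩⟩
      obtain ⟨J, hJT, hJinf, e, he⟩ :=
        myRamsey ↥F k (fun t => (⟨z (f t), hz1 _⟩ : ↥F)) T hT
      refine ⟨J, fun _ => ⟨hJT, hJinf, fun s t hs ht hsJ htJ => ?_⟩⟩
      have h1 := he s hs hsJ
      have h2 := he t ht htJ
      have hzz : z (f s) = z (f t) := by
        have := h1.trans h2.symm
        exact congrArg Subtype.val this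
      calc dist (f s) (f t) ≤ dist (f s) (z (f s)) + dist (z (f s)) (f t) :=
            dist_triangle _ _ _
        _ < 1 / (n + 1 : ℝ) + 1 / (n + 1 : ℝ) := by
            apply add_lt_add (hz2 (f s))
            rw [hzz, dist_comm]
            exact hz2 (f t)
        _ = 2 / (n + 1 : ℝ) := by ring
    · exact ⟨∅, fun h => absurd h hT⟩
  choose G hG using refine_step
  obtain ⟨Tn, hT0, hTs⟩ : ∃ Tn : ℕ → Set ℕ, Tn 0 = G 0 Set.univ ∧
      ∀ n, Tn (n + 1) = G (n + 1) (Tn n) :=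
    ⟨fun n => Nat.rec (G 0 Set.univ) (fun n T => G (n + 1) T) n, rfl, fun _ => rfl⟩
  have Tinf : ∀ n, (Tn n).Infinite := by
    intro n
    induction n with
    | zero => rw [hT0]; exact (hG 0 Set.univ Set.infinite_univ).2.1
    | succ n ihn => rw [hTs]; exact (hG (n + 1) (Tn n) ihn).2.1
  have hsub : ∀ n, Tn (n + 1) ⊆ Tn n := fun n => by
    rw [hTs]; exact (hG (n + 1) (Tn n) (Tinf n)).1
  have hanti : ∀ {n m : ℕ}, n ≤ m → Tn m ⊆ Tn n := by
    intro n m hnm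
    induction hnm with
    | refl => exact subset_rfl
    | step _ ihm => exact (hsub _).trans ihm
  have hprop : ∀ n, ∀ s t : Fin k → ℕ, StrictMono s → StrictMono t →
      (∀ i, s i ∈ Tn n) → (∀ i, t i ∈ Tn n) →
      dist (f s) (f t) < 2 / (n + 1 : ℝ) := by
    intro n
    cases n with
    | zero => rw [hT0]; exact (hG 0 Set.univ Set.infinite_univ).2.2
    | succ n => rw [hTs]; exact (hG (n + 1) (Tn n) (Tinf n)).2.2
  -- diagonal sequence
  have key2 : ∀ (n a : ℕ), ∃ b, b ∈ Tn (n + 1) ∧ a < b := by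
    intro n a
    obtain ⟨b, hb1, hb2⟩ := (Tinf (n + 1)).exists_gt a
    exact ⟨b, hb1, hb2⟩
  choose B hB1 hB2 using key2
  obtain ⟨j, hj0, hjs⟩ : ∃ j : ℕ → ℕ, j 0 = (Tinf 0).nonempty.some ∧
      ∀ n, j (n + 1) = B n (j n) :=
    ⟨fun n => Nat.rec (Tinf 0).nonempty.some (fun n p => B n p) n, rfl, fun _ => rfl⟩
  have hjmem : ∀ n, j n ∈ Tn n := by
    intro n
    cases n with
    | zero => rw [hj0]; exact (Tinf 0).nonempty.some_mem
    | succ n => rw [hjs]; exact hB1 n (j n)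
  have hjmono : StrictMono j := by
    apply strictMono_nat_of_lt_succ
    intro n
    rw [hjs]
    exact hB2 n (j n)
  -- the reference tuples and Cauchy sequence
  set u : ℕ → Fin k → ℕ := fun n i => j (n + i.1) with hu
  have humono : ∀ n, StrictMono (u n) := by
    intro n i i' hii'
    have h : i.1 < i'.1 := hii'
    exact hjmono (by omega)
  have humem : ∀ n i, u n i ∈ Tn n := by
    intro n i
    exact hanti (Nat.le_add_right n i.1) (hjmem (n + i.1))
  set y : ℕ → M := fun n => f (u n) with hy
  have hyy : ∀ n m, n ≤ m → dist (y m) (y n) < 2 / (n + 1 : ℝ) := by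
    intro n m hnm
    apply hprop n (u m) (u n) (humono m) (humono n)
    · intro i; exact hanti hnm (humem m i)
    · exact humem n
  have hcauchy : CauchySeq y := by
    rw [Metric.cauchySeq_iff']
    intro ε hε
    obtain ⟨N, hN⟩ := exists_nat_one_div_lt (half_pos hε)
    refine ⟨N, fun n hn => ?_⟩
    calc dist (y n) (y N) < 2 / (N + 1 : ℝ) := hyy N n hn
      _ = 2 * (1 / (N + 1 : ℝ)) := by ring
      _ < 2 * (ε / 2) := by
          apply mul_lt_mul_of_pos_left _ (by norm_num)
          exact_mod_cast hN
      _ = ε := by ring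
  obtain ⟨x, hx⟩ := cauchySeq_tendsto_of_complete hcauchy
  have hyx : ∀ n, dist (y n) x ≤ 2 / (n + 1 : ℝ) := by
    intro n
    have htd : Filter.Tendsto (fun m => dist (y m) (y n)) Filter.atTop
        (nhds (dist x (y n))) := hx.dist tendsto_const_nhds
    have hle : dist x (y n) ≤ 2 / (n + 1 : ℝ) := by
      apply le_of_tendsto htd
      filter_upwards [Filter.eventually_ge_atTop n] with m hm
      exact (hyy n m hm).le
    rw [dist_comm]; exact hle
  refine ⟨Set.range j, Set.infinite_range_of_injective hjmono.injective, x, ?_⟩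
  intro ε hε
  obtain ⟨n, hn⟩ := exists_nat_one_div_lt (by positivity : (0:ℝ) < ε / 4)
  refine ⟨j n, fun t ht htJ ht0 => ?_⟩
  have htmem : ∀ i, t i ∈ Tn n := by
    intro i
    obtain ⟨m, hm⟩ := htJ i
    have hle : t ⟨0, hk⟩ ≤ t i := ht.monotone (Fin.mk_le_of_le_val (Nat.zero_le _))
    have hji : j n < j m := by rw [hm]; exact lt_of_lt_of_le ht0 hle
    have hnm : n ≤ m := (hjmono.lt_iff_lt.mp hji).le
    rw [← hm]
    exact hanti hnm (hjmem m)
  have h1 : dist (f t) (y n) < 2 / (n + 1 : ℝ) :=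
    hprop n t (u n) ht (humono n) htmem (humem n)
  calc dist (f t) x ≤ dist (f t) (y n) + dist (y n) x := dist_triangle _ _ _
    _ < 2 / (n + 1 : ℝ) + 2 / (n + 1 : ℝ) := by
        exact add_lt_add_of_lt_of_le h1 (hyx n)
    _ = 4 * (1 / (n + 1 : ℝ)) := by ring
    _ < 4 * (ε / 4) := by
        apply mul_lt_mul_of_pos_left _ (by norm_num)
        exact_mod_cast hn
    _ = ε := by ring
end

section
/- Let δ be a metric on ℕ ∪ {∞} (the one-point compactification of ℕ, with δ compatible with its topology). Then there exists a metric δ* on ℕ ∪ {∞} such that δ*(x,y) ≤ δ(x,y) for all x,y, and δ* is monotone: δ*(x',y') ≤ δ*(x,y) whenever x' > x, y' > y and x ≠ y. -/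
/-- Auxiliary: a decreasing positive sequence below `A · / 2`. -/
noncomputable def stmt18f0 (A : ℕ → ℝ) : ℕ → ℝ :=
  fun n => Nat.rec (A 0 / 2) (fun k ih => min ih (A (k + 1) / 2)) n

theorem stmt18 (δ : ℕ∞ → ℕ∞ → ℝ)
    (hsymm : ∀ x y, δ x y = δ y x)
    (hself : ∀ x, δ x x = 0)
    (hpos : ∀ x y, x ≠ y → 0 < δ x y)
    (htri : ∀ x y z, δ x z ≤ δ x y + δ y z)
    (hconv : ∀ ε : ℝ, 0 < ε → ∃ N : ℕ, ∀ n : ℕ, N ≤ n → δ (n : ℕ∞) ⊤ < ε) :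
    ∃ δs : ℕ∞ → ℕ∞ → ℝ,
      (∀ x y, δs x y = δs y x) ∧ (∀ x, δs x x = 0) ∧
      (∀ x y, x ≠ y → 0 < δs x y) ∧ (∀ x y z, δs x z ≤ δs x y + δs y z) ∧
      (∀ x y, δs x y ≤ δ x y) ∧
      (∀ x x' y y' : ℕ, x < x' → y < y' → x ≠ y →
        δs (x' : ℕ∞) (y' : ℕ∞) ≤ δs (x : ℕ∞) (y : ℕ∞)) := by
  classical
  -- choose a positive lower bound A n for distances from n
  have hA : ∀ n : ℕ, ∃ ε : ℝ, 0 < ε ∧ ∀ b : ℕ∞, b ≠ (n : ℕ∞) → ε ≤ δ (n : ℕ∞) b := by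
    intro n
    have hninf : ((n : ℕ∞)) ≠ ⊤ := by simp
    have h0 : 0 < δ (n : ℕ∞) ⊤ := hpos _ _ hninf
    obtain ⟨N, hN⟩ := hconv (δ (n : ℕ∞) ⊤ / 2) (by linarith)
    set S : Finset ℝ :=
      insert (δ (n : ℕ∞) ⊤ / 2)
        (((Finset.range N).filter (fun b => b ≠ n)).image (fun b : ℕ => δ (n : ℕ∞) (b : ℕ∞)))
      with hS
    have hSne : S.Nonempty := ⟨_, Finset.mem_insert_self _ _⟩
    refine ⟨S.min' hSne, ?_, ?_⟩
    · rw [Finset.lt_min'_iff]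
      intro r hr
      rw [hS, Finset.mem_insert] at hr
      rcases hr with h | h
      · rw [h]; linarith
      · obtain ⟨b, hb, rfl⟩ := Finset.mem_image.mp h
        rw [Finset.mem_filter] at hb
        exact hpos _ _ (fun h => hb.2 (by exact_mod_cast h.symm))
    · intro b hb
      induction b using ENat.recTopCoe with
      | top =>
        have : S.min' hSne ≤ δ (n : ℕ∞) ⊤ / 2 :=
          Finset.min'_le _ _ (Finset.mem_insert_self _ _)
        linarith
      | coe m =>
        have hmn : m ≠ n := by simpa using hb
        by_cases hm : m < N
        · refine Finset.min'_le _ _ ?_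
          rw [hS, Finset.mem_insert]
          right
          exact Finset.mem_image.mpr ⟨m, Finset.mem_filter.mpr ⟨Finset.mem_range.mpr hm, hmn⟩, rfl⟩
        · push_neg at hm
          have h1 : δ (m : ℕ∞) ⊤ < δ (n : ℕ∞) ⊤ / 2 := hN m hm
          have h2 : δ (n : ℕ∞) ⊤ ≤ δ (n : ℕ∞) (m : ℕ∞) + δ (m : ℕ∞) ⊤ := htri _ _ _
          have : S.min' hSne ≤ δ (n : ℕ∞) ⊤ / 2 :=
            Finset.min'_le _ _ (Finset.mem_insert_self _ _)
          linarith
  choose A hApos hAle using hA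
  -- the decreasing sequence
  set f0 : ℕ → ℝ := stmt18f0 A with hf0
  have hf0zero : f0 0 = A 0 / 2 := rfl
  have hf0succ' : ∀ k, f0 (k + 1) = min (f0 k) (A (k + 1) / 2) := fun k => rfl
  have hf0succ : ∀ k, f0 (k + 1) ≤ f0 k := fun k => by rw [hf0succ']; exact min_le_left _ _
  have hf0anti : ∀ m n : ℕ, m ≤ n → f0 n ≤ f0 m := by
    intro m n h
    induction n with
    | zero => simp_all
    | succ k ih =>
      rcases Nat.lt_or_ge m (k + 1) with h' | h'
      · exact le_trans (hf0succ k) (ih (Nat.lt_succ_iff.mp h'))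
      · have : m = k + 1 := le_antisymm h h'
        simp [this]
  have hf0le : ∀ n, f0 n ≤ A n / 2 := by
    intro n
    cases n with
    | zero => rw [hf0zero]
    | succ k => rw [hf0succ']; exact min_le_right _ _
  have hf0pos : ∀ n, 0 < f0 n := by
    intro n
    induction n with
    | zero => rw [hf0zero]; exact half_pos (hApos 0)
    | succ k ih => rw [hf0succ']; exact lt_min ih (half_pos (hApos (k + 1)))
  -- extend to ℕ∞
  set fv : ℕ∞ → ℝ := fun x => if x = ⊤ then 0 else f0 (WithTop.untopD 0 x) with hfv
  have hfv_top : fv ⊤ = 0 := by rw [hfv]; simp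
  have hfv_coe : ∀ n : ℕ, fv (n : ℕ∞) = f0 n := by
    intro n
    rw [hfv]
    simp only
    rw [if_neg (by simp : ((n : ℕ∞)) ≠ ⊤)]
    rfl
  have hfv_nonneg : ∀ x, 0 ≤ fv x := by
    intro x
    induction x using ENat.recTopCoe with
    | top => rw [hfv_top]
    | coe n => rw [hfv_coe]; exact (hf0pos n).le
  -- key lemma: fv a ≤ δ a b for a ≠ b
  have hkey : ∀ a b : ℕ∞, a ≠ b → fv a ≤ δ a b := by
    intro a b hab
    induction a using ENat.recTopCoe with
    | top => rw [hfv_top]; exact (hpos _ _ hab).le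
    | coe n =>
      rw [hfv_coe]
      have h1 : f0 n ≤ A n / 2 := hf0le n
      have h2 : A n ≤ δ (n : ℕ∞) b := hAle n b (Ne.symm hab)
      have := hApos n
      linarith
  -- the metric
  set δs : ℕ∞ → ℕ∞ → ℝ := fun x y => if x = y then 0 else min (δ x y) (fv x + fv y) with hδs
  have hδs_eq : ∀ x y, δs x y = if x = y then 0 else min (δ x y) (fv x + fv y) := fun _ _ => rfl
  have hδs_nonneg : ∀ x y, 0 ≤ δs x y := by
    intro x y
    rw [hδs_eq]
    by_cases h : x = y
    · rw [if_pos h]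
    · rw [if_neg h]
      exact le_min (hpos _ _ h).le
        (by have := hfv_nonneg x; have := hfv_nonneg y; linarith)
  refine ⟨δs, ?_, ?_, ?_, ?_, ?_, ?_⟩
  · intro x y
    rw [hδs_eq, hδs_eq]
    by_cases h : x = y
    · rw [if_pos h, if_pos h.symm]
    · rw [if_neg h, if_neg (Ne.symm h), hsymm, add_comm]
  · intro x; rw [hδs_eq, if_pos rfl]
  · intro x y h
    rw [hδs_eq, if_neg h]
    refine lt_min (hpos _ _ h) ?_
    induction x using ENat.recTopCoe with
    | top =>
      induction y using ENat.recTopCoe with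
      | top => exact absurd rfl h
      | coe m =>
        have := hf0pos m
        rw [hfv_top, hfv_coe]; linarith
    | coe n =>
      have := hf0pos n
      have := hfv_nonneg y
      rw [hfv_coe]; linarith
  · intro a b c
    by_cases hac : a = c
    · rw [hδs_eq a c, if_pos hac]
      have := hδs_nonneg a b; have := hδs_nonneg b c; linarith
    by_cases hab : a = b
    · rw [hab, hδs_eq b b, if_pos rfl, zero_add]
    by_cases hbc : b = c
    · rw [hbc, hδs_eq c c, if_pos rfl, add_zero]
    rw [hδs_eq a c, hδs_eq a b, hδs_eq b c, if_neg hac, if_neg hab, if_neg hbc]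
    have B1 : min (δ a c) (fv a + fv c) ≤ δ a c := min_le_left _ _
    have B2 : min (δ a c) (fv a + fv c) ≤ fv a + fv c := min_le_right _ _
    have K1 : fv a ≤ δ a b := hkey a b hab
    have K2 : fv c ≤ δ b c := by rw [hsymm]; exact hkey c b (Ne.symm hbc)
    have K3 : 0 ≤ fv b := hfv_nonneg b
    have T := htri a b c
    rcases le_total (δ a b) (fv a + fv b) with h1 | h1 <;>
      rcases le_total (δ b c) (fv b + fv c) with h2 | h2
    · rw [min_eq_left h1, min_eq_left h2]; linarith
    · rw [min_eq_left h1, min_eq_right h2]; linarith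
    · rw [min_eq_right h1, min_eq_left h2]; linarith
    · rw [min_eq_right h1, min_eq_right h2]; linarith
  · intro x y
    rw [hδs_eq]
    by_cases h : x = y
    · rw [if_pos h, h, hself]
    · rw [if_neg h]; exact min_le_left _ _
  · intro x x' y y' hx hy hxy
    have hcast : ((x : ℕ∞)) ≠ (y : ℕ∞) := by exact_mod_cast hxy
    by_cases h' : ((x' : ℕ∞)) = (y' : ℕ∞)
    · rw [hδs_eq, if_pos h']
      exact hδs_nonneg _ _
    · rw [hδs_eq, hδs_eq, if_neg h', if_neg hcast]
      have ha1 : f0 x' ≤ f0 x := hf0anti x x' hx.le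
      have ha2 : f0 y' ≤ f0 y := hf0anti y y' hy.le
      have hb1 : f0 x ≤ A x / 2 := hf0le x
      have hb2 : f0 y ≤ A y / 2 := hf0le y
      have hc1 : A x ≤ δ (x : ℕ∞) (y : ℕ∞) := hAle x _ (Ne.symm hcast)
      have hc2 : A y ≤ δ (x : ℕ∞) (y : ℕ∞) := by
        rw [hsymm]; exact hAle y _ hcast
      refine le_trans (min_le_right _ _) (le_min ?_ ?_) <;>
        simp only [hfv_coe] <;> linarith
end
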